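/- arXiv:2501.12058 — 5 statements merged into one kernel-verified Lean document; each statement's English description precedes it below -/
import Mathlib

section
/- Let X_1, …, X_n (n ≥ 2) be jointly distributed random variables on finite alphabets with joint probability mass function p, and let γ be a fractional partition with respect to a family 𝓕 of subsets of [n] satisfying the standing assumptions. Then ∑_{F ∈ 𝓕} γ(F) H(X_F) = H(X_{[n]}) if and only if X_1, …, X_n are mutually independent (i.e., p factorizes as the product of its one-coordinate marginals). -/
open Finset
open scoped Classical BigOperators

/-- Entropy of the marginal of `p` on the coordinates in `F`
    (`H(X_F) = ∑ negMulLog (p_F)`, with `0 log 0 = 0`). -/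
noncomputable def Hent {n : ℕ} {𝒳 : Fin n → Type} [∀ i, Fintype (𝒳 i)]
    (p : (∀ i, 𝒳 i) → ℝ) (F : Finset (Fin n)) : ℝ :=
  ∑ y : (i : {i // i ∈ F}) → 𝒳 i.1,
    Real.negMulLog
      (∑ x ∈ Finset.univ.filter (fun x : ∀ i, 𝒳 i => ∀ i : {i // i ∈ F}, x i.1 = y i), p x)

section ShearerAux

variable {n : ℕ} {𝒳 : Fin n → Type} [∀ i, Fintype (𝒳 i)]

/-- `f` depends only on coordinates in `F`. -/
def DOn (f : (∀ i, 𝒳 i) → ℝ) (F : Finset (Fin n)) : Prop :=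
  ∀ x y : ∀ i, 𝒳 i, (∀ i ∈ F, x i = y i) → f x = f y

set_option linter.unusedSectionVars false

/-- configurations agreeing with `x` outside `T`. -/
noncomputable def cell (T : Finset (Fin n)) (x : ∀ i, 𝒳 i) : Finset (∀ i, 𝒳 i) :=
  Finset.univ.filter (fun z => ∀ i, i ∉ T → z i = x i)

/-- integrate out coordinates in `T`. -/
noncomputable def intg (T : Finset (Fin n)) (h : (∀ i, 𝒳 i) → ℝ) (x : ∀ i, 𝒳 i) : ℝ :=
  ∑ z ∈ cell T x, h z

/-- marginal of `p` on coordinates in `F`, as a function on the full space. -/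
noncomputable def marg (p : (∀ i, 𝒳 i) → ℝ) (F : Finset (Fin n)) (x : ∀ i, 𝒳 i) : ℝ :=
  ∑ ω ∈ Finset.univ.filter (fun ω => ∀ i ∈ F, ω i = x i), p ω

variable {T U F G : Finset (Fin n)} {f g h : (∀ i, 𝒳 i) → ℝ} {p : (∀ i, 𝒳 i) → ℝ}
  {x : ∀ i, 𝒳 i}

lemma mem_cell {z : ∀ i, 𝒳 i} : z ∈ cell T x ↔ ∀ i, i ∉ T → z i = x i := by
  simp [cell]

lemma cell_self : x ∈ cell T x := by simp [mem_cell]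

lemma intg_nonneg (h0 : ∀ z, 0 ≤ h z) : 0 ≤ intg T h x :=
  Finset.sum_nonneg fun z _ => h0 z

lemma intg_mono (hfg : ∀ z, f z ≤ g z) : intg T f x ≤ intg T g x :=
  Finset.sum_le_sum fun z _ => hfg z

lemma intg_congr (hfg : ∀ z, f z = g z) : intg T f x = intg T g x :=
  Finset.sum_congr rfl fun z _ => hfg z

lemma cell_empty : cell (∅ : Finset (Fin n)) x = {x} := by
  ext z; simp [mem_cell, funext_iff]

lemma intg_empty : intg ∅ h x = h x := by
  rw [intg, cell_empty, Finset.sum_singleton]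

lemma intg_union (hTU : Disjoint T U) :
    intg (T ∪ U) h x = intg T (fun y => intg U h y) x := by
  show _ = ∑ w ∈ cell T x, ∑ z ∈ cell U w, h z
  rw [Finset.sum_sigma']
  apply Finset.sum_nbij' (fun z => (⟨fun i => if i ∈ T then z i else x i, z⟩ :
      Σ _ : ∀ i, 𝒳 i, ∀ i, 𝒳 i)) (fun a => a.2)
  · intro z hz
    rw [Finset.mem_sigma]
    constructor
    · rw [mem_cell]; intro i hi; simp [hi]
    · rw [mem_cell]; intro i hi
      by_cases hiT : i ∈ T
      · simp [hiT]
      · simp [hiT, mem_cell.1 hz i (by simp [hiT, hi])]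
  · rintro ⟨w, z⟩ ha
    rw [Finset.mem_sigma] at ha
    rw [mem_cell]
    intro i hi
    simp only [Finset.mem_union, not_or] at hi
    rw [mem_cell.1 ha.2 i hi.2, mem_cell.1 ha.1 i hi.1]
  · intro z hz; rfl
  · rintro ⟨w, z⟩ ha
    rw [Finset.mem_sigma] at ha
    obtain ⟨ha1, ha2⟩ := ha
    have hc1 : ∀ i, i ∉ T → w i = x i := mem_cell.1 ha1
    have hc2 : ∀ i, i ∉ U → z i = w i := mem_cell.1 ha2
    have hw : (fun i => if i ∈ T then z i else x i) = w := by
      funext i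
      by_cases hiT : i ∈ T
      · have hiU : i ∉ U := Finset.disjoint_left.1 hTU hiT
        simp [hiT, hc2 i hiU]
      · simp [hiT, (hc1 i hiT).symm]
    simp [Sigma.ext_iff, hw]
  · intro z hz; rfl

lemma DOn_mono (hFG : F ⊆ G) (hf : DOn f F) : DOn f G :=
  fun x y hxy => hf x y fun i hi => hxy i (hFG hi)

lemma DOn_marg : DOn (marg p F) F := by
  intro x y hxy
  unfold marg
  apply Finset.sum_congr _ (fun _ _ => rfl)
  apply Finset.filter_congr
  intro ω _
  constructor
  · intro hc i hi; rw [hc i hi, hxy i hi]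
  · intro hc i hi; rw [hc i hi, ← hxy i hi]

lemma DOn_comp (g : ℝ → ℝ) (hf : DOn f F) : DOn (fun x => g (f x)) F :=
  fun x y hxy => congrArg g (hf x y hxy)

lemma DOn_mul (hf : DOn f F) (hg : DOn g F) : DOn (fun x => f x * g x) F :=
  fun x y hxy => by simp only [hf x y hxy, hg x y hxy]

lemma DOn_prod {κ : Type*} (s : Finset κ) (f : κ → (∀ i, 𝒳 i) → ℝ)
    (hf : ∀ k ∈ s, DOn (f k) F) : DOn (fun x => ∏ k ∈ s, f k x) F :=
  fun x y hxy => Finset.prod_congr rfl fun k hk => hf k hk x y hxy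

lemma DOn_intg (hf : DOn f F) : DOn (intg U f) (F \ U) := by
  intro x y hxy
  unfold intg
  apply Finset.sum_nbij' (fun z i => if i ∈ U then z i else y i)
    (fun z i => if i ∈ U then z i else x i)
  · intro z hz; rw [mem_cell]; intro i hi; simp [hi]
  · intro z hz; rw [mem_cell]; intro i hi; simp [hi]
  · intro z hz; funext i
    by_cases hiU : i ∈ U
    · simp [hiU]
    · simp [hiU, mem_cell.1 hz i hiU]
  · intro z hz; funext i
    by_cases hiU : i ∈ U
    · simp [hiU]
    · simp [hiU, mem_cell.1 hz i hiU]
  · intro z hz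
    apply hf
    intro i hiF
    by_cases hiU : i ∈ U
    · simp [hiU]
    · simp only [hiU, if_false]
      rw [mem_cell.1 hz i hiU]
      exact hxy i (Finset.mem_sdiff.2 ⟨hiF, hiU⟩)

lemma intg_mul_left (h1 : DOn f Tᶜ) :
    intg T (fun z => f z * g z) x = f x * intg T g x := by
  unfold intg
  rw [Finset.mul_sum]
  apply Finset.sum_congr rfl
  intro z hz
  show f z * g z = f x * g z
  rw [h1 z x (fun i hi => mem_cell.1 hz i (by simpa using hi))]

lemma marg_eq_intg : marg p F x = intg Fᶜ p x := by
  unfold marg intg cell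
  apply Finset.sum_congr _ (fun _ _ => rfl)
  apply Finset.filter_congr
  intro ω _
  simp

lemma intg_p : intg T p x = marg p Tᶜ x := by
  rw [marg_eq_intg, compl_compl]

lemma intg_marg (hTF : T ⊆ F) : intg T (marg p F) x = marg p (F \ T) x := by
  have hd : Disjoint T Fᶜ := Disjoint.mono_left hTF disjoint_compl_right
  calc intg T (marg p F) x = intg T (fun y => intg Fᶜ p y) x :=
        intg_congr fun z => marg_eq_intg
    _ = intg (T ∪ Fᶜ) p x := (intg_union hd).symm
    _ = marg p (T ∪ Fᶜ)ᶜ x := intg_p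
    _ = marg p (F \ T) x := by
        congr 1
        ext i
        simp only [Finset.mem_compl, Finset.mem_union, Finset.mem_sdiff, not_or,
          Finset.mem_compl, not_not]
        tauto

lemma marg_univ : marg p Finset.univ x = p x := by
  unfold marg
  rw [show Finset.univ.filter (fun ω : ∀ i, 𝒳 i => ∀ i ∈ Finset.univ, ω i = x i) = {x} by
    ext z; simp [funext_iff], Finset.sum_singleton]

lemma marg_empty : marg p ∅ x = ∑ z, p z := by
  unfold marg; simp

lemma marg_nonneg (hp0 : ∀ z, 0 ≤ p z) : 0 ≤ marg p F x :=
  Finset.sum_nonneg fun z _ => hp0 z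

lemma self_le_marg (hp0 : ∀ z, 0 ≤ p z) : p x ≤ marg p F x := by
  apply Finset.single_le_sum (fun z _ => hp0 z)
  simp

lemma intg_univ : intg Finset.univ h x = ∑ z, h z := by
  unfold intg
  rw [show cell Finset.univ x = Finset.univ by ext z; simp [mem_cell]]

/-- Generalized Hölder inequality from weighted AM-GM. -/
lemma holder_finset {α κ : Type*} (s : Finset α) (P : Finset κ) (w : κ → ℝ)
    (hw : ∀ k ∈ P, 0 < w k) (hw1 : ∑ k ∈ P, w k = 1) (a : κ → α → ℝ)
    (ha : ∀ k j, 0 ≤ a k j) :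
    ∑ j ∈ s, ∏ k ∈ P, a k j ^ w k ≤ ∏ k ∈ P, (∑ j ∈ s, a k j) ^ w k := by
  by_cases hA : ∃ k ∈ P, ∑ j ∈ s, a k j = 0
  · obtain ⟨k0, hk0P, hk0⟩ := hA
    have hz : ∀ j ∈ s, a k0 j = 0 :=
      (Finset.sum_eq_zero_iff_of_nonneg (fun j _ => ha k0 j)).1 hk0
    have hL : ∑ j ∈ s, ∏ k ∈ P, a k j ^ w k = 0 := by
      apply Finset.sum_eq_zero
      intro j hj
      apply Finset.prod_eq_zero hk0P
      rw [hz j hj, Real.zero_rpow (ne_of_gt (hw k0 hk0P))]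
    rw [hL]
    exact Finset.prod_nonneg fun k _ =>
      Real.rpow_nonneg (Finset.sum_nonneg fun j _ => ha k j) _
  · push_neg at hA
    have hApos : ∀ k ∈ P, 0 < ∑ j ∈ s, a k j := fun k hk =>
      lt_of_le_of_ne (Finset.sum_nonneg fun j _ => ha k j) (Ne.symm (hA k hk))
    have key : ∀ j ∈ s, ∏ k ∈ P, (a k j / ∑ j' ∈ s, a k j') ^ w k
        ≤ ∑ k ∈ P, w k * (a k j / ∑ j' ∈ s, a k j') :=
      fun j _ => Real.geom_mean_le_arith_mean_weighted P w _ (fun k hk => (hw k hk).le) hw1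
        (fun k hk => div_nonneg (ha k j) (hApos k hk).le)
    have hPn : 0 ≤ ∏ k ∈ P, (∑ j' ∈ s, a k j') ^ w k :=
      Finset.prod_nonneg fun k hk => Real.rpow_nonneg (hApos k hk).le _
    calc ∑ j ∈ s, ∏ k ∈ P, a k j ^ w k
        = ∑ j ∈ s, (∏ k ∈ P, (∑ j' ∈ s, a k j') ^ w k) *
            ∏ k ∈ P, (a k j / ∑ j' ∈ s, a k j') ^ w k := by
          apply Finset.sum_congr rfl; intro j _
          rw [← Finset.prod_mul_distrib]
          apply Finset.prod_congr rfl; intro k hk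
          rw [← Real.mul_rpow (hApos k hk).le (div_nonneg (ha k j) (hApos k hk).le),
            mul_comm, div_mul_cancel₀ _ (ne_of_gt (hApos k hk))]
      _ = (∏ k ∈ P, (∑ j' ∈ s, a k j') ^ w k) *
            ∑ j ∈ s, ∏ k ∈ P, (a k j / ∑ j' ∈ s, a k j') ^ w k := by rw [← Finset.mul_sum]
      _ ≤ (∏ k ∈ P, (∑ j' ∈ s, a k j') ^ w k) * 1 := by
          apply mul_le_mul_of_nonneg_left _ hPn
          calc ∑ j ∈ s, ∏ k ∈ P, (a k j / ∑ j' ∈ s, a k j') ^ w k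
              ≤ ∑ j ∈ s, ∑ k ∈ P, w k * (a k j / ∑ j' ∈ s, a k j') :=
                Finset.sum_le_sum key
            _ = ∑ k ∈ P, w k * ((∑ j ∈ s, a k j) / ∑ j' ∈ s, a k j') := by
                rw [Finset.sum_comm]
                apply Finset.sum_congr rfl; intro k _
                rw [← Finset.mul_sum, ← Finset.sum_div]
            _ = ∑ k ∈ P, w k := by
                apply Finset.sum_congr rfl; intro k hk
                rw [div_self (ne_of_gt (hApos k hk)), mul_one]
            _ = 1 := hw1
      _ = ∏ k ∈ P, (∑ j' ∈ s, a k j') ^ w k := mul_one _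

/-- Finner/Shearer functional inequality, by induction on the integrated coordinates. -/
lemma fin_ineq {ι : Type} [Fintype ι] (γ : ι → ℝ) (hpos : ∀ k, 0 < γ k)
    (T : Finset (Fin n)) :
    ∀ (A : ι → Finset (Fin n)) (f : ι → (∀ i, 𝒳 i) → ℝ),
      (∀ k z, 0 ≤ f k z) → (∀ k, DOn (f k) (A k)) →
      (∀ i ∈ T, ∑ k ∈ Finset.univ.filter (fun k => i ∈ A k), γ k = 1) →
      ∀ x, intg T (fun z => ∏ k, f k z ^ γ k) x ≤ ∏ k, (intg (T ∩ A k) (f k) x) ^ γ k := by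
  induction T using Finset.induction_on with
  | empty =>
    intro A f hf0 hdep hcov x
    rw [intg_empty]
    apply le_of_eq
    apply Finset.prod_congr rfl
    intro k _
    rw [Finset.empty_inter, intg_empty]
  | @insert i T' hiT' IH =>
    intro A f hf0 hdep hcov x
    have hd : Disjoint T' ({i} : Finset (Fin n)) := by simp [hiT']
    set g : ι → (∀ j, 𝒳 j) → ℝ :=
      fun k => if i ∈ A k then intg {i} (f k) else f k with hg
    have hg0 : ∀ k z, 0 ≤ g k z := by
      intro k z
      by_cases hiA : i ∈ A k
      · simp only [hg, if_pos hiA]; exact intg_nonneg (hf0 k)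
      · simp only [hg, if_neg hiA]; exact hf0 k z
    have hgdep : ∀ k, DOn (g k) (A k \ {i}) := by
      intro k
      by_cases hiA : i ∈ A k
      · simp only [hg, if_pos hiA]; exact DOn_intg (hdep k)
      · simp only [hg, if_neg hiA]
        have : A k \ {i} = A k := by
          ext j; simp only [Finset.mem_sdiff, Finset.mem_singleton]
          constructor
          · exact fun h => h.1
          · intro h; exact ⟨h, fun hji => hiA (hji ▸ h)⟩
        rw [this]; exact hdep k
    have hstep : ∀ z, intg {i} (fun z' => ∏ k, f k z' ^ γ k) z ≤ ∏ k, (g k z) ^ γ k := by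
      intro z
      have hsplit : ∀ z' : ∀ j, 𝒳 j, (∏ k, f k z' ^ γ k) =
          (∏ k ∈ Finset.univ.filter (fun k => ¬ i ∈ A k), f k z' ^ γ k) *
          ∏ k ∈ Finset.univ.filter (fun k => i ∈ A k), f k z' ^ γ k := by
        intro z'
        rw [mul_comm, Finset.prod_filter_mul_prod_filter_not]
      have hDOn : DOn (fun z' => ∏ k ∈ Finset.univ.filter (fun k => ¬ i ∈ A k),
          f k z' ^ γ k) ({i}ᶜ) := by
        apply DOn_prod
        intro k hk
        simp only [Finset.mem_filter] at hk
        apply DOn_comp (fun t => t ^ γ k)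
        apply DOn_mono _ (hdep k)
        intro j hj
        simp only [Finset.mem_compl, Finset.mem_singleton]
        intro hji
        exact hk.2 (hji ▸ hj)
      calc intg {i} (fun z' => ∏ k, f k z' ^ γ k) z
          = intg {i} (fun z' => (∏ k ∈ Finset.univ.filter (fun k => ¬ i ∈ A k), f k z' ^ γ k) *
              ∏ k ∈ Finset.univ.filter (fun k => i ∈ A k), f k z' ^ γ k) z :=
            intg_congr hsplit
        _ = (∏ k ∈ Finset.univ.filter (fun k => ¬ i ∈ A k), f k z ^ γ k) *
              intg {i} (fun z' => ∏ k ∈ Finset.univ.filter (fun k => i ∈ A k), f k z' ^ γ k) z :=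
            intg_mul_left hDOn
        _ ≤ (∏ k ∈ Finset.univ.filter (fun k => ¬ i ∈ A k), f k z ^ γ k) *
              ∏ k ∈ Finset.univ.filter (fun k => i ∈ A k), (intg {i} (f k) z) ^ γ k := by
            apply mul_le_mul_of_nonneg_left _ (Finset.prod_nonneg fun k _ =>
              Real.rpow_nonneg (hf0 k z) _)
            exact holder_finset (cell {i} z) _ γ (fun k _ => hpos k)
              (hcov i (Finset.mem_insert_self i T')) f (fun k j => hf0 k j)
        _ = ∏ k, (g k z) ^ γ k := by
            rw [mul_comm, ← Finset.prod_filter_mul_prod_filter_not Finset.univ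
              (fun k => i ∈ A k) (fun k => (g k z) ^ γ k)]
            congr 1
            · apply Finset.prod_congr rfl; intro k hk
              simp only [Finset.mem_filter] at hk
              simp only [hg, if_pos hk.2]
            · apply Finset.prod_congr rfl; intro k hk
              simp only [Finset.mem_filter] at hk
              simp only [hg, if_neg hk.2]
    have hcov' : ∀ j ∈ T', ∑ k ∈ Finset.univ.filter (fun k => j ∈ A k \ {i}), γ k = 1 := by
      intro j hj
      have hji : j ≠ i := fun h => hiT' (h ▸ hj)
      rw [show Finset.univ.filter (fun k => j ∈ A k \ {i}) =
          Finset.univ.filter (fun k => j ∈ A k) by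
        apply Finset.filter_congr; intro k _
        simp [Finset.mem_sdiff, hji]]
      exact hcov j (Finset.mem_insert_of_mem hj)
    calc intg (insert i T') (fun z => ∏ k, f k z ^ γ k) x
        = intg (T' ∪ {i}) (fun z => ∏ k, f k z ^ γ k) x := by
          rw [Finset.union_comm, ← Finset.insert_eq]
      _ = intg T' (fun z => intg {i} (fun z' => ∏ k, f k z' ^ γ k) z) x := intg_union hd
      _ ≤ intg T' (fun z => ∏ k, (g k z) ^ γ k) x := intg_mono hstep
      _ ≤ ∏ k, (intg (T' ∩ (A k \ {i})) (g k) x) ^ γ k :=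
          IH (fun k => A k \ {i}) g hg0 hgdep hcov' x
      _ = ∏ k, (intg (insert i T' ∩ A k) (f k) x) ^ γ k := by
          apply Finset.prod_congr rfl
          intro k _
          congr 1
          by_cases hiA : i ∈ A k
          · have h1 : T' ∩ (A k \ {i}) = T' ∩ A k := by
              ext j
              simp only [Finset.mem_inter, Finset.mem_sdiff, Finset.mem_singleton]
              constructor
              · exact fun h => ⟨h.1, h.2.1⟩
              · intro h
                exact ⟨h.1, h.2, fun hji => hiT' (hji ▸ h.1)⟩
            have h2 : insert i T' ∩ A k = (T' ∩ A k) ∪ {i} := by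
              ext j
              simp only [Finset.mem_inter, Finset.mem_insert, Finset.mem_union,
                Finset.mem_singleton]
              constructor
              · rintro ⟨hj1 | hj1, hj2⟩
                · exact Or.inr hj1
                · exact Or.inl ⟨hj1, hj2⟩
              · rintro (⟨hj1, hj2⟩ | hj1)
                · exact ⟨Or.inr hj1, hj2⟩
                · exact ⟨Or.inl hj1, hj1 ▸ hiA⟩
            have hd2 : Disjoint (T' ∩ A k) ({i} : Finset (Fin n)) := by
              simp only [Finset.disjoint_singleton_right, Finset.mem_inter, not_and]
              intro h; exact absurd h hiT'
            rw [h1, h2, intg_union hd2]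
            simp only [hg, if_pos hiA]
          · have h1 : T' ∩ (A k \ {i}) = insert i T' ∩ A k := by
              ext j
              simp only [Finset.mem_inter, Finset.mem_sdiff, Finset.mem_singleton,
                Finset.mem_insert]
              constructor
              · rintro ⟨hj1, hj2, _⟩; exact ⟨Or.inr hj1, hj2⟩
              · rintro ⟨hj1 | hj1, hj2⟩
                · exact absurd (hj1 ▸ hj2) hiA
                · exact ⟨hj1, hj2, fun hji => hiA (hji ▸ hj2)⟩
            rw [h1]
            simp only [hg, if_neg hiA]

lemma intg_prod_marg (hp1 : ∑ z, p z = 1) (F : Finset (Fin n)) :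
    ∀ x, intg F (fun z => ∏ i ∈ F, marg p {i} z) x = 1 := by
  induction F using Finset.induction_on with
  | empty => intro x; rw [intg_empty]; simp
  | @insert j F' hjF' IH =>
    intro x
    have hd : Disjoint F' ({j} : Finset (Fin n)) := by simp [hjF']
    have hDOn : DOn (fun z => ∏ i ∈ F', marg p {i} z) ({j}ᶜ) := by
      apply DOn_prod
      intro i hi
      apply DOn_mono _ (DOn_marg (p := p) (F := {i}))
      intro l hl
      simp only [Finset.mem_singleton] at hl
      simp only [Finset.mem_compl, Finset.mem_singleton, hl]
      intro hij
      exact hjF' (hij ▸ hi)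
    have hinner : ∀ y, intg {j} (fun z => ∏ i ∈ insert j F', marg p {i} z) y =
        ∏ i ∈ F', marg p {i} y := by
      intro y
      have : ∀ z : ∀ i, 𝒳 i, (∏ i ∈ insert j F', marg p {i} z) =
          (fun z => ∏ i ∈ F', marg p {i} z) z * marg p {j} z := by
        intro z
        rw [Finset.prod_insert hjF', mul_comm]
      rw [intg_congr this, intg_mul_left hDOn, intg_marg (Finset.Subset.refl {j}),
        Finset.sdiff_self, marg_empty, hp1, mul_one]
    calc intg (insert j F') (fun z => ∏ i ∈ insert j F', marg p {i} z) x
        = intg (F' ∪ {j}) (fun z => ∏ i ∈ insert j F', marg p {i} z) x := by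
          rw [Finset.union_comm, ← Finset.insert_eq]
      _ = intg F' (fun y => intg {j} (fun z => ∏ i ∈ insert j F', marg p {i} z) y) x :=
          intg_union hd
      _ = intg F' (fun y => ∏ i ∈ F', marg p {i} y) x := intg_congr hinner
      _ = 1 := IH x

lemma Hent_eq (p : (∀ i, 𝒳 i) → ℝ) (F : Finset (Fin n)) :
    Hent p F = - ∑ x : (∀ i, 𝒳 i), p x * Real.log (marg p F x) := by
  rw [Hent, ← Finset.sum_neg_distrib,
    ← Finset.sum_fiberwise_of_maps_to
      (g := fun x : ∀ i, 𝒳 i => (fun i : {i // i ∈ F} => x i.1))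
      (fun x _ => Finset.mem_univ _) (fun x => - (p x * Real.log (marg p F x)))]
  apply Finset.sum_congr rfl
  intro y _
  have hfil : Finset.univ.filter
      (fun x : ∀ i, 𝒳 i => (fun i : {i // i ∈ F} => x i.1) = y) =
      Finset.univ.filter (fun x : ∀ i, 𝒳 i => ∀ i : {i // i ∈ F}, x i.1 = y i) := by
    apply Finset.filter_congr
    intro x _
    exact funext_iff
  have hmarg : ∀ x ∈ Finset.univ.filter
      (fun x : ∀ i, 𝒳 i => ∀ i : {i // i ∈ F}, x i.1 = y i),
      marg p F x = ∑ ω ∈ Finset.univ.filter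
        (fun ω : ∀ i, 𝒳 i => ∀ i : {i // i ∈ F}, ω i.1 = y i), p ω := by
    intro x hx
    simp only [Finset.mem_filter] at hx
    unfold marg
    apply Finset.sum_congr _ (fun _ _ => rfl)
    apply Finset.filter_congr
    intro ω _
    constructor
    · intro hc i; rw [hc i.1 i.2]; exact hx.2 i
    · intro hc i hi; rw [hc ⟨i, hi⟩, ← hx.2 ⟨i, hi⟩]
  rw [hfil]
  have h2 : ∑ x ∈ Finset.univ.filter (fun x : ∀ i, 𝒳 i => ∀ i : {i // i ∈ F}, x i.1 = y i),
      -(p x * Real.log (marg p F x)) =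
      ∑ x ∈ Finset.univ.filter (fun x : ∀ i, 𝒳 i => ∀ i : {i // i ∈ F}, x i.1 = y i),
      -(p x * Real.log (∑ ω ∈ Finset.univ.filter
          (fun ω : ∀ i, 𝒳 i => ∀ i : {i // i ∈ F}, ω i.1 = y i), p ω)) :=
    Finset.sum_congr rfl fun x hx => by rw [hmarg x hx]
  rw [h2, Finset.sum_neg_distrib, ← Finset.sum_mul, Real.negMulLog, neg_mul]

lemma prod_rpow_eq_rpow_sum {κ : Type*} (s : Finset κ) (w : κ → ℝ)
    (hw : ∀ k ∈ s, 0 < w k) {t : ℝ} (ht : 0 ≤ t) :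
    ∏ k ∈ s, t ^ w k = t ^ (∑ k ∈ s, w k) := by
  induction s using Finset.induction_on with
  | empty => simp
  | @insert j s' hj IH =>
    have hne : w j + ∑ k ∈ s', w k ≠ 0 :=
      ne_of_gt (add_pos_of_pos_of_nonneg (hw j (Finset.mem_insert_self j s'))
        (Finset.sum_nonneg fun k hk => (hw k (Finset.mem_insert_of_mem hk)).le))
    rw [Finset.prod_insert hj, Finset.sum_insert hj, Real.rpow_add' ht hne,
      IH (fun k hk => hw k (Finset.mem_insert_of_mem hk))]

lemma gibbs_eq {ι : Type} [Fintype ι] (γ : ι → ℝ) (S : ι → Finset (Fin n))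
    (hp0 : ∀ z, 0 ≤ p z) (hp1 : ∑ z, p z = 1)
    (hQ : ∑ z, ∏ k, marg p (S k) z ^ γ k ≤ 1)
    (heq : ∑ k, γ k * Hent p (S k) = Hent p Finset.univ) :
    ∀ z, p z = ∏ k, marg p (S k) z ^ γ k := by
  set q : (∀ i, 𝒳 i) → ℝ := fun z => ∏ k, marg p (S k) z ^ γ k with hqdef
  have hq0 : ∀ z, 0 ≤ q z := fun z =>
    Finset.prod_nonneg fun k _ => Real.rpow_nonneg (marg_nonneg hp0) _
  have hmpos : ∀ z, 0 < p z → ∀ k : ι, 0 < marg p (S k) z :=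
    fun z hz k => lt_of_lt_of_le hz (self_le_marg hp0)
  have hqpos : ∀ z, 0 < p z → 0 < q z := fun z hz =>
    Finset.prod_pos fun k _ => Real.rpow_pos_of_pos (hmpos z hz k) _
  have hlogq : ∀ z, 0 < p z → Real.log (q z) = ∑ k, γ k * Real.log (marg p (S k) z) := by
    intro z hz
    simp only [hqdef]
    rw [Real.log_prod (fun k _ => ne_of_gt (Real.rpow_pos_of_pos (hmpos z hz k) _))]
    exact Finset.sum_congr rfl fun k _ => Real.log_rpow (hmpos z hz k) _
  have hHk : ∀ k : ι, γ k * Hent p (S k) = - ∑ z, p z * (γ k * Real.log (marg p (S k) z)) := by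
    intro k
    rw [Hent_eq, mul_neg]
    congr 1
    rw [Finset.mul_sum]
    exact Finset.sum_congr rfl fun z _ => by ring
  have hD0 : ∑ z, p z * (Real.log (p z) - Real.log (q z)) = 0 := by
    have h1 : ∑ k, γ k * Hent p (S k) =
        - ∑ z, p z * ∑ k, γ k * Real.log (marg p (S k) z) := by
      calc ∑ k, γ k * Hent p (S k)
          = ∑ k : ι, - ∑ z, p z * (γ k * Real.log (marg p (S k) z)) :=
            Finset.sum_congr rfl fun k _ => hHk k
        _ = - ∑ k : ι, ∑ z, p z * (γ k * Real.log (marg p (S k) z)) := by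
            rw [Finset.sum_neg_distrib]
        _ = - ∑ z, ∑ k : ι, p z * (γ k * Real.log (marg p (S k) z)) := by
            rw [Finset.sum_comm]
        _ = - ∑ z, p z * ∑ k, γ k * Real.log (marg p (S k) z) := by
            congr 1
            exact Finset.sum_congr rfl fun z _ => (Finset.mul_sum _ _ _).symm
    have h2 : Hent p Finset.univ = - ∑ z, p z * Real.log (p z) := by
      rw [Hent_eq]
      congr 1
      exact Finset.sum_congr rfl fun z _ => by rw [marg_univ]
    have h3 : ∀ z : ∀ i, 𝒳 i, p z * (Real.log (p z) - Real.log (q z)) =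
        p z * Real.log (p z) - p z * ∑ k, γ k * Real.log (marg p (S k) z) := by
      intro z
      rcases eq_or_lt_of_le (hp0 z) with hz | hz
      · rw [← hz]; ring
      · rw [hlogq z hz]; ring
    calc ∑ z, p z * (Real.log (p z) - Real.log (q z))
        = ∑ z, (p z * Real.log (p z) - p z * ∑ k, γ k * Real.log (marg p (S k) z)) :=
          Finset.sum_congr rfl fun z _ => h3 z
      _ = ∑ z, p z * Real.log (p z)
          - ∑ z, p z * ∑ k, γ k * Real.log (marg p (S k) z) := Finset.sum_sub_distrib _ _
      _ = 0 := by
          have e1 := h1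
          have e2 := h2
          have e3 := heq
          linarith
  set s := Finset.univ.filter (fun z : ∀ i, 𝒳 i => 0 < p z) with hs
  have hmem : ∀ z, z ∈ s ↔ 0 < p z := by
    intro z; simp [hs]
  have hzero : ∀ z, z ∉ s → p z = 0 := by
    intro z hz
    rw [hmem] at hz
    push_neg at hz
    exact le_antisymm hz (hp0 z)
  have hps : ∑ z ∈ s, p z = 1 := by
    rw [← hp1]
    apply Finset.sum_subset (Finset.filter_subset _ _)
    intro z _ hzs
    exact hzero z hzs
  have hQs_le : ∑ z ∈ s, q z ≤ 1 :=
    le_trans (Finset.sum_le_sum_of_subset_of_nonneg (Finset.filter_subset _ _)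
      fun z _ _ => hq0 z) hQ
  have hDs : ∑ z ∈ s, p z * (Real.log (p z) - Real.log (q z)) = 0 := by
    rw [← hD0]
    apply Finset.sum_subset (Finset.filter_subset _ _)
    intro z _ hzs
    rw [hzero z hzs, zero_mul]
  have hsum : ∑ z ∈ s, p z * ((q z / p z - 1) - Real.log (q z / p z))
      = (∑ z ∈ s, q z) - 1 := by
    have hterm : ∀ z ∈ s, p z * ((q z / p z - 1) - Real.log (q z / p z)) =
        (q z - p z) + p z * (Real.log (p z) - Real.log (q z)) := by
      intro z hzs
      have hpz : 0 < p z := (hmem z).1 hzs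
      have hqz : 0 < q z := hqpos z hpz
      rw [Real.log_div (ne_of_gt hqz) (ne_of_gt hpz)]
      field_simp
      ring
    rw [Finset.sum_congr rfl hterm, Finset.sum_add_distrib, Finset.sum_sub_distrib, hps, hDs,
      add_zero]
  have hterm_nonneg : ∀ z ∈ s, 0 ≤ p z * ((q z / p z - 1) - Real.log (q z / p z)) := by
    intro z hzs
    have hpz : 0 < p z := (hmem z).1 hzs
    have ht : 0 < q z / p z := div_pos (hqpos z hpz) hpz
    have hl := Real.log_le_sub_one_of_pos ht
    apply mul_nonneg hpz.le
    linarith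
  have hQs : ∑ z ∈ s, q z = 1 := by
    have h0 : 0 ≤ ∑ z ∈ s, p z * ((q z / p z - 1) - Real.log (q z / p z)) :=
      Finset.sum_nonneg hterm_nonneg
    have := hsum
    exact le_antisymm hQs_le (by linarith)
  have hterms0 : ∀ z ∈ s, p z * ((q z / p z - 1) - Real.log (q z / p z)) = 0 := by
    apply (Finset.sum_eq_zero_iff_of_nonneg hterm_nonneg).1
    rw [hsum, hQs]
    ring
  have hon : ∀ z ∈ s, p z = q z := by
    intro z hzs
    have hpz : 0 < p z := (hmem z).1 hzs
    have ht : 0 < q z / p z := div_pos (hqpos z hpz) hpz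
    have h1 : (q z / p z - 1) - Real.log (q z / p z) = 0 := by
      rcases mul_eq_zero.1 (hterms0 z hzs) with h | h
      · exact absurd h (ne_of_gt hpz)
      · exact h
    by_contra hne
    have htne : q z / p z ≠ 1 := by
      intro h1'
      exact hne ((div_eq_one_iff_eq (ne_of_gt hpz)).1 h1').symm
    have := Real.log_lt_sub_one_of_pos ht htne
    linarith
  have hoff : ∀ z, z ∉ s → q z = 0 := by
    have hsplit : ∑ z, q z = ∑ z ∈ s, q z +
        ∑ z ∈ Finset.univ.filter (fun z => ¬ 0 < p z), q z := by
      rw [hs]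
      exact (Finset.sum_filter_add_sum_filter_not _ _ _).symm
    have hle : ∑ z ∈ Finset.univ.filter (fun z : ∀ i, 𝒳 i => ¬ 0 < p z), q z ≤ 0 := by
      have := hQ
      rw [hqdef] at hsplit
      linarith [hsplit, hQs]
    have hnn : ∀ w ∈ Finset.univ.filter (fun z : ∀ i, 𝒳 i => ¬ 0 < p z), 0 ≤ q w :=
      fun w _ => hq0 w
    intro z hzs
    have hzmem : z ∈ Finset.univ.filter (fun z : ∀ i, 𝒳 i => ¬ 0 < p z) := by
      rw [hmem] at hzs
      simp only [Finset.mem_filter, Finset.mem_univ, true_and]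
      exact hzs
    exact (Finset.sum_eq_zero_iff_of_nonneg hnn).1
      (le_antisymm hle (Finset.sum_nonneg hnn)) z hzmem
  intro z
  show p z = q z
  by_cases hzs : z ∈ s
  · exact hon z hzs
  · rw [hzero z hzs, hoff z hzs]

lemma marg_factor {ι : Type} [Fintype ι] (γ : ι → ℝ) (hpos : ∀ k, 0 < γ k)
    (S : ι → Finset (Fin n))
    (hp0 : ∀ z, 0 ≤ p z) (hp1 : ∑ z, p z = 1)
    (hfrac : ∀ i : Fin n, ∑ k ∈ Finset.univ.filter (fun k => i ∈ S k), γ k = 1)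
    (hpq : ∀ z, p z = ∏ k, marg p (S k) z ^ γ k)
    (F : Finset (Fin n)) :
    ∀ z, marg p F z = ∏ k, marg p (S k ∩ F) z ^ γ k := by
  have hm0 : ∀ (G : Finset (Fin n)) (z : ∀ i, 𝒳 i), 0 ≤ marg p G z :=
    fun G z => marg_nonneg hp0
  have hub : ∀ z, marg p F z ≤ ∏ k, marg p (S k ∩ F) z ^ γ k := by
    intro z
    calc marg p F z = intg Fᶜ p z := marg_eq_intg
      _ = intg Fᶜ (fun w => ∏ k, marg p (S k) w ^ γ k) z := intg_congr hpq
      _ ≤ ∏ k, (intg (Fᶜ ∩ S k) (marg p (S k)) z) ^ γ k :=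
          fin_ineq γ hpos Fᶜ S (fun k => marg p (S k)) (fun k w => hm0 _ w)
            (fun k => DOn_marg) (fun i _ => hfrac i) z
      _ = ∏ k, marg p (S k ∩ F) z ^ γ k := by
          apply Finset.prod_congr rfl; intro k _
          congr 1
          rw [intg_marg (Finset.inter_subset_right)]
          congr 1
          ext i
          simp only [Finset.mem_sdiff, Finset.mem_inter, Finset.mem_compl]
          tauto
  have hIq : ∀ z, intg F (fun w => ∏ k, marg p (S k ∩ F) w ^ γ k) z ≤ 1 := by
    intro z
    have hcov : ∀ i ∈ F, ∑ k ∈ Finset.univ.filter (fun k => i ∈ S k ∩ F), γ k = 1 := by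
      intro i hi
      rw [show Finset.univ.filter (fun k : ι => i ∈ S k ∩ F) =
          Finset.univ.filter (fun k : ι => i ∈ S k) by
        apply Finset.filter_congr; intro k _; simp [Finset.mem_inter, hi]]
      exact hfrac i
    calc intg F (fun w => ∏ k, marg p (S k ∩ F) w ^ γ k) z
        ≤ ∏ k, (intg (F ∩ (S k ∩ F)) (marg p (S k ∩ F)) z) ^ γ k :=
          fin_ineq γ hpos F (fun k => S k ∩ F) (fun k => marg p (S k ∩ F))
            (fun k w => hm0 _ w) (fun k => DOn_marg) hcov z
      _ = ∏ k, (1:ℝ) ^ γ k := by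
          apply Finset.prod_congr rfl; intro k _
          congr 1
          rw [show F ∩ (S k ∩ F) = S k ∩ F by
              rw [Finset.inter_eq_right.2 (Finset.inter_subset_right)],
            intg_marg (Finset.Subset.refl _), Finset.sdiff_self, marg_empty, hp1]
      _ = 1 := by simp
  have hIm : ∀ z, intg F (marg p F) z = 1 := by
    intro z
    rw [intg_marg (Finset.Subset.refl F), Finset.sdiff_self, marg_empty, hp1]
  intro z
  have h1 : ∀ w ∈ cell F z,
      (0:ℝ) ≤ (fun w => (∏ k, marg p (S k ∩ F) w ^ γ k) - marg p F w) w :=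
    fun w _ => sub_nonneg.2 (hub w)
  have h2 : (∏ k, marg p (S k ∩ F) z ^ γ k) - marg p F z ≤
      ∑ w ∈ cell F z, ((∏ k, marg p (S k ∩ F) w ^ γ k) - marg p F w) :=
    Finset.single_le_sum h1 cell_self
  have h3 : ∑ w ∈ cell F z, ((∏ k, marg p (S k ∩ F) w ^ γ k) - marg p F w) =
      intg F (fun w => ∏ k, marg p (S k ∩ F) w ^ γ k) z - intg F (marg p F) z :=
    Finset.sum_sub_distrib _ _
  have := hub z
  have := hIq z
  have := hIm z
  linarith

lemma marg_indep {ι : Type} [Fintype ι] (γ : ι → ℝ) (hpos : ∀ k, 0 < γ k)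
    (S : ι → Finset (Fin n))
    (hp0 : ∀ z, 0 ≤ p z) (hp1 : ∑ z, p z = 1)
    (hsep : ∀ i j : Fin n, i ≠ j → ¬ (∀ k, i ∈ S k ↔ j ∈ S k))
    (hfrac : ∀ i : Fin n, ∑ k ∈ Finset.univ.filter (fun k => i ∈ S k), γ k = 1)
    (hpq : ∀ z, p z = ∏ k, marg p (S k) z ^ γ k) :
    ∀ (F : Finset (Fin n)) (z : ∀ i, 𝒳 i), marg p F z = ∏ i ∈ F, marg p {i} z := by
  intro F
  induction F using Finset.strongInduction with
  | _ F IH =>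
    by_cases hcard : F.card ≤ 1
    · intro z
      rcases Nat.le_one_iff_eq_zero_or_eq_one.1 hcard with h0 | h1
      · rw [Finset.card_eq_zero.1 h0, marg_empty, hp1, Finset.prod_empty]
      · obtain ⟨i, rfl⟩ := Finset.card_eq_one.1 h1
        rw [Finset.prod_singleton]
    · push_neg at hcard
      obtain ⟨i, hi, j, hj, hij⟩ := Finset.one_lt_card.1 hcard
      set Ka := Finset.univ.filter (fun k : ι => F ⊆ S k) with hKa
      set a := ∑ k ∈ Ka, γ k with ha
      have hKa_sub : ∀ i' ∈ F, Ka ⊆ Finset.univ.filter (fun k => i' ∈ S k) := by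
        intro i' hi' k hk
        simp only [hKa, Finset.mem_filter, Finset.mem_univ, true_and] at hk ⊢
        exact hk hi'
      have ha_le : a ≤ 1 := by
        rw [← hfrac i]
        exact Finset.sum_le_sum_of_subset_of_nonneg (hKa_sub i hi) fun k _ _ => (hpos k).le
      have ha_lt : a < 1 := by
        rcases lt_or_eq_of_le ha_le with h | h
        · exact h
        · exfalso
          have hempty : ∀ i', i' ∈ F → ∀ k, i' ∈ S k → F ⊆ S k := by
            intro i' hi'
            by_contra hC
            push_neg at hC
            obtain ⟨k0, hk0i, hk0F⟩ := hC
            have hk0mem : k0 ∈ Finset.univ.filter (fun k => i' ∈ S k) := by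
              simp [hk0i]
            have hk0not : k0 ∉ Ka := by
              simp [hKa, hk0F]
            have hlt' : a < ∑ k ∈ Finset.univ.filter (fun k => i' ∈ S k), γ k :=
              Finset.sum_lt_sum_of_subset (hKa_sub i' hi') hk0mem hk0not (hpos k0)
                (fun k _ _ => (hpos k).le)
            rw [hfrac i'] at hlt'
            rw [h] at hlt'
            exact lt_irrefl _ hlt'
          apply hsep i j hij
          intro k
          constructor
          · intro hik; exact hempty i hi k hik hj
          · intro hjk; exact hempty j hj k hjk hi
      have h1a : (0:ℝ) < 1 - a := by linarith
      -- pointwise identity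
      have hid : ∀ w : ∀ i, 𝒳 i, marg p F w =
          marg p F w ^ a * (∏ i' ∈ F, marg p {i'} w) ^ (1 - a) := by
        intro w
        have hEF := marg_factor γ hpos S hp0 hp1 hfrac hpq F w
        conv_lhs => rw [hEF]
        rw [← Finset.prod_filter_mul_prod_filter_not Finset.univ (fun k => F ⊆ S k)
          (fun k => marg p (S k ∩ F) w ^ γ k)]
        congr 1
        · -- ∏ over Ka
          rw [show Finset.univ.filter (fun k : ι => F ⊆ S k) = Ka from rfl]
          have hrepl : ∀ k ∈ Ka, marg p (S k ∩ F) w ^ γ k = marg p F w ^ γ k := by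
            intro k hk
            simp only [hKa, Finset.mem_filter, Finset.mem_univ, true_and] at hk
            rw [Finset.inter_eq_right.2 hk]
          rw [Finset.prod_congr rfl hrepl,
            prod_rpow_eq_rpow_sum Ka γ (fun k _ => hpos k) (marg_nonneg hp0), ha]
        · -- ∏ over complement
          have hstep1 : ∀ k ∈ Finset.univ.filter (fun k : ι => ¬ F ⊆ S k),
              marg p (S k ∩ F) w ^ γ k = ∏ i' ∈ F,
                (if i' ∈ S k then marg p {i'} w ^ γ k else 1) := by
            intro k hk
            simp only [Finset.mem_filter, Finset.mem_univ, true_and] at hk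
            have hss : S k ∩ F ⊂ F := by
              apply Finset.ssubset_iff_subset_ne.2
              refine ⟨Finset.inter_subset_right, fun hceq => hk ?_⟩
              intro i' hi'
              rw [← hceq] at hi'
              exact (Finset.mem_inter.1 hi').1
            rw [IH (S k ∩ F) hss w]
            rw [← Real.finset_prod_rpow _ _ (fun i' _ => marg_nonneg hp0) _]
            rw [show S k ∩ F = F.filter (fun i' => i' ∈ S k) by
              ext i'; simp [Finset.mem_inter, and_comm]]
            rw [Finset.prod_filter]
          rw [Finset.prod_congr rfl hstep1, Finset.prod_comm]
          have hstep2 : ∀ i' ∈ F, ∏ k ∈ Finset.univ.filter (fun k : ι => ¬ F ⊆ S k),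
              (if i' ∈ S k then marg p {i'} w ^ γ k else 1) =
              marg p {i'} w ^ (1 - a) := by
            intro i' hi'
            rw [← Finset.prod_filter]
            have hset : (Finset.univ.filter (fun k : ι => ¬ F ⊆ S k)).filter
                (fun k => i' ∈ S k) =
                (Finset.univ.filter (fun k : ι => i' ∈ S k)) \ Ka := by
              ext k
              simp only [Finset.mem_filter, Finset.mem_univ, true_and, Finset.mem_sdiff,
                hKa]
              tauto
            rw [hset, prod_rpow_eq_rpow_sum _ γ (fun k _ => hpos k) (marg_nonneg hp0)]
            congr 1
            rw [Finset.sum_sdiff_eq_sub (hKa_sub i' hi'), hfrac i', ← ha]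
          rw [Finset.prod_congr rfl hstep2]
          exact Real.finset_prod_rpow _ _ (fun i' _ => marg_nonneg hp0) _
      -- pointwise inequality
      have hle : ∀ w : ∀ i, 𝒳 i, marg p F w ≤ ∏ i' ∈ F, marg p {i'} w := by
        intro w
        by_cases hmz : marg p F w = 0
        · rw [hmz]
          exact Finset.prod_nonneg fun i' _ => marg_nonneg hp0
        · have hmpos : 0 < marg p F w := lt_of_le_of_ne (marg_nonneg hp0) (Ne.symm hmz)
          have hPpos : 0 < ∏ i' ∈ F, marg p {i'} w := by
            by_contra hP
            push_neg at hP
            have hP0 : ∏ i' ∈ F, marg p {i'} w = 0 :=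
              le_antisymm hP (Finset.prod_nonneg fun i' _ => marg_nonneg hp0)
            have := hid w
            rw [hP0, Real.zero_rpow (ne_of_gt h1a), mul_zero] at this
            exact hmz this
          apply le_of_eq
          have hkey : marg p F w ^ a * marg p F w ^ (1 - a) =
              marg p F w ^ a * (∏ i' ∈ F, marg p {i'} w) ^ (1 - a) := by
            rw [← Real.rpow_add hmpos]
            norm_num
            exact hid w
          have hcancel := mul_left_cancel₀
            (ne_of_gt (Real.rpow_pos_of_pos hmpos a)) hkey
          calc marg p F w = (marg p F w ^ (1 - a)) ^ (1 - a)⁻¹ :=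
                (Real.rpow_rpow_inv (marg_nonneg hp0) (ne_of_gt h1a)).symm
            _ = ((∏ i' ∈ F, marg p {i'} w) ^ (1 - a)) ^ (1 - a)⁻¹ := by rw [hcancel]
            _ = ∏ i' ∈ F, marg p {i'} w :=
                Real.rpow_rpow_inv (Finset.prod_nonneg fun i' _ => marg_nonneg hp0)
                  (ne_of_gt h1a)
      -- global equality via integration
      intro z
      have h1 : ∀ w ∈ cell F z,
          (0:ℝ) ≤ (fun w => (∏ i' ∈ F, marg p {i'} w) - marg p F w) w :=
        fun w _ => sub_nonneg.2 (hle w)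
      have h2 : (∏ i' ∈ F, marg p {i'} z) - marg p F z ≤
          ∑ w ∈ cell F z, ((∏ i' ∈ F, marg p {i'} w) - marg p F w) :=
        Finset.single_le_sum h1 cell_self
      have h3 : ∑ w ∈ cell F z, ((∏ i' ∈ F, marg p {i'} w) - marg p F w) =
          intg F (fun w => ∏ i' ∈ F, marg p {i'} w) z - intg F (marg p F) z :=
        Finset.sum_sub_distrib _ _
      have h4 := intg_prod_marg hp1 F z
      have h5 : intg F (marg p F) z = 1 := by
        rw [intg_marg (Finset.Subset.refl F), Finset.sdiff_self, marg_empty, hp1]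
      have h6 := hle z
      linarith

lemma marg_singleton (i : Fin n) :
    marg p {i} x = ∑ ω ∈ Finset.univ.filter (fun ω : ∀ i, 𝒳 i => ω i = x i), p ω := by
  unfold marg
  apply Finset.sum_congr _ (fun _ _ => rfl)
  apply Finset.filter_congr
  intro ω _
  simp

lemma marg_of_indep (hp1 : ∑ z, p z = 1)
    (hfact : ∀ z, p z = ∏ i : Fin n, marg p {i} z) (F : Finset (Fin n)) :
    ∀ x, marg p F x = ∏ i ∈ F, marg p {i} x := by
  intro x
  have hDOn : DOn (fun z => ∏ i ∈ F, marg p {i} z) (Fᶜᶜ) := by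
    apply DOn_prod
    intro i hi
    apply DOn_mono _ (DOn_marg (p := p) (F := {i}))
    intro l hl
    simp only [Finset.mem_singleton] at hl
    simp [hl, hi]
  calc marg p F x = intg Fᶜ p x := marg_eq_intg
    _ = intg Fᶜ (fun z => (∏ i ∈ F, marg p {i} z) * ∏ i ∈ Fᶜ, marg p {i} z) x := by
        apply intg_congr
        intro z
        rw [hfact z]
        exact (Finset.prod_mul_prod_compl F _).symm
    _ = (∏ i ∈ F, marg p {i} x) * intg Fᶜ (fun z => ∏ i ∈ Fᶜ, marg p {i} z) x :=
        intg_mul_left hDOn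
    _ = ∏ i ∈ F, marg p {i} x := by rw [intg_prod_marg hp1 Fᶜ x, mul_one]

lemma Hent_indep (hp0 : ∀ z, 0 ≤ p z) (hp1 : ∑ z, p z = 1)
    (hfact : ∀ z, p z = ∏ i : Fin n, marg p {i} z) (F : Finset (Fin n)) :
    Hent p F = ∑ i ∈ F, Hent p {i} := by
  have hlog : ∀ x : ∀ i, 𝒳 i, p x * Real.log (marg p F x) =
      ∑ i ∈ F, p x * Real.log (marg p {i} x) := by
    intro x
    rcases eq_or_lt_of_le (hp0 x) with hz | hz
    · rw [← hz]
      simp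
    · have hpos1 : ∀ i : Fin n, 0 < marg p {i} x := by
        intro i
        rcases eq_or_lt_of_le (marg_nonneg hp0 : (0:ℝ) ≤ marg p {i} x) with h | h
        · exfalso
          have h0 : ∏ i : Fin n, marg p {i} x = 0 :=
            Finset.prod_eq_zero (Finset.mem_univ i) h.symm
          rw [← hfact x] at h0
          rw [h0] at hz
          exact lt_irrefl _ hz
        · exact h
      rw [marg_of_indep hp1 hfact F x,
        Real.log_prod (fun i _ => ne_of_gt (hpos1 i)), Finset.mul_sum]
  calc Hent p F = -∑ x, p x * Real.log (marg p F x) := Hent_eq p F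
    _ = -∑ x, ∑ i ∈ F, p x * Real.log (marg p {i} x) := by
        congr 1
        exact Finset.sum_congr rfl fun x _ => hlog x
    _ = -∑ i ∈ F, ∑ x, p x * Real.log (marg p {i} x) := by rw [Finset.sum_comm]
    _ = ∑ i ∈ F, -∑ x, p x * Real.log (marg p {i} x) := by rw [Finset.sum_neg_distrib]
    _ = ∑ i ∈ F, Hent p {i} := Finset.sum_congr rfl fun i _ => (Hent_eq p {i}).symm

end ShearerAux

theorem stmt_9 (n : ℕ) (hn : 2 ≤ n)
    (𝒳 : Fin n → Type) [∀ i, Fintype (𝒳 i)] [∀ i, Nonempty (𝒳 i)]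
    (p : (∀ i, 𝒳 i) → ℝ)
    (hp0 : ∀ x, 0 ≤ p x) (hp1 : ∑ x : ∀ i, 𝒳 i, p x = 1)
    (ι : Type) [Fintype ι] (S : ι → Finset (Fin n)) (γ : ι → ℝ)
    (hproper : ∀ k, S k ≠ Finset.univ)
    (hpos : ∀ k, 0 < γ k)
    (hsep : ∀ i j : Fin n, i ≠ j → ¬ (∀ k, i ∈ S k ↔ j ∈ S k))
    (hfrac : ∀ i : Fin n, ∑ k ∈ Finset.univ.filter (fun k => i ∈ S k), γ k = 1) :
    (∑ k : ι, γ k * Hent p (S k)) = Hent p Finset.univ ↔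
      ∀ x : ∀ i, 𝒳 i,
        p x = ∏ i : Fin n,
          ∑ ω ∈ Finset.univ.filter (fun ω : ∀ i, 𝒳 i => ω i = x i), p ω := by
  constructor
  · -- equality implies independence
    intro heq
    have hQ : ∑ z, ∏ k, marg p (S k) z ^ γ k ≤ 1 := by
      have x₀ : ∀ i, 𝒳 i := fun i => Classical.arbitrary _
      calc ∑ z, ∏ k, marg p (S k) z ^ γ k
          = intg Finset.univ (fun z => ∏ k, marg p (S k) z ^ γ k) x₀ := intg_univ.symm
        _ ≤ ∏ k, (intg (Finset.univ ∩ S k) (marg p (S k)) x₀) ^ γ k :=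
            fin_ineq γ hpos Finset.univ S (fun k => marg p (S k))
              (fun k w => marg_nonneg hp0) (fun k => DOn_marg) (fun i _ => hfrac i) x₀
        _ = ∏ k : ι, (1:ℝ) ^ γ k := by
            apply Finset.prod_congr rfl
            intro k _
            congr 1
            rw [Finset.univ_inter, intg_marg (Finset.Subset.refl _), Finset.sdiff_self,
              marg_empty, hp1]
        _ ≤ 1 := by simp
    have hpq := gibbs_eq γ S hp0 hp1 hQ heq
    have hind := marg_indep γ hpos S hp0 hp1 hsep hfrac hpq
    intro x
    calc p x = marg p Finset.univ x := marg_univ.symm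
      _ = ∏ i ∈ Finset.univ, marg p {i} x := hind Finset.univ x
      _ = ∏ i : Fin n, ∑ ω ∈ Finset.univ.filter (fun ω : ∀ i, 𝒳 i => ω i = x i), p ω :=
          Finset.prod_congr rfl fun i _ => marg_singleton i
  · -- independence implies equality
    intro hfact'
    have hfact : ∀ z, p z = ∏ i : Fin n, marg p {i} z := by
      intro z
      rw [hfact' z]
      exact Finset.prod_congr rfl fun i _ => (marg_singleton i).symm
    have hH : ∀ F : Finset (Fin n), Hent p F = ∑ i ∈ F, Hent p {i} :=
      Hent_indep hp0 hp1 hfact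
    calc ∑ k, γ k * Hent p (S k)
        = ∑ k : ι, ∑ i ∈ S k, γ k * Hent p {i} := by
          apply Finset.sum_congr rfl
          intro k _
          rw [hH (S k), Finset.mul_sum]
      _ = ∑ k : ι, ∑ i : Fin n, (if i ∈ S k then γ k * Hent p {i} else 0) := by
          apply Finset.sum_congr rfl
          intro k _
          rw [Finset.sum_ite_mem, Finset.univ_inter]
      _ = ∑ i : Fin n, ∑ k : ι, (if i ∈ S k then γ k * Hent p {i} else 0) :=
          Finset.sum_comm
      _ = ∑ i : Fin n, (∑ k ∈ Finset.univ.filter (fun k => i ∈ S k), γ k) * Hent p {i} := by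
          apply Finset.sum_congr rfl
          intro i _
          rw [Finset.sum_mul, Finset.sum_filter]
      _ = ∑ i : Fin n, Hent p {i} := by
          apply Finset.sum_congr rfl
          intro i _
          rw [hfrac i, one_mul]
      _ = Hent p Finset.univ := (hH Finset.univ).symm
end

section
/- Let X_1, …, X_n (n ≥ 2) be jointly distributed random variables on finite alphabets with joint probability mass function p, and let α : 𝓕 → ℚ₊ be a fractional covering with respect to a family 𝓕 of subsets of [n] satisfying the standing assumptions. Then ∑_{F ∈ 𝓕} α(F) H(X_F) = H(X_{[n]}) if and only if the random variables X_i with i in A = {i ∈ [n] : ∑_{F ∈ 𝓕 : i ∈ F} α(F) = 1} are mutually independent and, for every i with ∑_{F ∈ 𝓕 : i ∈ F} α(F) > 1, the random variable X_i is constant (H(X_i) = 0). -/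
open Finset
open scoped Classical BigOperators
set_option linter.unusedSectionVars false

/-- Value of the marginal of `p` on the coordinates in `F`, evaluated at (the restriction to
    `F` of) the tuple `x`. -/
noncomputable def margVal {n : ℕ} {𝒳 : Fin n → Type} [∀ i, Fintype (𝒳 i)]
    (p : (∀ i, 𝒳 i) → ℝ) (F : Finset (Fin n)) (x : ∀ i, 𝒳 i) : ℝ :=
  ∑ ω ∈ Finset.univ.filter (fun ω : ∀ i, 𝒳 i => ∀ i ∈ F, ω i = x i), p ω

namespace ShearerAux

variable {n : ℕ} {𝒳 : Fin n → Type} [∀ i, Fintype (𝒳 i)] [∀ i, Nonempty (𝒳 i)]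

section Marg

variable (p : (∀ i, 𝒳 i) → ℝ)

lemma margVal_congr {F : Finset (Fin n)} {x x' : ∀ i, 𝒳 i}
    (h : ∀ i ∈ F, x i = x' i) : margVal p F x = margVal p F x' := by
  unfold margVal
  apply Finset.sum_congr
  · apply Finset.filter_congr
    intro ω _
    constructor
    · intro hh i hi; rw [hh i hi, h i hi]
    · intro hh i hi; rw [hh i hi, ← h i hi]
  · intros; rfl

variable {p} (hp0 : ∀ x, 0 ≤ p x)
include hp0

lemma margVal_nonneg (F : Finset (Fin n)) (x : ∀ i, 𝒳 i) : 0 ≤ margVal p F x :=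
  Finset.sum_nonneg fun ω _ => hp0 ω

lemma self_le_margVal (F : Finset (Fin n)) (x : ∀ i, 𝒳 i) : p x ≤ margVal p F x := by
  apply Finset.single_le_sum (fun ω _ => hp0 ω)
  simp

lemma margVal_anti {F G : Finset (Fin n)} (h : F ⊆ G) (x : ∀ i, 𝒳 i) :
    margVal p G x ≤ margVal p F x := by
  apply Finset.sum_le_sum_of_subset_of_nonneg
  · intro ω hω
    simp only [Finset.mem_filter, Finset.mem_univ, true_and] at hω ⊢
    exact fun i hi => hω i (h hi)
  · intro ω _ _; exact hp0 ω

variable (hp1 : ∑ x : ∀ i, 𝒳 i, p x = 1)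
include hp1

lemma margVal_empty (x : ∀ i, 𝒳 i) : margVal p ∅ x = 1 := by
  unfold margVal
  rw [← hp1]
  apply Finset.sum_congr _ (fun _ _ => rfl)
  simp

lemma margVal_le_one (F : Finset (Fin n)) (x : ∀ i, 𝒳 i) : margVal p F x ≤ 1 := by
  rw [← hp1]
  exact Finset.sum_le_sum_of_subset_of_nonneg (Finset.filter_subset _ _)
    (fun ω _ _ => hp0 ω)

end Marg

section Grouping

variable (p : (∀ i, 𝒳 i) → ℝ)

/-- Tuples that agree with base `b` outside `F`. -/
noncomputable def canonSet (F : Finset (Fin n)) (b : ∀ i, 𝒳 i) : Finset (∀ i, 𝒳 i) :=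
  Finset.univ.filter (fun z => ∀ i, i ∉ F → z i = b i)

lemma grouping (F : Finset (Fin n)) (b : ∀ i, 𝒳 i) (φ : (∀ i, 𝒳 i) → ℝ)
    (hφ : ∀ x x', (∀ i ∈ F, x i = x' i) → φ x = φ x') :
    ∑ x : ∀ i, 𝒳 i, p x * φ x = ∑ z ∈ canonSet F b, margVal p F z * φ z := by
  classical
  set r : (∀ i, 𝒳 i) → (∀ i, 𝒳 i) := fun x i => if i ∈ F then x i else b i with hr
  have hrF : ∀ x : ∀ i, 𝒳 i, ∀ i ∈ F, x i = r x i := by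
    intro x i hi; simp [hr, hi]
  have h1 : ∑ x : ∀ i, 𝒳 i, p x * φ x = ∑ x : ∀ i, 𝒳 i, p x * φ (r x) :=
    Finset.sum_congr rfl fun x _ => by rw [hφ x (r x) (hrF x)]
  rw [h1, ← Finset.sum_fiberwise Finset.univ r (fun x => p x * φ (r x))]
  have h2 : ∀ j : ∀ i, 𝒳 i, ∑ x ∈ Finset.univ.filter (fun x => r x = j), p x * φ (r x)
      = (∑ x ∈ Finset.univ.filter (fun x => r x = j), p x) * φ j := by
    intro j
    rw [Finset.sum_mul]
    exact Finset.sum_congr rfl fun x hx => by rw [(Finset.mem_filter.mp hx).2]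
  calc ∑ j : ∀ i, 𝒳 i, ∑ x ∈ Finset.univ.filter (fun x => r x = j), p x * φ (r x)
      = ∑ j : ∀ i, 𝒳 i, (∑ x ∈ Finset.univ.filter (fun x => r x = j), p x) * φ j :=
        Finset.sum_congr rfl fun j _ => h2 j
    _ = ∑ z ∈ canonSet F b, margVal p F z * φ z := by
        rw [← Finset.sum_subset (Finset.subset_univ (canonSet F b))]
        · apply Finset.sum_congr rfl
          intro z hz
          congr 1
          apply Finset.sum_congr _ (fun _ _ => rfl)
          apply Finset.filter_congr
          intro x _
          simp only [canonSet, Finset.mem_filter, Finset.mem_univ, true_and] at hz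
          constructor
          · intro hxz i hi; rw [← hxz]; simp [hr, hi]
          · intro hagree; funext i
            by_cases hi : i ∈ F
            · simpa [hr, hi] using (hagree i hi)
            · simp [hr, hi, hz i hi]
        · intro z _ hz
          have : Finset.univ.filter (fun x => r x = z) = ∅ := by
            apply Finset.filter_false_of_mem
            intro x _ hxz
            apply hz
            simp only [canonSet, Finset.mem_filter, Finset.mem_univ, true_and]
            intro i hi
            rw [← hxz]; simp [hr, hi]
          rw [this, Finset.sum_empty, zero_mul]

/-- Total mass of a marginal is one. -/
lemma canon_sum_margVal (hp1 : ∑ x : ∀ i, 𝒳 i, p x = 1) (F : Finset (Fin n)) (b : ∀ i, 𝒳 i) :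
    ∑ z ∈ canonSet F b, margVal p F z = 1 := by
  have := grouping p F b (fun _ => 1) (fun _ _ _ => rfl)
  simpa [hp1] using this.symm

end Grouping

section Master

variable (p : (∀ i, 𝒳 i) → ℝ)

lemma Hent_eq_canon (F : Finset (Fin n)) (b : ∀ i, 𝒳 i) :
    Hent p F = ∑ z ∈ canonSet F b, Real.negMulLog (margVal p F z) := by
  classical
  unfold Hent
  apply Finset.sum_nbij' (i := fun y => fun i => if h : i ∈ F then y ⟨i, h⟩ else b i)
    (j := fun (z : ∀ i, 𝒳 i) => fun i : {i // i ∈ F} => z i.1)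
  · intro y _
    simp only [canonSet, Finset.mem_filter, Finset.mem_univ, true_and]
    intro i hi
    simp [hi]
  · intro z _; exact Finset.mem_univ _
  · intro y _
    funext i
    simp [i.2]
  · intro z hz
    simp only [canonSet, Finset.mem_filter, Finset.mem_univ, true_and] at hz
    funext i
    by_cases hi : i ∈ F
    · simp [hi]
    · simp [hi, hz i hi]
  · intro y _
    congr 1
    unfold margVal
    apply Finset.sum_congr _ (fun _ _ => rfl)
    apply Finset.filter_congr
    intro x _
    constructor
    · intro h i hi
      simp only [hi, dif_pos]
      exact h ⟨i, hi⟩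
    · intro h i
      have := h i.1 i.2
      simpa [i.2] using this

lemma Hent_empty (hp0 : ∀ x, 0 ≤ p x) (hp1 : ∑ x : ∀ i, 𝒳 i, p x = 1) : Hent p (∅ : Finset (Fin n)) = 0 := by
  classical
  obtain ⟨b⟩ : Nonempty (∀ i, 𝒳 i) := ⟨fun i => Classical.arbitrary _⟩
  rw [Hent_eq_canon p ∅ b]
  have hcanon : canonSet (∅ : Finset (Fin n)) b = {b} := by
    apply Finset.eq_singleton_iff_unique_mem.mpr
    constructor
    · simp [canonSet]
    · intro z hz
      simp only [canonSet, Finset.mem_filter, Finset.mem_univ, true_and] at hz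
      funext i; exact hz i (Finset.notMem_empty i)
  rw [hcanon, Finset.sum_singleton, margVal_empty hp0 hp1, Real.negMulLog_one]

/-- Master identity: `Hent p F = -∑ x, p x * log (margVal p F x)`. -/
lemma Hent_master (hp0 : ∀ x, 0 ≤ p x) (F : Finset (Fin n)) :
    Hent p F = -∑ x : ∀ i, 𝒳 i, p x * Real.log (margVal p F x) := by
  classical
  obtain ⟨b⟩ : Nonempty (∀ i, 𝒳 i) := ⟨fun i => Classical.arbitrary _⟩
  rw [grouping p F b (fun x => Real.log (margVal p F x))
    (fun x x' h => by rw [margVal_congr p h]), Hent_eq_canon p F b]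
  rw [← Finset.sum_neg_distrib]
  apply Finset.sum_congr rfl
  intro z _
  rw [Real.negMulLog]
  ring

end Master

section Mono

variable {p : (∀ i, 𝒳 i) → ℝ} (hp0 : ∀ x, 0 ≤ p x)
include hp0

lemma Hent_mono {F G : Finset (Fin n)} (h : F ⊆ G) : Hent p F ≤ Hent p G := by
  rw [Hent_master p hp0 F, Hent_master p hp0 G]
  apply neg_le_neg
  apply Finset.sum_le_sum
  intro x _
  rcases eq_or_lt_of_le (hp0 x) with hx | hx
  · simp [← hx]
  · apply mul_le_mul_of_nonneg_left _ (hp0 x)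
    apply Real.log_le_log (lt_of_lt_of_le hx (self_le_margVal hp0 G x))
    exact margVal_anti hp0 h x

end Mono

section Refine

variable (p : (∀ i, 𝒳 i) → ℝ)

lemma canonSet_empty (b : ∀ i, 𝒳 i) : canonSet (∅ : Finset (Fin n)) b = {b} := by
  apply Finset.eq_singleton_iff_unique_mem.mpr
  constructor
  · simp [canonSet]
  · intro z hz
    simp only [canonSet, Finset.mem_filter, Finset.mem_univ, true_and] at hz
    funext i; exact hz i (Finset.notMem_empty i)

lemma canon_insert_sum (ψ : (∀ i, 𝒳 i) → ℝ) {j : Fin n} {D : Finset (Fin n)} (hj : j ∉ D)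
    (b : ∀ i, 𝒳 i) :
    ∑ z ∈ canonSet (insert j D) b, ψ z
      = ∑ w ∈ canonSet D b, ∑ a : 𝒳 j, ψ (Function.update w j a) := by
  classical
  rw [← Finset.sum_product']
  apply Finset.sum_nbij' (i := fun z => ((Function.update z j (b j), z j) : (∀ i, 𝒳 i) × 𝒳 j))
    (j := fun w => Function.update w.1 j w.2)
  · intro z hz
    simp only [canonSet, Finset.mem_filter, Finset.mem_univ, true_and] at hz
    simp only [Finset.mem_product, Finset.mem_univ, and_true]
    simp only [canonSet, Finset.mem_filter, Finset.mem_univ, true_and]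
    intro i hi
    by_cases hij : i = j
    · subst hij; simp
    · rw [Function.update_of_ne hij]
      exact hz i (by simp [hij, hi])
  · intro w hw
    simp only [Finset.mem_product] at hw
    simp only [canonSet, Finset.mem_filter, Finset.mem_univ, true_and] at hw ⊢
    intro i hi
    have hij : i ≠ j := fun e => hi (e ▸ Finset.mem_insert_self j D)
    rw [Function.update_of_ne hij]
    exact hw.1 i (fun hiD => hi (Finset.mem_insert_of_mem hiD))
  · intro z _
    funext i
    by_cases hij : i = j
    · subst hij; simp
    · simp [Function.update_of_ne hij]
  · intro w hw
    simp only [Finset.mem_product] at hw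
    simp only [canonSet, Finset.mem_filter, Finset.mem_univ, true_and] at hw
    have h1 : Function.update w.1 j w.2 j = w.2 := by simp
    have h2 : Function.update (Function.update w.1 j w.2) j (b j) = w.1 := by
      funext i
      by_cases hij : i = j
      · subst hij; simp [(hw.1 _ hj).symm]
      · simp [Function.update_of_ne hij]
    rw [h1, h2]
  · intro z _
    congr 1
    funext i
    by_cases hij : i = j
    · subst hij; simp
    · simp [Function.update_of_ne hij]

lemma margVal_insert_sum {i : Fin n} {V : Finset (Fin n)} (hiV : i ∉ V) (w : ∀ i, 𝒳 i) :
    ∑ a : 𝒳 i, margVal p (insert i V) (Function.update w i a) = margVal p V w := by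
  classical
  have key : ∀ a : 𝒳 i, margVal p (insert i V) (Function.update w i a)
      = ∑ ω ∈ (Finset.univ.filter (fun ω : ∀ l, 𝒳 l => ∀ l ∈ V, ω l = w l)).filter
          (fun ω => ω i = a), p ω := by
    intro a
    unfold margVal
    rw [Finset.filter_filter]
    apply Finset.sum_congr _ (fun _ _ => rfl)
    apply Finset.filter_congr
    intro ω _
    constructor
    · intro h
      constructor
      · intro l hl
        have hli : l ≠ i := fun e => hiV (e ▸ hl)
        have := h l (Finset.mem_insert_of_mem hl)
        rwa [Function.update_of_ne hli] at this
      · simpa using h i (Finset.mem_insert_self i V)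
    · rintro ⟨h1, h2⟩ l hl
      rcases Finset.mem_insert.mp hl with rfl | hl
      · simpa using h2
      · have hli : l ≠ i := fun e => hiV (e ▸ hl)
        rw [h1 l hl, Function.update_of_ne hli]
  calc ∑ a : 𝒳 i, margVal p (insert i V) (Function.update w i a)
      = ∑ a : 𝒳 i, ∑ ω ∈ (Finset.univ.filter (fun ω : ∀ l, 𝒳 l => ∀ l ∈ V, ω l = w l)).filter
          (fun ω => ω i = a), p ω := Finset.sum_congr rfl fun a _ => key a
    _ = margVal p V w := by
        rw [Finset.sum_fiberwise (Finset.univ.filter fun ω : ∀ l, 𝒳 l => ∀ l ∈ V, ω l = w l)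
          (fun ω => ω i) p]
        rfl

lemma prodPmf_sum (g : ∀ i : Fin n, 𝒳 i → ℝ) (D : Finset (Fin n))
    (hg : ∀ i ∈ D, ∑ a : 𝒳 i, g i a = 1) (b : ∀ i, 𝒳 i) :
    ∑ z ∈ canonSet D b, ∏ i ∈ D, g i (z i) = 1 := by
  classical
  induction D using Finset.induction_on with
  | empty => simp [canonSet_empty]
  | @insert j D hj ih =>
    rw [canon_insert_sum _ hj b]
    have : ∀ w ∈ canonSet D b, ∑ a : 𝒳 j, ∏ i ∈ insert j D, g i (Function.update w j a i)
        = ∏ i ∈ D, g i (w i) := by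
      intro w _
      have hterm : ∀ a : 𝒳 j, ∏ i ∈ insert j D, g i (Function.update w j a i)
          = g j a * ∏ i ∈ D, g i (w i) := by
        intro a
        rw [Finset.prod_insert hj]
        congr 1
        · simp
        · apply Finset.prod_congr rfl
          intro i hi
          have : i ≠ j := fun e => hj (e ▸ hi)
          rw [Function.update_of_ne this]
      rw [Finset.sum_congr rfl (fun a _ => hterm a), ← Finset.sum_mul,
        hg j (Finset.mem_insert_self j D), one_mul]
    rw [Finset.sum_congr rfl this]
    exact ih (fun i hi => hg i (Finset.mem_insert_of_mem hi))

end Refine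

section Submod

variable {p : (∀ i, 𝒳 i) → ℝ} (hp0 : ∀ x, 0 ≤ p x) (hp1 : ∑ x : ∀ i, 𝒳 i, p x = 1)
include hp0 hp1

lemma Hent_submod {V U : Finset (Fin n)} {i : Fin n} (hVU : V ⊆ U) (hiU : i ∉ U) :
    Hent p (insert i U) - Hent p U ≤ Hent p (insert i V) - Hent p V := by
  classical
  obtain ⟨b⟩ : Nonempty (∀ i, 𝒳 i) := ⟨fun i => Classical.arbitrary _⟩
  have hiV : i ∉ V := fun h => hiU (hVU h)
  have hVU' : insert i V ⊆ insert i U := Finset.insert_subset_insert _ hVU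
  set r : (∀ l, 𝒳 l) → ℝ := fun x =>
    margVal p U x * margVal p (insert i V) x / (margVal p (insert i U) x * margVal p V x)
    with hr
  have hrlocal : ∀ x x', (∀ l ∈ insert i U, x l = x' l) → r x = r x' := by
    intro x x' h
    have h1 : ∀ l ∈ U, x l = x' l := fun l hl => h l (Finset.mem_insert_of_mem hl)
    have h2 : ∀ l ∈ V, x l = x' l := fun l hl => h1 l (hVU hl)
    have h3 : ∀ l ∈ insert i V, x l = x' l := fun l hl => h l (hVU' hl)
    rw [hr]; simp only []
    rw [margVal_congr p h1, margVal_congr p h2, margVal_congr p h3, margVal_congr p h]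
  have step1 : ∑ x : ∀ l, 𝒳 l, p x * r x ≤ 1 := by
    rw [grouping p (insert i U) b r hrlocal]
    have bound : ∀ z, margVal p (insert i U) z * r z
        ≤ margVal p U z * margVal p (insert i V) z / margVal p V z := by
      intro z
      rcases eq_or_lt_of_le (margVal_nonneg hp0 (insert i U) z) with h0 | h0
      · rw [← h0, zero_mul]
        exact div_nonneg (mul_nonneg (margVal_nonneg hp0 _ _) (margVal_nonneg hp0 _ _))
          (margVal_nonneg hp0 _ _)
      · have hmU : 0 < margVal p U z :=
          lt_of_lt_of_le h0 (margVal_anti hp0 (Finset.subset_insert i U) z)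
        have hmV : 0 < margVal p V z := lt_of_lt_of_le hmU (margVal_anti hp0 hVU z)
        have : margVal p (insert i U) z * r z
            = margVal p U z * margVal p (insert i V) z / margVal p V z := by
          rw [hr]; simp only []
          field_simp
        rw [this]
    calc ∑ z ∈ canonSet (insert i U) b, margVal p (insert i U) z * r z
        ≤ ∑ z ∈ canonSet (insert i U) b,
            margVal p U z * margVal p (insert i V) z / margVal p V z :=
          Finset.sum_le_sum (fun z _ => bound z)
      _ = ∑ w ∈ canonSet U b, ∑ a : 𝒳 i,
            margVal p U (Function.update w i a) * margVal p (insert i V) (Function.update w i a)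
              / margVal p V (Function.update w i a) :=
          canon_insert_sum _ hiU b
      _ ≤ ∑ w ∈ canonSet U b, margVal p U w := by
          apply Finset.sum_le_sum
          intro w _
          have hUcongr : ∀ a : 𝒳 i, margVal p U (Function.update w i a) = margVal p U w := by
            intro a
            apply margVal_congr
            intro l hl
            exact Function.update_of_ne (fun (e : l = i) => hiU (e ▸ hl)) a w
          have hVcongr : ∀ a : 𝒳 i, margVal p V (Function.update w i a) = margVal p V w := by
            intro a
            apply margVal_congr
            intro l hl
            exact Function.update_of_ne (fun (e : l = i) => hiV (e ▸ hl)) a w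
          have hsum : ∑ a : 𝒳 i, margVal p (insert i V) (Function.update w i a)
              = margVal p V w := margVal_insert_sum p hiV w
          calc ∑ a : 𝒳 i, margVal p U (Function.update w i a)
                * margVal p (insert i V) (Function.update w i a)
                / margVal p V (Function.update w i a)
              = ∑ a : 𝒳 i, margVal p U w * margVal p (insert i V) (Function.update w i a)
                / margVal p V w :=
              Finset.sum_congr rfl (fun a _ => by rw [hUcongr a, hVcongr a])
            _ = margVal p U w * margVal p V w / margVal p V w := by
                rw [← Finset.sum_div, ← Finset.mul_sum, hsum]
            _ ≤ margVal p U w := by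
                rcases eq_or_ne (margVal p V w) 0 with h0 | h0
                · rw [h0, div_zero]
                  exact margVal_nonneg hp0 _ _
                · rw [mul_div_assoc, div_self h0, mul_one]
      _ = 1 := canon_sum_margVal p hp1 U b
  -- main estimate
  have key : ∑ x : ∀ l, 𝒳 l, p x * (Real.log (margVal p U x)
      + Real.log (margVal p (insert i V) x) - Real.log (margVal p (insert i U) x)
      - Real.log (margVal p V x)) ≤ 0 := by
    have hterm : ∀ x : ∀ l, 𝒳 l, p x * (Real.log (margVal p U x)
        + Real.log (margVal p (insert i V) x) - Real.log (margVal p (insert i U) x)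
        - Real.log (margVal p V x)) ≤ p x * (r x - 1) := by
      intro x
      rcases eq_or_lt_of_le (hp0 x) with h0 | h0
      · rw [← h0, zero_mul, zero_mul]
      · have hiU' : 0 < margVal p (insert i U) x :=
          lt_of_lt_of_le h0 (self_le_margVal hp0 _ x)
        have hU' : 0 < margVal p U x :=
          lt_of_lt_of_le hiU' (margVal_anti hp0 (Finset.subset_insert i U) x)
        have hV' : 0 < margVal p V x := lt_of_lt_of_le hU' (margVal_anti hp0 hVU x)
        have hiV' : 0 < margVal p (insert i V) x :=
          lt_of_lt_of_le h0 (self_le_margVal hp0 _ x)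
        have hrpos : 0 < r x := by
          rw [hr]; simp only []
          positivity
        have hlog : Real.log (margVal p U x) + Real.log (margVal p (insert i V) x)
            - Real.log (margVal p (insert i U) x) - Real.log (margVal p V x)
            = Real.log (r x) := by
          rw [hr]; simp only []
          rw [Real.log_div (by positivity) (by positivity),
            Real.log_mul (ne_of_gt hU') (ne_of_gt hiV'),
            Real.log_mul (ne_of_gt hiU') (ne_of_gt hV')]
          ring
        rw [hlog]
        exact mul_le_mul_of_nonneg_left (Real.log_le_sub_one_of_pos hrpos) (le_of_lt h0)
    calc ∑ x : ∀ l, 𝒳 l, p x * (Real.log (margVal p U x)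
        + Real.log (margVal p (insert i V) x) - Real.log (margVal p (insert i U) x)
        - Real.log (margVal p V x))
        ≤ ∑ x : ∀ l, 𝒳 l, p x * (r x - 1) := Finset.sum_le_sum (fun x _ => hterm x)
      _ = (∑ x : ∀ l, 𝒳 l, p x * r x) - ∑ x : ∀ l, 𝒳 l, p x := by
          rw [← Finset.sum_sub_distrib]
          exact Finset.sum_congr rfl (fun x _ => by ring)
      _ = (∑ x : ∀ l, 𝒳 l, p x * r x) - 1 := by rw [hp1]
      _ ≤ 0 := by linarith
  rw [Hent_master p hp0 U, Hent_master p hp0 V, Hent_master p hp0 (insert i U),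
    Hent_master p hp0 (insert i V)]
  have expand : ∑ x : ∀ l, 𝒳 l, p x * (Real.log (margVal p U x)
      + Real.log (margVal p (insert i V) x) - Real.log (margVal p (insert i U) x)
      - Real.log (margVal p V x))
      = (∑ x : ∀ l, 𝒳 l, p x * Real.log (margVal p U x))
        + (∑ x : ∀ l, 𝒳 l, p x * Real.log (margVal p (insert i V) x))
        - (∑ x : ∀ l, 𝒳 l, p x * Real.log (margVal p (insert i U) x))
        - (∑ x : ∀ l, 𝒳 l, p x * Real.log (margVal p V x)) := by
    simp only [mul_add, mul_sub]
    rw [Finset.sum_sub_distrib, Finset.sum_sub_distrib, Finset.sum_add_distrib]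
  rw [expand] at key
  linarith

end Submod

section Delta

variable (p : (∀ i, 𝒳 i) → ℝ) {ι : Type} [Fintype ι] (S : ι → Finset (Fin n)) (α : ι → ℚ)

/-- The Shearer slack functional. -/
noncomputable def Delta (W : Finset (Fin n)) : ℝ :=
  (∑ k : ι, (α k : ℝ) * Hent p (S k ∩ W)) - Hent p W

lemma Delta_insert {W : Finset (Fin n)} {i : Fin n} (hiW : i ∉ W) :
    Delta p S α (insert i W) - Delta p S α W
      = (∑ k ∈ Finset.univ.filter (fun k => i ∈ S k), (α k : ℝ) *
          ((Hent p (insert i (S k ∩ W)) - Hent p (S k ∩ W))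
            - (Hent p (insert i W) - Hent p W)))
        + ((∑ k ∈ Finset.univ.filter (fun k => i ∈ S k), (α k : ℝ)) - 1)
          * (Hent p (insert i W) - Hent p W) := by
  classical
  have hsplit : ∀ k : ι,
      (if i ∈ S k then (α k : ℝ) * (Hent p (insert i (S k ∩ W)) - Hent p (S k ∩ W)) else 0)
      = (α k : ℝ) * Hent p (S k ∩ insert i W) - (α k : ℝ) * Hent p (S k ∩ W) := by
    intro k
    by_cases hk : i ∈ S k
    · rw [if_pos hk, Finset.inter_insert_of_mem hk]
      ring
    · rw [if_neg hk, Finset.inter_insert_of_notMem hk]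
      ring
  have h1 : Delta p S α (insert i W) - Delta p S α W
      = (∑ k ∈ Finset.univ.filter (fun k => i ∈ S k),
          (α k : ℝ) * (Hent p (insert i (S k ∩ W)) - Hent p (S k ∩ W)))
        - (Hent p (insert i W) - Hent p W) := by
    unfold Delta
    rw [Finset.sum_filter, Finset.sum_congr rfl (fun k _ => hsplit k),
      Finset.sum_sub_distrib]
    ring
  rw [h1]
  have e1 : ∑ k ∈ Finset.univ.filter (fun k => i ∈ S k), (α k : ℝ) *
      ((Hent p (insert i (S k ∩ W)) - Hent p (S k ∩ W))
        - (Hent p (insert i W) - Hent p W))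
      = (∑ k ∈ Finset.univ.filter (fun k => i ∈ S k),
          (α k : ℝ) * (Hent p (insert i (S k ∩ W)) - Hent p (S k ∩ W)))
        - (∑ k ∈ Finset.univ.filter (fun k => i ∈ S k), (α k : ℝ))
          * (Hent p (insert i W) - Hent p W) := by
    rw [Finset.sum_mul, ← Finset.sum_sub_distrib]
    exact Finset.sum_congr rfl fun k _ => by ring
  rw [e1]
  ring

variable {p} (hp0 : ∀ x, 0 ≤ p x) (hp1 : ∑ x : ∀ i, 𝒳 i, p x = 1)
  (hpos : ∀ k, 0 < α k)
  (hcov : ∀ i : Fin n, 1 ≤ ∑ k ∈ Finset.univ.filter (fun k => i ∈ S k), α k)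
include hp0 hp1 hpos hcov

lemma Delta_le_insert {W : Finset (Fin n)} {i : Fin n} (hiW : i ∉ W) :
    Delta p S α W ≤ Delta p S α (insert i W) := by
  have hkey := Delta_insert p S α hiW
  have hterm : ∀ k ∈ Finset.univ.filter (fun k => i ∈ S k), (0:ℝ) ≤ (α k : ℝ) *
      ((Hent p (insert i (S k ∩ W)) - Hent p (S k ∩ W))
        - (Hent p (insert i W) - Hent p W)) := by
    intro k hk
    simp only [Finset.mem_filter] at hk
    apply mul_nonneg (by exact_mod_cast (hpos k).le)
    have := Hent_submod hp0 hp1 (Finset.inter_subset_right (s₁ := S k) (s₂ := W)) hiW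
    linarith
  have hc : (1:ℝ) ≤ ∑ k ∈ Finset.univ.filter (fun k => i ∈ S k), (α k : ℝ) := by
    exact_mod_cast hcov i
  have hmono : 0 ≤ Hent p (insert i W) - Hent p W := by
    have := Hent_mono hp0 (Finset.subset_insert i W)
    linarith
  have h1 : 0 ≤ ∑ k ∈ Finset.univ.filter (fun k => i ∈ S k), (α k : ℝ) *
      ((Hent p (insert i (S k ∩ W)) - Hent p (S k ∩ W))
        - (Hent p (insert i W) - Hent p W)) := Finset.sum_nonneg hterm
  nlinarith [hkey]

lemma Delta_mono {W W' : Finset (Fin n)} (h : W ⊆ W') : Delta p S α W ≤ Delta p S α W' := by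
  classical
  have key : ∀ m : ℕ, ∀ W, W ⊆ W' → (W' \ W).card = m → Delta p S α W ≤ Delta p S α W' := by
    intro m
    induction m with
    | zero =>
      intro W h hcard
      have hempty : W' \ W = ∅ := Finset.card_eq_zero.mp hcard
      have hWW : W = W' := Finset.Subset.antisymm h (fun x hx => by
        by_contra hxW
        exact Finset.notMem_empty x (hempty ▸ Finset.mem_sdiff.mpr ⟨hx, hxW⟩))
      rw [hWW]
    | succ m ih =>
      intro W h hcard
      have hne : (W' \ W).Nonempty := by
        rw [← Finset.card_pos, hcard]; omega
      obtain ⟨i, hi⟩ := hne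
      rw [Finset.mem_sdiff] at hi
      refine le_trans (Delta_le_insert S α hp0 hp1 hpos hcov hi.2) (ih _ ?_ ?_)
      · exact Finset.insert_subset hi.1 h
      · have hset : W' \ insert i W = (W' \ W).erase i := by
          ext x
          simp only [Finset.mem_sdiff, Finset.mem_erase, Finset.mem_insert, not_or]
          tauto
        rw [hset, Finset.card_erase_of_mem (Finset.mem_sdiff.mpr hi), hcard]
        omega
  exact key _ W h rfl

variable (heq : ∑ k : ι, (α k : ℝ) * Hent p (S k) = Hent p Finset.univ)
include heq

lemma Delta_zero (W : Finset (Fin n)) : Delta p S α W = 0 := by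
  have huniv : Delta p S α Finset.univ = 0 := by
    unfold Delta
    rw [Finset.sum_congr rfl (fun k _ => by rw [Finset.inter_univ] :
      ∀ k ∈ Finset.univ, (α k : ℝ) * Hent p (S k ∩ Finset.univ) = (α k : ℝ) * Hent p (S k))]
    rw [heq, sub_self]
  have hempty : Delta p S α (∅ : Finset (Fin n)) = 0 := by
    unfold Delta
    simp [Finset.inter_empty, Hent_empty p hp0 hp1]
  have h1 := Delta_mono S α hp0 hp1 hpos hcov (Finset.empty_subset W)
  have h2 := Delta_mono S α hp0 hp1 hpos hcov (Finset.subset_univ W)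
  rw [hempty] at h1
  rw [huniv] at h2
  linarith

lemma eq_conditions {W : Finset (Fin n)} {i : Fin n} (hiW : i ∉ W) :
    (∀ k, i ∈ S k → Hent p (insert i (S k ∩ W)) - Hent p (S k ∩ W)
        = Hent p (insert i W) - Hent p W)
    ∧ ((1 : ℚ) < (∑ k ∈ Finset.univ.filter (fun k => i ∈ S k), α k) →
        Hent p (insert i W) = Hent p W) := by
  classical
  have hkey := Delta_insert p S α hiW
  rw [Delta_zero S α hp0 hp1 hpos hcov heq (insert i W),
    Delta_zero S α hp0 hp1 hpos hcov heq W, sub_self] at hkey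
  have hmono : 0 ≤ Hent p (insert i W) - Hent p W :=
    sub_nonneg.mpr (Hent_mono hp0 (Finset.subset_insert i W))
  have hterm : ∀ k ∈ Finset.univ.filter (fun k => i ∈ S k), (0:ℝ) ≤ (α k : ℝ) *
      ((Hent p (insert i (S k ∩ W)) - Hent p (S k ∩ W))
        - (Hent p (insert i W) - Hent p W)) := by
    intro k hk
    apply mul_nonneg (by exact_mod_cast (hpos k).le)
    have := Hent_submod hp0 hp1 (Finset.inter_subset_right (s₁ := S k) (s₂ := W)) hiW
    linarith
  have hT1 : 0 ≤ ∑ k ∈ Finset.univ.filter (fun k => i ∈ S k), (α k : ℝ) *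
      ((Hent p (insert i (S k ∩ W)) - Hent p (S k ∩ W))
        - (Hent p (insert i W) - Hent p W)) := Finset.sum_nonneg hterm
  have hc : (1:ℝ) ≤ ∑ k ∈ Finset.univ.filter (fun k => i ∈ S k), (α k : ℝ) := by
    exact_mod_cast hcov i
  have hT2 : 0 ≤ ((∑ k ∈ Finset.univ.filter (fun k => i ∈ S k), (α k : ℝ)) - 1)
      * (Hent p (insert i W) - Hent p W) := mul_nonneg (by linarith) hmono
  have hT1z : ∑ k ∈ Finset.univ.filter (fun k => i ∈ S k), (α k : ℝ) *
      ((Hent p (insert i (S k ∩ W)) - Hent p (S k ∩ W))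
        - (Hent p (insert i W) - Hent p W)) = 0 := by linarith
  have hT2z : ((∑ k ∈ Finset.univ.filter (fun k => i ∈ S k), (α k : ℝ)) - 1)
      * (Hent p (insert i W) - Hent p W) = 0 := by linarith
  constructor
  · intro k hk
    have hz := (Finset.sum_eq_zero_iff_of_nonneg hterm).mp hT1z k
      (Finset.mem_filter.mpr ⟨Finset.mem_univ k, hk⟩)
    have hα : (0:ℝ) < (α k : ℝ) := by exact_mod_cast hpos k
    rcases mul_eq_zero.mp hz with h' | h'
    · exact absurd h' (ne_of_gt hα)
    · linarith
  · intro hlt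
    have hlt' : (1:ℝ) < ∑ k ∈ Finset.univ.filter (fun k => i ∈ S k), (α k : ℝ) := by
      exact_mod_cast hlt
    rcases mul_eq_zero.mp hT2z with h' | h'
    · linarith
    · linarith

end Delta

section Indep

variable {p : (∀ i, 𝒳 i) → ℝ} {ι : Type} [Fintype ι] {S : ι → Finset (Fin n)} {α : ι → ℚ}

lemma Hent_sum_singletons
    (hp0 : ∀ x, 0 ≤ p x) (hp1 : ∑ x : ∀ i, 𝒳 i, p x = 1)
    (hpos : ∀ k, 0 < α k)
    (hcov : ∀ i : Fin n, 1 ≤ ∑ k ∈ Finset.univ.filter (fun k => i ∈ S k), α k)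
    (hsep : ∀ i j : Fin n, i ≠ j → ¬ (∀ k, i ∈ S k ↔ j ∈ S k))
    (heq : ∑ k : ι, (α k : ℝ) * Hent p (S k) = Hent p Finset.univ)
    (W : Finset (Fin n)) : Hent p W = ∑ i ∈ W, Hent p {i} := by
  classical
  have key : ∀ m : ℕ, ∀ W : Finset (Fin n), W.card ≤ m → Hent p W = ∑ i ∈ W, Hent p {i} := by
    intro m
    induction m with
    | zero =>
      intro W hW
      have : W = ∅ := Finset.card_eq_zero.mp (Nat.le_zero.mp hW)
      subst this
      simp [Hent_empty p hp0 hp1]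
    | succ m ih =>
      intro W hW
      rcases le_or_gt W.card 1 with hc1 | hc1
      · interval_cases h : W.card
        · have : W = ∅ := Finset.card_eq_zero.mp h
          subst this
          simp [Hent_empty p hp0 hp1]
        · obtain ⟨a, ha⟩ := Finset.card_eq_one.mp h
          subst ha
          simp
      · obtain ⟨i, hiW, j, hjW, hij⟩ := Finset.one_lt_card.mp hc1
        have main : ∀ i j : Fin n, ∀ k : ι, i ∈ W → j ∈ W → i ≠ j → i ∈ S k → j ∉ S k →
            Hent p W = ∑ l ∈ W, Hent p {l} := by
          intro i j k hiW hjW hij hik hjk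
          set U := W.erase i with hU
          have hiU : i ∉ U := Finset.notMem_erase i W
          have hWU : insert i U = W := Finset.insert_erase hiW
          have hUcard : U.card ≤ m := by
            rw [hU, Finset.card_erase_of_mem hiW]
            omega
          set V := S k ∩ U with hV
          have hjV : j ∉ V := fun hj => hjk (Finset.mem_of_mem_inter_left hj)
          have hiV : i ∉ V := fun hi => hiU (Finset.mem_of_mem_inter_right hi)
          have hViU : insert i V ⊆ W := by
            rw [← hWU]
            exact Finset.insert_subset_insert i (Finset.inter_subset_right)
          have hjiV : j ∉ insert i V := by
            simp only [Finset.mem_insert]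
            rintro (rfl | hj)
            · exact hij rfl
            · exact hjV hj
          have hiVcard : (insert i V).card ≤ m := by
            have hsub : insert i V ⊆ W.erase j :=
              fun x hx => Finset.mem_erase.mpr ⟨fun e => hjiV (e ▸ hx), hViU hx⟩
            calc (insert i V).card ≤ (W.erase j).card := Finset.card_le_card hsub
              _ = W.card - 1 := Finset.card_erase_of_mem hjW
              _ ≤ m := by omega
          have hVcard : V.card ≤ m :=
            le_trans (Finset.card_le_card (Finset.subset_insert i V)) hiVcard
          have eqc := (eq_conditions S α hp0 hp1 hpos hcov heq hiU).1 k hik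
          rw [← hV] at eqc
          have e1 : Hent p W = Hent p U + (Hent p (insert i V) - Hent p V) := by
            rw [← hWU]
            linarith [eqc]
          rw [e1, ih U hUcard, ih (insert i V) hiVcard, ih V hVcard,
            Finset.sum_insert hiV, ← hWU, Finset.sum_insert hiU]
          ring
        have hsep' := hsep i j hij
        have hcases : (∃ k, i ∈ S k ∧ j ∉ S k) ∨ (∃ k, j ∈ S k ∧ i ∉ S k) := by
          by_contra hcon
          push_neg at hcon
          exact hsep' (fun k => ⟨hcon.1 k, hcon.2 k⟩)
        rcases hcases with ⟨k, h1, h2⟩ | ⟨k, h1, h2⟩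
        · exact main i j k hiW hjW hij h1 h2
        · exact main j i k hjW hiW hij.symm h1 h2
  exact key W.card W le_rfl

end Indep

section Gibbs

variable {p : (∀ i, 𝒳 i) → ℝ}

lemma single_sum_one (hp0 : ∀ x, 0 ≤ p x) (hp1 : ∑ x : ∀ i, 𝒳 i, p x = 1)
    (i : Fin n) (b : ∀ l, 𝒳 l) :
    ∑ a : 𝒳 i, margVal p {i} (Function.update b i a) = 1 := by
  have h := margVal_insert_sum p (V := (∅ : Finset (Fin n))) (i := i)
    (Finset.notMem_empty i) b
  have he : insert i (∅ : Finset (Fin n)) = {i} := rfl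
  rw [he] at h
  rw [h, margVal_empty hp0 hp1]

lemma gibbs_factorize (hp0 : ∀ x, 0 ≤ p x) (hp1 : ∑ x : ∀ i, 𝒳 i, p x = 1)
    (A : Finset (Fin n)) (hent : Hent p A = ∑ i ∈ A, Hent p {i}) :
    ∀ x, margVal p A x = ∏ i ∈ A, margVal p {i} x := by
  classical
  obtain ⟨b⟩ : Nonempty (∀ i, 𝒳 i) := ⟨fun i => Classical.arbitrary _⟩
  set q : (∀ l, 𝒳 l) → ℝ := fun x => ∏ i ∈ A, margVal p {i} x with hq
  have hqlocal : ∀ x x', (∀ l ∈ A, x l = x' l) → q x = q x' := by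
    intro x x' h
    apply Finset.prod_congr rfl
    intro i hi
    apply margVal_congr
    intro l hl
    rw [Finset.mem_singleton] at hl
    subst hl
    exact h l hi
  have hqnonneg : ∀ x, 0 ≤ q x :=
    fun x => Finset.prod_nonneg (fun i _ => margVal_nonneg hp0 _ _)
  have hqsum : ∑ z ∈ canonSet A b, q z = 1 := by
    have hg : ∀ i ∈ A, ∑ a : 𝒳 i, margVal p {i} (Function.update b i a) = 1 :=
      fun i _ => single_sum_one hp0 hp1 i b
    have hps := prodPmf_sum (fun i a => margVal p {i} (Function.update b i a)) A hg b
    rw [← hps]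
    apply Finset.sum_congr rfl
    intro z hz
    apply Finset.prod_congr rfl
    intro i hi
    apply margVal_congr
    intro l hl
    rw [Finset.mem_singleton] at hl
    subst hl
    simp
  have hsum_single : ∑ i ∈ A, Hent p {i}
      = -∑ x : ∀ l, 𝒳 l, p x * ∑ i ∈ A, Real.log (margVal p {i} x) := by
    calc ∑ i ∈ A, Hent p {i}
        = ∑ i ∈ A, -∑ x : ∀ l, 𝒳 l, p x * Real.log (margVal p {i} x) :=
          Finset.sum_congr rfl (fun i _ => Hent_master p hp0 {i})
      _ = -∑ i ∈ A, ∑ x : ∀ l, 𝒳 l, p x * Real.log (margVal p {i} x) := by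
          rw [Finset.sum_neg_distrib]
      _ = -∑ x : ∀ l, 𝒳 l, ∑ i ∈ A, p x * Real.log (margVal p {i} x) := by
          rw [Finset.sum_comm]
      _ = -∑ x : ∀ l, 𝒳 l, p x * ∑ i ∈ A, Real.log (margVal p {i} x) := by
          congr 1
          exact Finset.sum_congr rfl (fun x _ => (Finset.mul_sum _ _ _).symm)
  have hE : ∑ x : ∀ l, 𝒳 l, p x * (Real.log (margVal p A x)
      - ∑ i ∈ A, Real.log (margVal p {i} x)) = 0 := by
    have h1 := Hent_master p hp0 A
    rw [h1, hsum_single] at hent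
    have h2 : ∑ x : ∀ l, 𝒳 l, p x * Real.log (margVal p A x)
        = ∑ x : ∀ l, 𝒳 l, p x * ∑ i ∈ A, Real.log (margVal p {i} x) := by linarith
    calc ∑ x : ∀ l, 𝒳 l, p x * (Real.log (margVal p A x)
        - ∑ i ∈ A, Real.log (margVal p {i} x))
        = ∑ x : ∀ l, 𝒳 l, (p x * Real.log (margVal p A x)
          - p x * ∑ i ∈ A, Real.log (margVal p {i} x)) :=
          Finset.sum_congr rfl (fun x _ => by ring)
      _ = 0 := by rw [Finset.sum_sub_distrib, h2, sub_self]
  have hterm : ∀ x : ∀ l, 𝒳 l, p x * (1 - q x / margVal p A x)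
      ≤ p x * (Real.log (margVal p A x) - ∑ i ∈ A, Real.log (margVal p {i} x)) := by
    intro x
    rcases eq_or_lt_of_le (hp0 x) with h0 | h0
    · rw [← h0, zero_mul, zero_mul]
    · have hP : 0 < margVal p A x := lt_of_lt_of_le h0 (self_le_margVal hp0 A x)
      have hm : ∀ i ∈ A, 0 < margVal p {i} x :=
        fun i _ => lt_of_lt_of_le h0 (self_le_margVal hp0 {i} x)
      have hqpos : 0 < q x := Finset.prod_pos (fun i hi => hm i hi)
      have hlogq : ∑ i ∈ A, Real.log (margVal p {i} x) = Real.log (q x) := by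
        rw [hq]
        exact (Real.log_prod (s := A) (fun i hi => ne_of_gt (hm i hi))).symm
      rw [hlogq]
      apply mul_le_mul_of_nonneg_left _ (le_of_lt h0)
      have hlog := Real.log_le_sub_one_of_pos (div_pos hqpos hP)
      have hld : Real.log (q x / margVal p A x)
          = Real.log (q x) - Real.log (margVal p A x) :=
        Real.log_div (ne_of_gt hqpos) (ne_of_gt hP)
      rw [hld] at hlog
      linarith
  have hT : ∑ x : ∀ l, 𝒳 l, p x * (q x / margVal p A x) ≤ 1 := by
    rw [grouping p A b (fun x => q x / margVal p A x)
      (fun x x' h => by rw [hqlocal x x' h, margVal_congr p h])]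
    rw [← hqsum]
    apply Finset.sum_le_sum
    intro z _
    rcases eq_or_ne (margVal p A z) 0 with h0 | h0
    · rw [h0, zero_mul]
      exact hqnonneg z
    · rw [mul_div_cancel₀ _ h0]
  have hone : ∑ x : ∀ l, 𝒳 l, p x * (1 - q x / margVal p A x)
      = 1 - ∑ x : ∀ l, 𝒳 l, p x * (q x / margVal p A x) := by
    have he : ∑ x : ∀ l, 𝒳 l, p x * (1 - q x / margVal p A x)
        = (∑ x : ∀ l, 𝒳 l, p x) - ∑ x : ∀ l, 𝒳 l, p x * (q x / margVal p A x) := by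
      rw [← Finset.sum_sub_distrib]
      exact Finset.sum_congr rfl fun x _ => by ring
    rw [he, hp1]
  have hs : ∑ x : ∀ l, 𝒳 l, p x * (1 - q x / margVal p A x) ≤ 0 := by
    have hss := Finset.sum_le_sum (fun x (_ : x ∈ (Finset.univ : Finset (∀ l, 𝒳 l))) => hterm x)
    rw [hE] at hss
    exact hss
  have hzero1 : ∑ x : ∀ l, 𝒳 l, p x * (1 - q x / margVal p A x) = 0 := by
    rw [hone] at hs ⊢
    linarith
  have hTeq : ∑ x : ∀ l, 𝒳 l, p x * (q x / margVal p A x) = 1 := by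
    rw [hone] at hzero1
    linarith
  have hsumg : ∑ x : ∀ l, 𝒳 l, (p x * (Real.log (margVal p A x)
      - ∑ i ∈ A, Real.log (margVal p {i} x)) - p x * (1 - q x / margVal p A x)) = 0 := by
    rw [Finset.sum_sub_distrib, hE, hzero1, sub_self]
  have hnn : ∀ x ∈ (Finset.univ : Finset (∀ l, 𝒳 l)), (0:ℝ) ≤ p x * (Real.log (margVal p A x)
      - ∑ i ∈ A, Real.log (margVal p {i} x)) - p x * (1 - q x / margVal p A x) :=
    fun x _ => by linarith [hterm x]
  have hgz : ∀ x : ∀ l, 𝒳 l, p x * (Real.log (margVal p A x)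
      - ∑ i ∈ A, Real.log (margVal p {i} x)) - p x * (1 - q x / margVal p A x) = 0 :=
    fun x => (Finset.sum_eq_zero_iff_of_nonneg hnn).mp hsumg x (Finset.mem_univ x)
  -- pointwise equality on the support
  have hsupp : ∀ x : ∀ l, 𝒳 l, p x ≠ 0 → margVal p A x = q x := by
    intro x hx
    have h0 : 0 < p x := lt_of_le_of_ne (hp0 x) (Ne.symm hx)
    have hP : 0 < margVal p A x := lt_of_lt_of_le h0 (self_le_margVal hp0 A x)
    have hm : ∀ i ∈ A, 0 < margVal p {i} x :=
      fun i _ => lt_of_lt_of_le h0 (self_le_margVal hp0 {i} x)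
    have hqpos : 0 < q x := Finset.prod_pos hm
    have hlogq : ∑ i ∈ A, Real.log (margVal p {i} x) = Real.log (q x) :=
      (Real.log_prod (s := A) (fun i hi => ne_of_gt (hm i hi))).symm
    have hx0 := hgz x
    rw [hlogq] at hx0
    have hfac : p x * ((Real.log (margVal p A x) - Real.log (q x))
        - (1 - q x / margVal p A x)) = 0 := by linarith [hx0]
    have hab : (Real.log (margVal p A x) - Real.log (q x))
        - (1 - q x / margVal p A x) = 0 := by
      rcases mul_eq_zero.mp hfac with h | h
      · exact absurd h hx
      · exact h
    set t : ℝ := q x / margVal p A x with ht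
    have htpos : 0 < t := div_pos hqpos hP
    have hlt : Real.log t = Real.log (q x) - Real.log (margVal p A x) :=
      Real.log_div (ne_of_gt hqpos) (ne_of_gt hP)
    have hlogt : Real.log t = t - 1 := by
      rw [hlt]
      linarith [hab]
    have ht1 : t = 1 := by
      by_contra hne
      have := Real.log_lt_sub_one_of_pos htpos hne
      linarith
    have : q x = margVal p A x := by
      rw [ht] at ht1
      exact ((div_eq_one_iff_eq (ne_of_gt hP)).mp ht1)
    linarith [this]
  -- grouped equality gives vanishing of q off the support of the marginal
  have hTgroup : ∑ z ∈ canonSet A b, margVal p A z * (q z / margVal p A z) = 1 := by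
    rw [← grouping p A b (fun x => q x / margVal p A x)
      (fun x x' h => by rw [hqlocal x x' h, margVal_congr p h])]
    exact hTeq
  have hdiff : ∑ z ∈ canonSet A b, (q z - margVal p A z * (q z / margVal p A z)) = 0 := by
    rw [Finset.sum_sub_distrib, hqsum, hTgroup, sub_self]
  have hdnn : ∀ z ∈ canonSet A b, (0:ℝ) ≤ q z - margVal p A z * (q z / margVal p A z) := by
    intro z _
    rcases eq_or_ne (margVal p A z) 0 with h0 | h0
    · rw [h0, zero_mul, sub_zero]
      exact hqnonneg z
    · rw [mul_div_cancel₀ _ h0, sub_self]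
  have hvanish : ∀ z ∈ canonSet A b, margVal p A z = 0 → q z = 0 := by
    intro z hz h0
    have := (Finset.sum_eq_zero_iff_of_nonneg hdnn).mp hdiff z hz
    rw [h0, zero_mul, sub_zero] at this
    exact this
  -- conclude for every x
  intro x
  set z : ∀ l, 𝒳 l := fun l => if l ∈ A then x l else b l with hz
  have hzA : ∀ l ∈ A, x l = z l := by
    intro l hl
    rw [hz]
    simp [hl]
  have hzcanon : z ∈ canonSet A b := by
    simp only [canonSet, Finset.mem_filter, Finset.mem_univ, true_and]
    intro l hl
    rw [hz]
    simp [hl]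
  have hPx : margVal p A x = margVal p A z := margVal_congr p hzA
  have hqx : q x = q z := hqlocal x z hzA
  show margVal p A x = q x
  rw [hPx, hqx]
  rcases eq_or_ne (margVal p A z) 0 with h0 | h0
  · rw [h0, hvanish z hzcanon h0]
  · have hex : ∃ ω ∈ Finset.univ.filter (fun ω : ∀ l, 𝒳 l => ∀ l ∈ A, ω l = z l), p ω ≠ 0 := by
      by_contra hcon
      push_neg at hcon
      exact h0 (Finset.sum_eq_zero hcon)
    obtain ⟨ω, hωmem, hωne⟩ := hex
    simp only [Finset.mem_filter, Finset.mem_univ, true_and] at hωmem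
    have h1 : margVal p A ω = margVal p A z := margVal_congr p hωmem
    have h2 : q ω = q z := hqlocal ω z hωmem
    rw [← h1, ← h2]
    exact hsupp ω hωne

end Gibbs

section Reverse

variable {p : (∀ i, 𝒳 i) → ℝ}

lemma Hent_single_eq (p : (∀ i, 𝒳 i) → ℝ) (i : Fin n) (b : ∀ l, 𝒳 l) :
    Hent p {i} = ∑ a : 𝒳 i, Real.negMulLog (margVal p {i} (Function.update b i a)) := by
  classical
  rw [Hent_eq_canon p {i} b]
  have he : ({i} : Finset (Fin n)) = insert i ∅ := rfl
  rw [he, canon_insert_sum (fun z => Real.negMulLog (margVal p (insert i ∅) z))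
    (Finset.notMem_empty i) b, canonSet_empty, Finset.sum_singleton]

lemma deterministic_of_Hent_zero (hp0 : ∀ x, 0 ≤ p x) (hp1 : ∑ x : ∀ i, 𝒳 i, p x = 1)
    {i : Fin n} (h : Hent p {i} = 0) :
    ∃ a : 𝒳 i, ∀ ω : ∀ l, 𝒳 l, p ω ≠ 0 → ω i = a := by
  classical
  obtain ⟨b⟩ : Nonempty (∀ l, 𝒳 l) := ⟨fun l => Classical.arbitrary _⟩
  set m : 𝒳 i → ℝ := fun a => margVal p {i} (Function.update b i a) with hm
  have hmsum : ∑ a : 𝒳 i, m a = 1 := single_sum_one hp0 hp1 i b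
  have hmnn : ∀ a, 0 ≤ m a := fun a => margVal_nonneg hp0 _ _
  have hmle : ∀ a, m a ≤ 1 := fun a => margVal_le_one hp0 hp1 _ _
  have hterm : ∀ a ∈ (Finset.univ : Finset (𝒳 i)), 0 ≤ Real.negMulLog (m a) :=
    fun a _ => Real.negMulLog_nonneg (hmnn a) (hmle a)
  have hzero : ∀ a, Real.negMulLog (m a) = 0 := by
    intro a
    have hh := Hent_single_eq p i b
    rw [h] at hh
    exact (Finset.sum_eq_zero_iff_of_nonneg hterm).mp hh.symm a (Finset.mem_univ a)
  have h01 : ∀ a, m a = 0 ∨ m a = 1 := by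
    intro a
    have := hzero a
    rw [Real.negMulLog, neg_mul, neg_eq_zero, mul_eq_zero] at this
    rcases this with h' | h'
    · exact Or.inl h'
    · rcases Real.log_eq_zero.mp h' with h'' | h'' | h''
      · exact Or.inl h''
      · exact Or.inr h''
      · exact Or.inl (le_antisymm (by linarith [hmnn a]) (by linarith [hmnn a])).symm
  have hex : ∃ a, m a ≠ 0 := by
    by_contra hcon
    push_neg at hcon
    rw [Finset.sum_eq_zero (fun a _ => hcon a)] at hmsum
    exact one_ne_zero hmsum.symm
  obtain ⟨a, ha⟩ := hex
  have ha1 : m a = 1 := (h01 a).resolve_left ha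
  refine ⟨a, fun ω hω => ?_⟩
  by_contra hne
  have hωm : p ω ≤ m (ω i) := by
    have h1 : margVal p {i} ω = m (ω i) := by
      apply margVal_congr
      intro l hl
      rw [Finset.mem_singleton] at hl
      subst hl
      simp
    rw [← h1]
    exact self_le_margVal hp0 {i} ω
  have hpω : 0 < p ω := lt_of_le_of_ne (hp0 ω) (Ne.symm hω)
  have hmω : m (ω i) = 1 := (h01 (ω i)).resolve_left (by linarith)
  have h2 : (2:ℝ) ≤ ∑ a : 𝒳 i, m a := by
    have hsplit : ∑ a' : 𝒳 i, m a' = m a + ∑ a' ∈ Finset.univ.erase a, m a' :=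
      (Finset.add_sum_erase Finset.univ m (Finset.mem_univ a)).symm
    have hle : m (ω i) ≤ ∑ a' ∈ Finset.univ.erase a, m a' :=
      Finset.single_le_sum (fun a' _ => hmnn a')
        (Finset.mem_erase.mpr ⟨hne, Finset.mem_univ _⟩)
    rw [hsplit, ha1]
    linarith [hmω ▸ hle]
  linarith [hmsum ▸ h2]

lemma Hent_drop (hp0 : ∀ x, 0 ≤ p x) {i : Fin n} {a : 𝒳 i}
    (ha : ∀ ω : ∀ l, 𝒳 l, p ω ≠ 0 → ω i = a) (F : Finset (Fin n)) :
    Hent p F = Hent p (F.erase i) := by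
  classical
  rw [Hent_master p hp0 F, Hent_master p hp0 (F.erase i)]
  congr 1
  apply Finset.sum_congr rfl
  intro x _
  rcases eq_or_ne (p x) 0 with h0 | h0
  · rw [h0, zero_mul, zero_mul]
  · have hmarg : margVal p F x = margVal p (F.erase i) x := by
      unfold margVal
      apply Finset.sum_subset
      · intro ω hω
        simp only [Finset.mem_filter, Finset.mem_univ, true_and] at hω ⊢
        exact fun l hl => hω l (Finset.mem_of_mem_erase hl)
      · intro ω hω hωn
        simp only [Finset.mem_filter, Finset.mem_univ, true_and] at hω hωn
        by_contra hpω
        apply hωn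
        intro l hl
        rcases eq_or_ne l i with rfl | hli
        · rw [ha ω hpω, ha x h0]
        · exact hω l (Finset.mem_erase.mpr ⟨hli, hl⟩)
    rw [hmarg]

lemma Hent_eq_restrict (hp0 : ∀ x, 0 ≤ p x) {F G : Finset (Fin n)} (hGF : G ⊆ F)
    (hdet : ∀ i ∈ F, i ∉ G → ∃ a : 𝒳 i, ∀ ω : ∀ l, 𝒳 l, p ω ≠ 0 → ω i = a) :
    Hent p F = Hent p G := by
  classical
  have key : ∀ m : ℕ, ∀ F : Finset (Fin n), G ⊆ F →
      (∀ i ∈ F, i ∉ G → ∃ a : 𝒳 i, ∀ ω : ∀ l, 𝒳 l, p ω ≠ 0 → ω i = a) →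
      (F \ G).card = m → Hent p F = Hent p G := by
    intro m
    induction m with
    | zero =>
      intro F hGF _ hcard
      have hempty : F \ G = ∅ := Finset.card_eq_zero.mp hcard
      have : F = G := Finset.Subset.antisymm (fun x hx => by
        by_contra hxG
        exact Finset.notMem_empty x (hempty ▸ Finset.mem_sdiff.mpr ⟨hx, hxG⟩)) hGF
      rw [this]
    | succ m ih =>
      intro F hGF hdet hcard
      have hne : (F \ G).Nonempty := by
        rw [← Finset.card_pos, hcard]; omega
      obtain ⟨i, hi⟩ := hne
      rw [Finset.mem_sdiff] at hi
      obtain ⟨a, ha⟩ := hdet i hi.1 hi.2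
      rw [Hent_drop hp0 ha F]
      apply ih (F.erase i)
      · intro x hx
        exact Finset.mem_erase.mpr ⟨fun e => hi.2 (e ▸ hx), hGF hx⟩
      · intro l hl hlG
        exact hdet l (Finset.mem_of_mem_erase hl) hlG
      · have hset : F.erase i \ G = (F \ G).erase i := by
          ext x
          simp only [Finset.mem_sdiff, Finset.mem_erase]
          tauto
        rw [hset, Finset.card_erase_of_mem (Finset.mem_sdiff.mpr hi), hcard]
        omega
  exact key _ F hGF hdet rfl

lemma Hent_singles (hp0 : ∀ x, 0 ≤ p x) (G : Finset (Fin n)) :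
    ∑ i ∈ G, Hent p {i}
      = -∑ x : ∀ l, 𝒳 l, p x * ∑ i ∈ G, Real.log (margVal p {i} x) := by
  calc ∑ i ∈ G, Hent p {i}
      = ∑ i ∈ G, -∑ x : ∀ l, 𝒳 l, p x * Real.log (margVal p {i} x) :=
        Finset.sum_congr rfl (fun i _ => Hent_master p hp0 {i})
    _ = -∑ i ∈ G, ∑ x : ∀ l, 𝒳 l, p x * Real.log (margVal p {i} x) := by
        rw [Finset.sum_neg_distrib]
    _ = -∑ x : ∀ l, 𝒳 l, ∑ i ∈ G, p x * Real.log (margVal p {i} x) := by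
        rw [Finset.sum_comm]
    _ = -∑ x : ∀ l, 𝒳 l, p x * ∑ i ∈ G, Real.log (margVal p {i} x) := by
        congr 1
        exact Finset.sum_congr rfl (fun x _ => (Finset.mul_sum _ _ _).symm)

lemma Hent_sum_of_prod (hp0 : ∀ x, 0 ≤ p x) {G : Finset (Fin n)}
    (hfac : ∀ x, margVal p G x = ∏ i ∈ G, margVal p {i} x) :
    Hent p G = ∑ i ∈ G, Hent p {i} := by
  rw [Hent_master p hp0 G, Hent_singles hp0 G]
  congr 1
  apply Finset.sum_congr rfl
  intro x _
  rcases eq_or_ne (p x) 0 with h0 | h0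
  · rw [h0, zero_mul, zero_mul]
  · have h0' : 0 < p x := lt_of_le_of_ne (hp0 x) (Ne.symm h0)
    have hm : ∀ i ∈ G, 0 < margVal p {i} x :=
      fun i _ => lt_of_lt_of_le h0' (self_le_margVal hp0 {i} x)
    congr 1
    rw [hfac x]
    exact Real.log_prod (s := G) (fun i hi => ne_of_gt (hm i hi))

lemma marg_restrict_prod (hp0 : ∀ x, 0 ≤ p x) (hp1 : ∑ x : ∀ i, 𝒳 i, p x = 1)
    {A G : Finset (Fin n)} (hGA : G ⊆ A)
    (hfac : ∀ x, margVal p A x = ∏ i ∈ A, margVal p {i} x) :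
    ∀ x, margVal p G x = ∏ i ∈ G, margVal p {i} x := by
  classical
  obtain ⟨b⟩ : Nonempty (∀ l, 𝒳 l) := ⟨fun l => Classical.arbitrary _⟩
  intro x
  set χ : (∀ l, 𝒳 l) → ℝ := fun ω => if ∀ l ∈ G, ω l = x l then 1 else 0 with hχ
  have hχlocal : ∀ ω ω', (∀ l ∈ A, ω l = ω' l) → χ ω = χ ω' := by
    intro ω ω' h
    rw [hχ]
    simp only []
    congr 1
    apply propext
    constructor
    · intro hh l hl; rw [← h l (hGA hl)]; exact hh l hl
    · intro hh l hl; rw [h l (hGA hl)]; exact hh l hl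
  have hgr := grouping p A b χ hχlocal
  have hlhs : ∑ ω : ∀ l, 𝒳 l, p ω * χ ω = margVal p G x := by
    unfold margVal
    rw [Finset.sum_filter]
    apply Finset.sum_congr rfl
    intro ω _
    rw [hχ]
    simp only []
    by_cases hc : ∀ l ∈ G, ω l = x l
    · rw [if_pos hc, if_pos hc, mul_one]
    · rw [if_neg hc, if_neg hc, mul_zero]
  rw [hlhs] at hgr
  -- rewrite the canonical sum
  set c : ∀ l, 𝒳 l := fun l => if l ∈ G then x l else b l with hc
  have hsets : (canonSet A b).filter (fun z => ∀ l ∈ G, z l = x l)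
      = canonSet (A \ G) c := by
    ext z
    simp only [canonSet, Finset.mem_filter, Finset.mem_univ, true_and, Finset.mem_sdiff,
      not_and, not_not]
    constructor
    · rintro ⟨h1, h2⟩ l hl
      rw [hc]
      by_cases hlG : l ∈ G
      · simp only [hlG, if_true]
        exact h2 l hlG
      · simp only [hlG, if_false]
        exact h1 l (fun hlA => hlG (hl hlA))
    · intro h
      constructor
      · intro l hlA
        have hlG : l ∉ G := fun hlG => hlA (hGA hlG)
        have hz : z l = c l := h l (fun hA => absurd hA hlA)
        rw [hz, hc]
        simp [hlG]
      · intro l hlG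
        have hz : z l = c l := h l (fun _ => hlG)
        rw [hz, hc]
        simp [hlG]
  have hfilter : ∑ z ∈ canonSet A b, margVal p A z * χ z
      = ∑ z ∈ (canonSet A b).filter (fun z => ∀ l ∈ G, z l = x l), margVal p A z := by
    rw [Finset.sum_filter]
    apply Finset.sum_congr rfl
    intro z _
    rw [hχ]
    simp only []
    by_cases hcnd : ∀ l ∈ G, z l = x l
    · rw [if_pos hcnd, if_pos hcnd, mul_one]
    · rw [if_neg hcnd, if_neg hcnd, mul_zero]
  have hsplit : ∀ z ∈ canonSet (A \ G) c, margVal p A z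
      = (∏ i ∈ G, margVal p {i} x) * ∏ i ∈ A \ G, margVal p {i} z := by
    intro z hz
    simp only [canonSet, Finset.mem_filter, Finset.mem_univ, true_and, Finset.mem_sdiff,
      not_and, not_not] at hz
    have hzG : ∀ l ∈ G, z l = x l := by
      intro l hlG
      have := hz l (fun _ => hlG)
      rw [this, hc]
      simp [hlG]
    rw [hfac z, ← Finset.prod_sdiff hGA, mul_comm]
    congr 1
    apply Finset.prod_congr rfl
    intro i hi
    apply margVal_congr
    intro l hl
    rw [Finset.mem_singleton] at hl
    subst hl
    exact hzG l hi
  have hlast : ∑ z ∈ canonSet (A \ G) c, ∏ i ∈ A \ G, margVal p {i} z = 1 := by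
    have hg : ∀ i ∈ A \ G, ∑ a : 𝒳 i, margVal p {i} (Function.update c i a) = 1 :=
      fun i _ => single_sum_one hp0 hp1 i c
    have hps := prodPmf_sum (fun i a => margVal p {i} (Function.update c i a)) (A \ G) hg c
    rw [← hps]
    apply Finset.sum_congr rfl
    intro z hz
    apply Finset.prod_congr rfl
    intro i hi
    apply margVal_congr
    intro l hl
    rw [Finset.mem_singleton] at hl
    subst hl
    simp
  calc margVal p G x
      = ∑ z ∈ canonSet A b, margVal p A z * χ z := hgr
    _ = ∑ z ∈ canonSet (A \ G) c, margVal p A z := by rw [hfilter, hsets]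
    _ = ∑ z ∈ canonSet (A \ G) c,
          (∏ i ∈ G, margVal p {i} x) * ∏ i ∈ A \ G, margVal p {i} z :=
        Finset.sum_congr rfl hsplit
    _ = (∏ i ∈ G, margVal p {i} x) * ∑ z ∈ canonSet (A \ G) c, ∏ i ∈ A \ G, margVal p {i} z := by
        rw [Finset.mul_sum]
    _ = ∏ i ∈ G, margVal p {i} x := by rw [hlast, mul_one]

end Reverse

end ShearerAux

theorem stmt_10 (n : ℕ) (hn : 2 ≤ n)
    (𝒳 : Fin n → Type) [∀ i, Fintype (𝒳 i)] [∀ i, Nonempty (𝒳 i)]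
    (p : (∀ i, 𝒳 i) → ℝ)
    (hp0 : ∀ x, 0 ≤ p x) (hp1 : ∑ x : ∀ i, 𝒳 i, p x = 1)
    (ι : Type) [Fintype ι] (S : ι → Finset (Fin n)) (α : ι → ℚ)
    (hproper : ∀ k, S k ≠ Finset.univ)
    (hpos : ∀ k, 0 < α k)
    (hsep : ∀ i j : Fin n, i ≠ j → ¬ (∀ k, i ∈ S k ↔ j ∈ S k))
    (hcov : ∀ i : Fin n, 1 ≤ ∑ k ∈ Finset.univ.filter (fun k => i ∈ S k), α k) :
    (∑ k : ι, (α k : ℝ) * Hent p (S k)) = Hent p Finset.univ ↔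
      ((∀ x : ∀ i, 𝒳 i,
          margVal p (Finset.univ.filter
            (fun i : Fin n => ∑ k ∈ Finset.univ.filter (fun k => i ∈ S k), α k = 1)) x =
          ∏ i ∈ Finset.univ.filter
            (fun i : Fin n => ∑ k ∈ Finset.univ.filter (fun k => i ∈ S k), α k = 1),
            margVal p {i} x) ∧
        ∀ i : Fin n, 1 < (∑ k ∈ Finset.univ.filter (fun k => i ∈ S k), α k) →
          Hent p {i} = 0) := by
  classical
  set A : Finset (Fin n) := Finset.univ.filter
    (fun i : Fin n => ∑ k ∈ Finset.univ.filter (fun k => i ∈ S k), α k = 1) with hA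
  constructor
  · intro heq
    constructor
    · have hent := ShearerAux.Hent_sum_singletons hp0 hp1 hpos hcov hsep heq A
      exact ShearerAux.gibbs_factorize hp0 hp1 A hent
    · intro i hlt
      have hcond := (ShearerAux.eq_conditions S α hp0 hp1 hpos hcov heq
        (Finset.notMem_empty i)).2 hlt
      rw [ShearerAux.Hent_empty p hp0 hp1] at hcond
      have hins : insert i (∅ : Finset (Fin n)) = {i} := rfl
      rw [← hins]
      exact hcond
  · rintro ⟨hfac, hdet⟩
    have hdet' : ∀ i : Fin n, i ∉ A → ∃ a : 𝒳 i, ∀ ω, p ω ≠ 0 → ω i = a := by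
      intro i hiA
      apply ShearerAux.deterministic_of_Hent_zero hp0 hp1
      apply hdet
      have h1 := hcov i
      rw [hA] at hiA
      simp only [Finset.mem_filter, Finset.mem_univ, true_and] at hiA
      exact lt_of_le_of_ne h1 (Ne.symm hiA)
    have hHA : ∀ G : Finset (Fin n), G ⊆ A → Hent p G = ∑ i ∈ G, Hent p {i} := by
      intro G hGA
      exact ShearerAux.Hent_sum_of_prod hp0 (ShearerAux.marg_restrict_prod hp0 hp1 hGA hfac)
    have huniv : Hent p Finset.univ = Hent p A :=
      ShearerAux.Hent_eq_restrict hp0 (Finset.subset_univ A) (fun i _ hiA => hdet' i hiA)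
    have hSk : ∀ k, Hent p (S k) = Hent p (S k ∩ A) := by
      intro k
      apply ShearerAux.Hent_eq_restrict hp0 Finset.inter_subset_left
      intro i hi hiA
      exact hdet' i (fun hA' => hiA (Finset.mem_inter.mpr ⟨hi, hA'⟩))
    calc ∑ k : ι, (α k : ℝ) * Hent p (S k)
        = ∑ k : ι, (α k : ℝ) * ∑ i ∈ A, (if i ∈ S k then Hent p {i} else 0) := by
          apply Finset.sum_congr rfl
          intro k _
          rw [hSk k, hHA (S k ∩ A) Finset.inter_subset_right]
          congr 1
          rw [← Finset.sum_filter]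
          apply Finset.sum_congr _ (fun _ _ => rfl)
          ext x
          simp only [Finset.mem_inter, Finset.mem_filter]
          tauto
      _ = ∑ i ∈ A, ∑ k : ι, (if i ∈ S k then (α k : ℝ) * Hent p {i} else 0) := by
          rw [Finset.sum_comm]
          apply Finset.sum_congr rfl
          intro k _
          rw [Finset.mul_sum]
          apply Finset.sum_congr rfl
          intro i _
          by_cases h : i ∈ S k
          · rw [if_pos h, if_pos h]
          · rw [if_neg h, if_neg h, mul_zero]
      _ = ∑ i ∈ A, (∑ k ∈ Finset.univ.filter (fun k => i ∈ S k), (α k : ℝ)) * Hent p {i} := by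
          apply Finset.sum_congr rfl
          intro i _
          rw [Finset.sum_mul, Finset.sum_filter]
      _ = ∑ i ∈ A, Hent p {i} := by
          apply Finset.sum_congr rfl
          intro i hi
          rw [hA] at hi
          simp only [Finset.mem_filter, Finset.mem_univ, true_and] at hi
          have : (∑ k ∈ Finset.univ.filter (fun k => i ∈ S k), (α k : ℝ)) = 1 := by
            exact_mod_cast hi
          rw [this, one_mul]
      _ = Hent p A := (hHA A (le_refl A)).symm
      _ = Hent p Finset.univ := huniv.symm
end

section
/- Let P be a probability mass function on 𝒳^n and Q a strictly positive product probability mass function on 𝒳^n (Q(x_1, …, x_n) = ∏_{i=1}^n Q_i(x_i) with all Q_i(x) > 0), where 𝒳 is finite, n ≥ 2. Set d(F) = −D(P_F ‖ Q_F) for F ⊆ [n]. Let γ be a fractional partition with respect to a family 𝓕 of subsets of [n] satisfying the standing assumptions. Then ∑_{F ∈ 𝓕} γ(F) d(F) = d([n]) if and only if P is a product probability distribution, i.e., P(x_1, …, x_n) = ∏_{i=1}^n P_{{i}}(x_i) for all (x_1, …, x_n). -/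
open Finset
open scoped Classical BigOperators

/-- Marginal of `R` on the coordinates in `F`. -/
noncomputable def margR {n : ℕ} {𝒳 : Type} [Fintype 𝒳]
    (R : (Fin n → 𝒳) → ℝ) (F : Finset (Fin n)) (y : {i // i ∈ F} → 𝒳) : ℝ :=
  ∑ x ∈ Finset.univ.filter (fun x : Fin n → 𝒳 => ∀ i : {i // i ∈ F}, x i.1 = y i), R x

/-- Relative entropy `D(P_F ‖ Q_F)` between the marginals on `F` (with `0 log 0 = 0`). -/
noncomputable def relEntF {n : ℕ} {𝒳 : Type} [Fintype 𝒳]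
    (P Q : (Fin n → 𝒳) → ℝ) (F : Finset (Fin n)) : ℝ :=
  ∑ y : {i // i ∈ F} → 𝒳, margR P F y * Real.log (margR P F y / margR Q F y)

set_option linter.unusedSectionVars false
set_option linter.unusedVariables false

namespace Stmt11

variable {n : ℕ} {𝒳 : Type} [Fintype 𝒳]

/-- marginal "lifted" to the full space -/
noncomputable def mm (R : (Fin n → 𝒳) → ℝ) (F : Finset (Fin n)) (x : Fin n → 𝒳) : ℝ :=
  ∑ x' ∈ Finset.univ.filter (fun x' : Fin n → 𝒳 => ∀ j ∈ F, x' j = x j), R x'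

theorem mm_congr (R : (Fin n → 𝒳) → ℝ) {F : Finset (Fin n)} {x y : Fin n → 𝒳}
    (h : ∀ j ∈ F, x j = y j) : mm R F x = mm R F y := by
  unfold mm
  congr 1
  apply Finset.filter_congr
  intro z _
  constructor
  · intro hz j hj; rw [hz j hj, h j hj]
  · intro hz j hj; rw [hz j hj, h j hj]

theorem mm_nonneg {R : (Fin n → 𝒳) → ℝ} (hR : ∀ x, 0 ≤ R x) (F : Finset (Fin n))
    (x : Fin n → 𝒳) : 0 ≤ mm R F x :=
  Finset.sum_nonneg fun z _ => hR z

theorem mm_mono {R : (Fin n → 𝒳) → ℝ} (hR : ∀ x, 0 ≤ R x) {B A : Finset (Fin n)}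
    (hBA : B ⊆ A) (x : Fin n → 𝒳) : mm R A x ≤ mm R B x := by
  apply Finset.sum_le_sum_of_subset_of_nonneg
  · intro z hz
    simp only [Finset.mem_filter, Finset.mem_univ, true_and] at hz ⊢
    exact fun j hj => hz j (hBA hj)
  · exact fun z _ _ => hR z

theorem mm_univ (R : (Fin n → 𝒳) → ℝ) (x : Fin n → 𝒳) : mm R Finset.univ x = R x := by
  unfold mm
  rw [show Finset.univ.filter (fun x' : Fin n → 𝒳 => ∀ j ∈ (Finset.univ : Finset (Fin n)), x' j = x j) = {x} from ?_, Finset.sum_singleton]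
  ext z
  simp only [Finset.mem_filter, Finset.mem_univ, true_and, Finset.mem_singleton]
  constructor
  · intro h; funext j; exact h j trivial
  · intro h j _; rw [h]

theorem mm_empty (R : (Fin n → 𝒳) → ℝ) (x : Fin n → 𝒳) :
    mm R ∅ x = ∑ z : Fin n → 𝒳, R z := by
  unfold mm
  congr 1
  simp

theorem le_mm {R : (Fin n → 𝒳) → ℝ} (hR : ∀ x, 0 ≤ R x) (F : Finset (Fin n))
    (x : Fin n → 𝒳) : R x ≤ mm R F x := by
  have := mm_mono hR (Finset.subset_univ F) x
  rwa [mm_univ] at this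

end Stmt11

namespace Stmt11

variable {n : ℕ} {𝒳 : Type} [Fintype 𝒳]

def restr (F : Finset (Fin n)) (x : Fin n → 𝒳) : {i // i ∈ F} → 𝒳 := fun i => x i.1

theorem sum_margR (R : (Fin n → 𝒳) → ℝ) (F : Finset (Fin n))
    (g : ({i // i ∈ F} → 𝒳) → ℝ) :
    ∑ y : {i // i ∈ F} → 𝒳, margR R F y * g y = ∑ x : Fin n → 𝒳, R x * g (restr F x) := by
  rw [← Finset.sum_fiberwise (Finset.univ : Finset (Fin n → 𝒳)) (restr F)
    (fun x => R x * g (restr F x))]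
  congr 1
  funext y
  rw [margR, Finset.sum_mul]
  apply Finset.sum_congr
  · apply Finset.filter_congr
    intro x _
    constructor
    · intro h; funext i; exact h i
    · intro h i; rw [← h]; rfl
  · intro x hx
    simp only [Finset.mem_filter] at hx
    rw [hx.2]

theorem margR_restr (R : (Fin n → 𝒳) → ℝ) (F : Finset (Fin n)) (x : Fin n → 𝒳) :
    margR R F (restr F x) = mm R F x := by
  rw [margR, mm]
  apply Finset.sum_congr _ (fun _ _ => rfl)
  apply Finset.filter_congr
  intro z _
  constructor
  · intro h j hj; exact h ⟨j, hj⟩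
  · intro h i; exact h i.1 i.2

theorem relEntF_eq (P Q : (Fin n → 𝒳) → ℝ) (F : Finset (Fin n)) :
    relEntF P Q F = ∑ x : Fin n → 𝒳, P x * Real.log (mm P F x / mm Q F x) := by
  rw [relEntF, sum_margR P F (fun y => Real.log (margR P F y / margR Q F y))]
  apply Finset.sum_congr rfl
  intro x _
  rw [margR_restr, margR_restr]

end Stmt11

namespace Stmt11

variable {n : ℕ} {𝒳 : Type} [Fintype 𝒳]

theorem update_symm_eq (i : Fin n) (b a : 𝒳) (y : {j // j ≠ i} → 𝒳) :
    Function.update ((Equiv.funSplitAt i 𝒳).symm (b, y)) i a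
      = (Equiv.funSplitAt i 𝒳).symm (a, y) := by
  funext j
  by_cases h : j = i
  · subst h
    simp [Equiv.funSplitAt, Equiv.piSplitAt, Function.update]
  · simp [Equiv.funSplitAt, Equiv.piSplitAt, Function.update, h]

/-- summing over all values of coordinate i -/
theorem sum_update (i : Fin n) (u : (Fin n → 𝒳) → ℝ) :
    ∑ x : Fin n → 𝒳, ∑ a : 𝒳, u (Function.update x i a)
      = (Fintype.card 𝒳 : ℝ) * ∑ x : Fin n → 𝒳, u x := by
  rw [← Equiv.sum_comp (Equiv.funSplitAt i 𝒳).symm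
    (fun x => ∑ a : 𝒳, u (Function.update x i a)),
     ← Equiv.sum_comp (Equiv.funSplitAt i 𝒳).symm u]
  rw [Fintype.sum_prod_type, Fintype.sum_prod_type]
  have : ∀ (b : 𝒳) (y : {j // j ≠ i} → 𝒳),
      ∑ a : 𝒳, u (Function.update ((Equiv.funSplitAt i 𝒳).symm (b, y)) i a)
        = ∑ a : 𝒳, u ((Equiv.funSplitAt i 𝒳).symm (a, y)) := by
    intro b y
    apply Finset.sum_congr rfl
    intro a _
    rw [update_symm_eq]
  calc ∑ b : 𝒳, ∑ y : {j // j ≠ i} → 𝒳,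
        ∑ a : 𝒳, u (Function.update ((Equiv.funSplitAt i 𝒳).symm (b, y)) i a)
      = ∑ _b : 𝒳, ∑ y : {j // j ≠ i} → 𝒳, ∑ a : 𝒳, u ((Equiv.funSplitAt i 𝒳).symm (a, y)) := by
        apply Finset.sum_congr rfl; intro b _
        apply Finset.sum_congr rfl; intro y _
        exact this b y
    _ = (Fintype.card 𝒳 : ℝ) * ∑ y : {j // j ≠ i} → 𝒳, ∑ a : 𝒳, u ((Equiv.funSplitAt i 𝒳).symm (a, y)) := by
        rw [Finset.sum_const, Finset.card_univ, nsmul_eq_mul]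
    _ = (Fintype.card 𝒳 : ℝ) * ∑ a : 𝒳, ∑ y : {j // j ≠ i} → 𝒳, u ((Equiv.funSplitAt i 𝒳).symm (a, y)) := by
        rw [Finset.sum_comm]

/-- marginal consistency -/
theorem mm_insert_sum (R : (Fin n → 𝒳) → ℝ) {i : Fin n} {C : Finset (Fin n)} (hi : i ∉ C)
    (x : Fin n → 𝒳) :
    ∑ a : 𝒳, mm R (insert i C) (Function.update x i a) = mm R C x := by
  rw [mm, ← Finset.sum_fiberwise_of_maps_to (fun z _ => Finset.mem_univ (z i)) R]
  apply Finset.sum_congr rfl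
  intro a _
  rw [mm]
  congr 1
  ext z
  simp only [Finset.mem_filter, Finset.mem_univ, true_and, Finset.forall_mem_insert]
  constructor
  · rintro ⟨hzi, hC⟩
    refine ⟨fun j hj => ?_, ?_⟩
    · rw [hC j hj, Function.update_of_ne (ne_of_mem_of_not_mem hj hi) a x]
    · rw [hzi, Function.update_self]
  · rintro ⟨hC, hzi⟩
    refine ⟨?_, fun j hj => ?_⟩
    · rw [hzi, Function.update_self]
    · rw [hC j hj, Function.update_of_ne (ne_of_mem_of_not_mem hj hi) a x]

end Stmt11

namespace Stmt11

variable {n : ℕ} {𝒳 : Type} [Fintype 𝒳]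

theorem card_fiber (F : Finset (Fin n)) (x : Fin n → 𝒳) :
    (Finset.univ.filter (fun z : Fin n → 𝒳 => ∀ j ∈ F, z j = x j)).card
      = Fintype.card 𝒳 ^ (n - F.card) := by
  have hset : Finset.univ.filter (fun z : Fin n → 𝒳 => ∀ j ∈ F, z j = x j)
      = Fintype.piFinset (fun j : Fin n => if j ∈ F then {x j} else Finset.univ) := by
    ext z
    simp only [Finset.mem_filter, Finset.mem_univ, true_and, Fintype.mem_piFinset]
    constructor
    · intro h j
      by_cases hj : j ∈ F
      · simp [hj, h j hj]
      · simp [hj]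
    · intro h j hj
      have := h j
      simp [hj] at this
      exact this
  rw [hset, Fintype.card_piFinset]
  have : ∀ j : Fin n, (if j ∈ F then ({x j} : Finset 𝒳) else Finset.univ).card
      = if j ∈ F then 1 else Fintype.card 𝒳 := by
    intro j; by_cases hj : j ∈ F <;> simp [hj]
  rw [Finset.prod_congr rfl (fun j _ => this j)]
  rw [← Finset.prod_filter_mul_prod_filter_not Finset.univ (· ∈ F)
    (fun j => if j ∈ F then 1 else Fintype.card 𝒳)]
  have h1 : ∀ j ∈ Finset.univ.filter (· ∈ F), (if j ∈ F then 1 else Fintype.card 𝒳) = 1 := by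
    intro j hj
    simp only [Finset.mem_filter] at hj
    simp [hj.2]
  have h2 : ∀ j ∈ Finset.univ.filter (¬ · ∈ F), (if j ∈ F then 1 else Fintype.card 𝒳)
      = Fintype.card 𝒳 := by
    intro j hj
    simp only [Finset.mem_filter] at hj
    simp [hj.2]
  rw [Finset.prod_congr rfl h1, Finset.prod_congr rfl h2, Finset.prod_const_one,
    Finset.prod_const, one_mul]
  congr 1
  rw [show Finset.univ.filter (¬ · ∈ F) = Fᶜ by ext j; simp, Finset.card_compl, Fintype.card_fin]

end Stmt11

namespace Stmt11

variable {n : ℕ} {𝒳 : Type} [Fintype 𝒳]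

theorem sum_mm_mul (R : (Fin n → 𝒳) → ℝ) (F : Finset (Fin n)) (f : (Fin n → 𝒳) → ℝ)
    (hf : ∀ x x' : Fin n → 𝒳, (∀ j ∈ F, x j = x' j) → f x = f x') :
    ∑ x : Fin n → 𝒳, mm R F x * f x
      = (Fintype.card 𝒳 ^ (n - F.card) : ℕ) * ∑ x : Fin n → 𝒳, R x * f x := by
  have step1 : ∀ x : Fin n → 𝒳, mm R F x * f x
      = ∑ x' ∈ Finset.univ.filter (fun x' : Fin n → 𝒳 => ∀ j ∈ F, x' j = x j), R x' * f x' := by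
    intro x
    rw [mm, Finset.sum_mul]
    apply Finset.sum_congr rfl
    intro x' hx'
    simp only [Finset.mem_filter, Finset.mem_univ, true_and] at hx'
    rw [hf x' x hx']
  rw [Finset.sum_congr rfl (fun x _ => step1 x)]
  rw [Finset.sum_comm' (s := Finset.univ) (t := fun x => Finset.univ.filter
      (fun x' : Fin n → 𝒳 => ∀ j ∈ F, x' j = x j))
      (t' := Finset.univ) (s' := fun x' => Finset.univ.filter
      (fun x : Fin n → 𝒳 => ∀ j ∈ F, x' j = x j))
      (h := by intro x x'; simp only [Finset.mem_filter, Finset.mem_univ, true_and]; tauto)]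
  rw [Finset.mul_sum]
  apply Finset.sum_congr rfl
  intro x' _
  have hcard : (Finset.univ.filter (fun x : Fin n → 𝒳 => ∀ j ∈ F, x' j = x j)).card
      = Fintype.card 𝒳 ^ (n - F.card) := by
    rw [← card_fiber F x']
    congr 1
    apply Finset.filter_congr
    intro z _
    constructor
    · intro h j hj; exact (h j hj).symm
    · intro h j hj; exact (h j hj).symm
  rw [Finset.sum_const, hcard, nsmul_eq_mul]

end Stmt11

namespace Stmt11

variable {n : ℕ} {𝒳 : Type} [Fintype 𝒳]

theorem mm_prod (f : Fin n → 𝒳 → ℝ) (F : Finset (Fin n)) (x : Fin n → 𝒳) :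
    mm (fun z => ∏ i, f i (z i)) F x
      = (∏ i ∈ F, f i (x i)) * ∏ i ∈ Fᶜ, (∑ a : 𝒳, f i a) := by
  set g : Fin n → 𝒳 → ℝ := fun i c => if i ∈ F then (if c = x i then f i c else 0) else f i c
    with hg
  have stepA : mm (fun z => ∏ i, f i (z i)) F x = ∑ z : Fin n → 𝒳, ∏ i, g i (z i) := by
    rw [mm, Finset.sum_filter]
    apply Finset.sum_congr rfl
    intro z _
    by_cases h : ∀ j ∈ F, z j = x j
    · rw [if_pos h]
      apply Finset.prod_congr rfl
      intro i _
      by_cases hi : i ∈ F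
      · simp [hg, hi, h i hi]
      · simp [hg, hi]
    · rw [if_neg h]
      push_neg at h
      obtain ⟨j, hj, hne⟩ := h
      symm
      apply Finset.prod_eq_zero (Finset.mem_univ j)
      simp [hg, hj, hne]
  have stepB : ∑ z : Fin n → 𝒳, ∏ i, g i (z i) = ∏ i, ∑ a : 𝒳, g i a := by
    rw [Finset.prod_univ_sum (fun _ => (Finset.univ : Finset 𝒳)) g]
    rw [Fintype.piFinset_univ]
  have stepC : ∀ i : Fin n, ∑ a : 𝒳, g i a = if i ∈ F then f i (x i) else ∑ a : 𝒳, f i a := by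
    intro i
    by_cases hi : i ∈ F
    · simp only [hg, hi, if_true]
      rw [Finset.sum_ite_eq' Finset.univ (x i) (f i)]
      simp
    · simp [hg, hi]
  rw [stepA, stepB, Finset.prod_congr rfl (fun i _ => stepC i)]
  rw [← Finset.prod_filter_mul_prod_filter_not Finset.univ (· ∈ F)]
  congr 1
  · rw [show Finset.univ.filter (· ∈ F) = F by ext j; simp]
    apply Finset.prod_congr rfl
    intro i hi
    simp [hi]
  · rw [show Finset.univ.filter (¬ · ∈ F) = Fᶜ by ext j; simp]
    apply Finset.prod_congr rfl
    intro i hi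
    simp only [Finset.mem_compl] at hi
    simp [hi]

end Stmt11

namespace Stmt11

variable {n : ℕ} {𝒳 : Type} [Fintype 𝒳]

noncomputable def phi (P : (Fin n → 𝒳) → ℝ) (F : Finset (Fin n)) : ℝ :=
  ∑ x : Fin n → 𝒳, P x * Real.log (mm P F x)

theorem phi_empty {P : (Fin n → 𝒳) → ℝ} (hP1 : ∑ x : Fin n → 𝒳, P x = 1) :
    phi P ∅ = 0 := by
  rw [phi]
  apply Finset.sum_eq_zero
  intro x _
  rw [mm_empty, hP1, Real.log_one, mul_zero]

theorem relEntF_sub {P Q : (Fin n → 𝒳) → ℝ} (hP0 : ∀ x, 0 ≤ P x)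
    (hQpos : ∀ x, 0 < Q x) (F : Finset (Fin n)) :
    relEntF P Q F = phi P F - ∑ x : Fin n → 𝒳, P x * Real.log (mm Q F x) := by
  rw [relEntF_eq, phi, ← Finset.sum_sub_distrib]
  apply Finset.sum_congr rfl
  intro x _
  rcases eq_or_lt_of_le (hP0 x) with h | h
  · rw [← h]; ring
  · have h1 : (0:ℝ) < mm P F x := lt_of_lt_of_le h (le_mm hP0 F x)
    have h2 : (0:ℝ) < mm Q F x := lt_of_lt_of_le (hQpos x) (le_mm (fun z => (hQpos z).le) F x)
    rw [Real.log_div (ne_of_gt h1) (ne_of_gt h2)]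
    ring

theorem sum_log_mm_prod {P : (Fin n → 𝒳) → ℝ} (hP0 : ∀ x, 0 ≤ P x)
    (f : Fin n → 𝒳 → ℝ) (hf1 : ∀ i, ∑ a : 𝒳, f i a = 1)
    (hfpos : ∀ x : Fin n → 𝒳, 0 < P x → ∀ i, 0 < f i (x i))
    (F : Finset (Fin n)) :
    ∑ x : Fin n → 𝒳, P x * Real.log (mm (fun z => ∏ i, f i (z i)) F x)
      = ∑ i ∈ F, ∑ x : Fin n → 𝒳, P x * Real.log (f i (x i)) := by
  have key : ∀ x : Fin n → 𝒳, P x * Real.log (mm (fun z => ∏ i, f i (z i)) F x)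
      = ∑ i ∈ F, P x * Real.log (f i (x i)) := by
    intro x
    rw [mm_prod]
    rcases eq_or_lt_of_le (hP0 x) with h | h
    · rw [← h]
      simp
    · have : ∏ i ∈ Fᶜ, (∑ a : 𝒳, f i a) = 1 := by
        apply Finset.prod_eq_one
        intro i _
        exact hf1 i
      rw [this, mul_one, Real.log_prod (fun i _ => ne_of_gt (hfpos x h i))]
      rw [Finset.mul_sum]
  rw [Finset.sum_congr rfl (fun x _ => key x), Finset.sum_comm]

theorem swap_frac {ι : Type} [Fintype ι] (S : ι → Finset (Fin n)) (γ : ι → ℝ)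
    (hfrac : ∀ i : Fin n, ∑ k ∈ Finset.univ.filter (fun k => i ∈ S k), γ k = 1)
    (g : Fin n → ℝ) :
    ∑ k : ι, γ k * ∑ i ∈ S k, g i = ∑ i : Fin n, g i := by
  have h1 : ∀ k : ι, γ k * ∑ i ∈ S k, g i = ∑ i ∈ S k, γ k * g i := fun k => Finset.mul_sum _ _ _
  rw [Finset.sum_congr rfl (fun k _ => h1 k)]
  rw [Finset.sum_comm' (t' := Finset.univ)
    (s' := fun i => Finset.univ.filter (fun k => i ∈ S k)) (h := by
    intro k i
    simp only [Finset.mem_filter, Finset.mem_univ, true_and]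
    tauto)]
  apply Finset.sum_congr rfl
  intro i _
  rw [← Finset.sum_mul, hfrac i, one_mul]

end Stmt11

namespace Stmt11

variable {n : ℕ} {𝒳 : Type} [Fintype 𝒳]

def pkey (p : Fin n → ℕ) (j : Fin n) : ℕ ×ₗ ℕ := toLex (p j, (j : ℕ))

theorem pkey_inj (p : Fin n → ℕ) {a b : Fin n} (h : pkey p a = pkey p b) : a = b := by
  unfold pkey at h
  have := congrArg (fun z => (ofLex z).2) h
  simpa [Fin.val_injective.eq_iff] using this

def predF (p : Fin n → ℕ) (i : Fin n) : Finset (Fin n) :=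
  Finset.univ.filter (fun j => pkey p j < pkey p i)

theorem not_mem_predF (p : Fin n → ℕ) (i : Fin n) : i ∉ predF p i := by
  simp [predF]

theorem chain_rule {P : (Fin n → 𝒳) → ℝ} (hP1 : ∑ x : Fin n → 𝒳, P x = 1)
    (p : Fin n → ℕ) (F : Finset (Fin n)) :
    phi P F = ∑ i ∈ F,
      (phi P (insert i (F ∩ predF p i)) - phi P (F ∩ predF p i)) := by
  induction F using Finset.strongInduction with
  | _ F ih =>
    rcases Finset.eq_empty_or_nonempty F with rfl | hne
    · simp [phi_empty hP1]
    · obtain ⟨j, hjF, hmax⟩ := Finset.exists_max_image F (pkey p) hne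
      set F' := F.erase j with hF'
      have hins : insert j F' = F := Finset.insert_erase hjF
      have hjF' : j ∉ F' := Finset.notMem_erase j F
      have h2 : F ∩ predF p j = F' := by
        ext l
        simp only [Finset.mem_inter, predF, Finset.mem_filter, Finset.mem_univ, true_and,
          hF', Finset.mem_erase]
        constructor
        · rintro ⟨hl, hlt⟩
          exact ⟨fun he => absurd (he ▸ hlt) (lt_irrefl _), hl⟩
        · rintro ⟨hne', hl⟩
          exact ⟨hl, lt_of_le_of_ne (hmax l hl) (fun he => hne' (pkey_inj p he))⟩
      have h3 : ∀ i ∈ F', F ∩ predF p i = F' ∩ predF p i := by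
        intro i hi
        ext l
        simp only [Finset.mem_inter, predF, Finset.mem_filter, Finset.mem_univ, true_and,
          hF', Finset.mem_erase]
        constructor
        · rintro ⟨hl, hlt⟩
          refine ⟨⟨fun he => ?_, hl⟩, hlt⟩
          subst he
          exact absurd (lt_of_lt_of_le hlt (hmax i (Finset.mem_of_mem_erase hi)))
            (lt_irrefl _)
        · rintro ⟨⟨_, hl⟩, hlt⟩
          exact ⟨hl, hlt⟩
      rw [← hins, Finset.sum_insert hjF']
      have hsum : ∑ i ∈ F', (phi P (insert i ((insert j F') ∩ predF p i))
          - phi P ((insert j F') ∩ predF p i)) = phi P F' := by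
        rw [ih F' (hF' ▸ Finset.erase_ssubset hjF)]
        apply Finset.sum_congr rfl
        intro i hi
        rw [hins, h3 i hi]
      rw [hsum, hins, h2, hins]
      ring

end Stmt11

namespace Stmt11

variable {n : ℕ} {𝒳 : Type} [Fintype 𝒳] [Nonempty 𝒳]

theorem submod {P : (Fin n → 𝒳) → ℝ} (hP0 : ∀ x, 0 ≤ P x)
    (hP1 : ∑ x : Fin n → 𝒳, P x = 1) {i : Fin n} {A B : Finset (Fin n)}
    (hiA : i ∉ A) (hBA : B ⊆ A) :
    (phi P (insert i B) - phi P B) ≤ (phi P (insert i A) - phi P A) ∧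
    ((phi P (insert i A) - phi P A) - (phi P (insert i B) - phi P B) = 0 →
      ∀ x, mm P (insert i A) x * mm P B x = mm P (insert i B) x * mm P A x) := by
  classical
  have hiB : i ∉ B := fun h => hiA (hBA h)
  set F := insert i A with hF
  have hAF : A ⊆ F := Finset.subset_insert i A
  have hBF : B ⊆ F := hBA.trans hAF
  have hiBF : insert i B ⊆ F := Finset.insert_subset_insert i hBA
  -- basic facts
  have hm0 : ∀ (C : Finset (Fin n)) x, 0 ≤ mm P C x := fun C x => mm_nonneg hP0 C x
  set t : (Fin n → 𝒳) → ℝ := fun x =>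
    (mm P A x * mm P (insert i B) x) / (mm P F x * mm P B x) with ht
  set u : (Fin n → 𝒳) → ℝ := fun x =>
    mm P A x * mm P (insert i B) x / mm P B x with hu
  set D : (Fin n → 𝒳) → ℝ := fun x =>
    Real.log (mm P F x) - Real.log (mm P A x)
      - Real.log (mm P (insert i B) x) + Real.log (mm P B x) with hD
  have hdelta : (phi P F - phi P A) - (phi P (insert i B) - phi P B)
      = ∑ x : Fin n → 𝒳, P x * D x := by
    simp only [phi, hD, ← Finset.sum_sub_distrib, ← Finset.sum_add_distrib]
    apply Finset.sum_congr rfl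
    intro x _
    ring
  have hDlog : ∀ x, 0 < P x → (0 < t x ∧ D x = - Real.log (t x)) := by
    intro x hx
    have h1 : 0 < mm P F x := lt_of_lt_of_le hx (le_mm hP0 F x)
    have h2 : 0 < mm P A x := lt_of_lt_of_le h1 (mm_mono hP0 hAF x)
    have h3 : 0 < mm P B x := lt_of_lt_of_le h2 (mm_mono hP0 hBA x)
    have h4 : 0 < mm P (insert i B) x := lt_of_lt_of_le h1 (mm_mono hP0 hiBF x)
    refine ⟨by positivity, ?_⟩
    rw [ht]
    rw [Real.log_div (by positivity) (by positivity), Real.log_mul (ne_of_gt h2) (ne_of_gt h4),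
      Real.log_mul (ne_of_gt h1) (ne_of_gt h3), hD]
    ring
  have hterm : ∀ x, P x * (1 - t x) ≤ P x * D x := by
    intro x
    rcases eq_or_lt_of_le (hP0 x) with h | h
    · rw [← h]; ring_nf; exact le_refl _
    · obtain ⟨htpos, hDeq⟩ := hDlog x h
      have := Real.log_le_sub_one_of_pos htpos
      rw [hDeq]
      have : 1 - t x ≤ - Real.log (t x) := by linarith
      exact mul_le_mul_of_nonneg_left this (hP0 x)
  have hcard : 0 < Fintype.card 𝒳 := Fintype.card_pos
  set NF : ℝ := ((Fintype.card 𝒳 ^ (n - F.card) : ℕ) : ℝ) with hNF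
  have hNFpos : 0 < NF := by
    rw [hNF]
    positivity
  have hmeas : ∀ (C : Finset (Fin n)), C ⊆ F → ∀ x x' : Fin n → 𝒳,
      (∀ j ∈ F, x j = x' j) → mm P C x = mm P C x' := by
    intro C hCF x x' h
    exact mm_congr P (fun j hj => h j (hCF hj))
  have htmeas : ∀ x x' : Fin n → 𝒳, (∀ j ∈ F, x j = x' j) → t x = t x' := by
    intro x x' h
    rw [ht]
    simp only
    rw [hmeas A hAF x x' h, hmeas B hBF x x' h, hmeas (insert i B) hiBF x x' h,
      hmeas F (le_refl F) x x' h]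
  have hSsum : ∑ x : Fin n → 𝒳, mm P F x * t x = NF * ∑ x : Fin n → 𝒳, P x * t x := by
    rw [sum_mm_mul P F t htmeas, hNF]
  have hmt : ∀ x, mm P F x * t x ≤ u x := by
    intro x
    rcases eq_or_lt_of_le (hm0 F x) with h | h
    · rw [← h, zero_mul, hu]
      simp only
      exact div_nonneg (mul_nonneg (hm0 A x) (hm0 (insert i B) x)) (hm0 B x)
    · have h2 : 0 < mm P A x := lt_of_lt_of_le h (mm_mono hP0 hAF x)
      have h3 : 0 < mm P B x := lt_of_lt_of_le h2 (mm_mono hP0 hBA x)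
      rw [ht, hu]
      simp only
      rw [mul_div_assoc']
      rw [div_le_div_iff₀ (by positivity) (by positivity)]
      ring_nf
      exact le_refl _
  have hupd : ∀ x : Fin n → 𝒳, ∑ a : 𝒳, u (Function.update x i a) = mm P A x := by
    intro x
    have h1 : ∀ a : 𝒳, u (Function.update x i a)
        = mm P A x * mm P (insert i B) (Function.update x i a) / mm P B x := by
      intro a
      rw [hu]
      simp only
      rw [show mm P A (Function.update x i a) = mm P A x from
            mm_congr P (fun j hj => Function.update_of_ne (fun hji : j = i => hiA (by rwa [hji] at hj)) a x),
          show mm P B (Function.update x i a) = mm P B x from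
            mm_congr P (fun j hj => Function.update_of_ne (fun hji : j = i => hiB (by rwa [hji] at hj)) a x)]
    rw [Finset.sum_congr rfl (fun a _ => h1 a)]
    rw [← Finset.sum_div, ← Finset.mul_sum, mm_insert_sum P hiB x]
    rcases eq_or_lt_of_le (hm0 B x) with h | h
    · have hA0 : mm P A x = 0 := le_antisymm (h ▸ mm_mono hP0 hBA x) (hm0 A x)
      rw [hA0, zero_mul, zero_div]
    · field_simp
  have husum : ∑ x : Fin n → 𝒳, u x = NF := by
    have h1 := sum_update i u
    rw [Finset.sum_congr rfl (fun x _ => hupd x)] at h1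
    have h2 : ∑ x : Fin n → 𝒳, mm P A x
        = ((Fintype.card 𝒳 ^ (n - A.card) : ℕ) : ℝ) := by
      have := sum_mm_mul P A (fun _ => (1:ℝ)) (fun _ _ _ => rfl)
      simpa [hP1] using this
    rw [h2] at h1
    have hAcard : A.card < n := by
      have : A ⊂ Finset.univ := Finset.ssubset_univ_iff.2 (fun h => hiA (h ▸ Finset.mem_univ i))
      have := Finset.card_lt_card this
      simpa using this
    have hFcard : F.card = A.card + 1 := Finset.card_insert_of_notMem hiA
    have hNA : ((Fintype.card 𝒳 ^ (n - A.card) : ℕ) : ℝ) = (Fintype.card 𝒳 : ℝ) * NF := by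
      rw [hNF, hFcard]
      rw [show n - A.card = (n - (A.card + 1)) + 1 by omega]
      push_cast [pow_succ]
      ring
    rw [hNA] at h1
    have hcardne : (Fintype.card 𝒳 : ℝ) ≠ 0 := Nat.cast_ne_zero.2 hcard.ne'
    exact (mul_left_cancel₀ hcardne h1).symm
  have hle1 : ∑ x : Fin n → 𝒳, mm P F x * t x ≤ ∑ x : Fin n → 𝒳, u x :=
    Finset.sum_le_sum (fun x _ => hmt x)
  have hS : ∑ x : Fin n → 𝒳, P x * t x ≤ 1 := by
    rw [husum, hSsum] at hle1
    nlinarith [hNFpos]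
  have hdge : ∑ x : Fin n → 𝒳, P x * (1 - t x) = 1 - ∑ x : Fin n → 𝒳, P x * t x := by
    have hx : ∀ x : Fin n → 𝒳, P x * (1 - t x) = P x - P x * t x := fun x => by ring
    rw [Finset.sum_congr rfl (fun x _ => hx x), Finset.sum_sub_distrib, hP1]
  have h2 : ∑ x : Fin n → 𝒳, P x * (1 - t x) ≤ ∑ x : Fin n → 𝒳, P x * D x :=
    Finset.sum_le_sum (fun x _ => hterm x)
  constructor
  · have h3 : (0:ℝ) ≤ ∑ x : Fin n → 𝒳, P x * D x := by
      rw [hdge] at h2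
      linarith
    linarith [hdelta, h3]
  · intro heq
    have hδ0 : ∑ x : Fin n → 𝒳, P x * D x = 0 := by rw [← hdelta]; exact heq
    have hS1 : ∑ x : Fin n → 𝒳, P x * t x = 1 := by
      rw [hdge, hδ0] at h2
      linarith
    have hz1 : ∀ x, 0 < P x → t x = 1 := by
      have hsum0 : ∑ x : Fin n → 𝒳, (P x * D x - P x * (1 - t x)) = 0 := by
        rw [Finset.sum_sub_distrib, hδ0, hdge, hS1]
        ring
      have hz := (Finset.sum_eq_zero_iff_of_nonneg
        (fun x _ => sub_nonneg.2 (hterm x))).1 hsum0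
      intro x hx
      have hzx := hz x (Finset.mem_univ x)
      obtain ⟨htpos, hDeq⟩ := hDlog x hx
      have h5 : P x * (Real.log (t x) - (t x - 1)) = 0 := by nlinarith [hzx]
      have hlog : Real.log (t x) = t x - 1 := by
        rcases mul_eq_zero.1 h5 with h' | h'
        · exact absurd h' (ne_of_gt hx)
        · linarith
      by_contra hne
      exact absurd hlog (ne_of_lt (Real.log_lt_sub_one_of_pos htpos hne))
    have hz2 : ∀ x, u x = mm P F x * t x := by
      have hsum0 : ∑ x : Fin n → 𝒳, (u x - mm P F x * t x) = 0 := by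
        rw [Finset.sum_sub_distrib, husum, hSsum, hS1]
        ring
      have hz := (Finset.sum_eq_zero_iff_of_nonneg
        (fun x _ => sub_nonneg.2 (hmt x))).1 hsum0
      intro x
      have := hz x (Finset.mem_univ x)
      linarith
    intro x
    rcases eq_or_lt_of_le (hm0 F x) with h | h
    · -- mm P F x = 0
      have hux : u x = 0 := by rw [hz2 x, ← h, zero_mul]
      rw [← h, zero_mul]
      rcases eq_or_lt_of_le (hm0 B x) with hB | hB
      · have hA0 : mm P A x = 0 := le_antisymm (hB ▸ mm_mono hP0 hBA x) (hm0 A x)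
        rw [hA0, mul_zero]
      · rw [hu] at hux
        simp only at hux
        rw [div_eq_zero_iff] at hux
        rcases hux with hux | hux
        · rcases mul_eq_zero.1 hux with h' | h'
          · rw [h', mul_zero]
          · rw [h', zero_mul]
        · exact absurd hux (ne_of_gt hB)
    · -- mm P F x > 0 : find support point in the fiber
      have hne : ∑ x' ∈ Finset.univ.filter
          (fun x' : Fin n → 𝒳 => ∀ j ∈ F, x' j = x j), P x' ≠ 0 := by
        rw [← mm]; exact ne_of_gt h
      obtain ⟨x', hx'mem, hx'ne⟩ := Finset.exists_ne_zero_of_sum_ne_zero hne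
      simp only [Finset.mem_filter, Finset.mem_univ, true_and] at hx'mem
      have hx'pos : 0 < P x' := lt_of_le_of_ne (hP0 x') (Ne.symm hx'ne)
      have ht1 := hz1 x' hx'pos
      have e1 : mm P F x' = mm P F x := mm_congr P hx'mem
      have e2 : mm P A x' = mm P A x := mm_congr P (fun j hj => hx'mem j (hAF hj))
      have e3 : mm P B x' = mm P B x := mm_congr P (fun j hj => hx'mem j (hBF hj))
      have e4 : mm P (insert i B) x' = mm P (insert i B) x :=
        mm_congr P (fun j hj => hx'mem j (hiBF hj))
      rw [ht] at ht1
      simp only at ht1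
      rw [e1, e2, e3, e4] at ht1
      have hApos : 0 < mm P A x := lt_of_lt_of_le h (mm_mono hP0 hAF x)
      have hBpos : 0 < mm P B x := lt_of_lt_of_le hApos (mm_mono hP0 hBA x)
      rw [div_eq_one_iff_eq (by positivity)] at ht1
      linarith [ht1]

end Stmt11

namespace Stmt11

variable {n : ℕ} {𝒳 : Type} [Fintype 𝒳]

theorem contraction {P : (Fin n → 𝒳) → ℝ} (hP0 : ∀ x, 0 ≤ P x) {i : Fin n}
    {A B C : Finset (Fin n)} (hCB : C ⊆ B) (hBA : B ⊆ A)
    (E1 : ∀ x, mm P (insert i A) x * mm P B x = mm P (insert i B) x * mm P A x)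
    (E2 : ∀ x, mm P (insert i B) x * mm P C x = mm P (insert i C) x * mm P B x) :
    ∀ x, mm P (insert i A) x * mm P C x = mm P (insert i C) x * mm P A x := by
  intro x
  rcases eq_or_lt_of_le (mm_nonneg hP0 B x) with hB | hB
  · have hA0 : mm P A x = 0 :=
      le_antisymm (hB ▸ mm_mono hP0 hBA x) (mm_nonneg hP0 A x)
    have hiA0 : mm P (insert i A) x = 0 :=
      le_antisymm (hA0 ▸ mm_mono hP0 (Finset.subset_insert i A) x)
        (mm_nonneg hP0 (insert i A) x)
    rw [hA0, hiA0, zero_mul, mul_zero]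
  · have h1 : mm P (insert i A) x * mm P C x * mm P B x
        = mm P (insert i C) x * mm P A x * mm P B x := by
      linear_combination (mm P C x) * E1 x + (mm P A x) * E2 x
    exact mul_right_cancel₀ (ne_of_gt hB) h1

theorem sep_exists {ι : Type} [Fintype ι] {S : ι → Finset (Fin n)} {γ : ι → ℝ}
    (hpos : ∀ k, 0 < γ k)
    (hsep : ∀ i j : Fin n, i ≠ j → ¬ (∀ k, i ∈ S k ↔ j ∈ S k))
    (hfrac : ∀ i : Fin n, ∑ k ∈ Finset.univ.filter (fun k => i ∈ S k), γ k = 1)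
    {i j : Fin n} (hne : j ≠ i) : ∃ k, i ∈ S k ∧ j ∉ S k := by
  by_contra h
  push_neg at h
  have hsub : Finset.univ.filter (fun k => i ∈ S k)
      ⊆ Finset.univ.filter (fun k => j ∈ S k) := by
    intro k hk
    simp only [Finset.mem_filter, Finset.mem_univ, true_and] at hk ⊢
    exact h k hk
  have heq : ∀ k, i ∈ S k ↔ j ∈ S k := by
    intro k
    refine ⟨h k, fun hjk => ?_⟩
    by_contra hik
    have hlt : ∑ k' ∈ Finset.univ.filter (fun k => i ∈ S k), γ k'
        < ∑ k' ∈ Finset.univ.filter (fun k => j ∈ S k), γ k' := by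
      apply Finset.sum_lt_sum_of_subset hsub
        (i := k) (by simp [hjk]) (by simp [hik]) (hpos k)
      intro k' _ _
      exact (hpos k').le
    rw [hfrac i, hfrac j] at hlt
    exact absurd hlt (lt_irrefl 1)
  exact hsep i j (Ne.symm hne) heq

theorem indep_drop {P : (Fin n → 𝒳) → ℝ} (hP0 : ∀ x, 0 ≤ P x)
    {ι : Type} [Fintype ι] {S : ι → Finset (Fin n)} {γ : ι → ℝ}
    (hpos : ∀ k, 0 < γ k)
    (hsep : ∀ i j : Fin n, i ≠ j → ¬ (∀ k, i ∈ S k ↔ j ∈ S k))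
    (hfrac : ∀ i : Fin n, ∑ k ∈ Finset.univ.filter (fun k => i ∈ S k), γ k = 1)
    (i : Fin n)
    (H1 : ∀ A : Finset (Fin n), i ∉ A → ∀ k, i ∈ S k → ∀ x,
      mm P (insert i A) x * mm P (A ∩ S k) x
        = mm P (insert i (A ∩ S k)) x * mm P A x) :
    ∀ A : Finset (Fin n), i ∉ A → ∀ x,
      mm P (insert i A) x * mm P (∅ : Finset (Fin n)) x
        = mm P (insert i (∅ : Finset (Fin n))) x * mm P A x := by
  intro A
  induction A using Finset.strongInduction with
  | _ A ih =>
    intro hiA x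
    rcases Finset.eq_empty_or_nonempty A with rfl | hne
    · rfl
    · obtain ⟨j, hjA⟩ := hne
      have hji : j ≠ i := fun h => hiA (h ▸ hjA)
      obtain ⟨k, hik, hjk⟩ := sep_exists hpos hsep hfrac hji
      have hBA : A ∩ S k ⊆ A := Finset.inter_subset_left
      have hBss : A ∩ S k ⊂ A := by
        refine Finset.ssubset_iff_of_subset hBA |>.2 ⟨j, hjA, ?_⟩
        simp [hjk]
      have hiB : i ∉ A ∩ S k := fun h => hiA (Finset.mem_of_mem_inter_left h)
      exact contraction hP0 (Finset.empty_subset _) hBA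
        (H1 A hiA k hik) (fun x' => ih (A ∩ S k) hBss hiB x') x

end Stmt11

namespace Stmt11

variable {n : ℕ} {𝒳 : Type} [Fintype 𝒳] [Nonempty 𝒳]

theorem predF_choice (A : Finset (Fin n)) (i : Fin n) (hiA : i ∉ A) :
    predF (fun j => if j ∈ A then 0 else if j = i then 1 else 2) i = A := by
  set p : Fin n → ℕ := fun j => if j ∈ A then 0 else if j = i then 1 else 2 with hp
  have hpi : p i = 1 := by simp [hp, hiA]
  ext j
  simp only [predF, Finset.mem_filter, Finset.mem_univ, true_and, pkey, Prod.Lex.lt_iff]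
  by_cases hjA : j ∈ A
  · simp [hp, hjA, hpi, hiA]
  · by_cases hji : j = i
    · subst hji
      simp [hp, hjA, hpi]
    · simp [hp, hjA, hji, hpi, hiA]

theorem eq_implies_cond {P : (Fin n → 𝒳) → ℝ} (hP0 : ∀ x, 0 ≤ P x)
    (hP1 : ∑ x : Fin n → 𝒳, P x = 1)
    {ι : Type} [Fintype ι] {S : ι → Finset (Fin n)} {γ : ι → ℝ}
    (hpos : ∀ k, 0 < γ k)
    (hfrac : ∀ i : Fin n, ∑ k ∈ Finset.univ.filter (fun k => i ∈ S k), γ k = 1)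
    (heqφ : ∑ k : ι, γ k * phi P (S k) = phi P Finset.univ)
    (p : Fin n → ℕ) (k : ι) (i : Fin n) (hik : i ∈ S k) :
    (phi P (insert i (predF p i)) - phi P (predF p i))
      - (phi P (insert i (S k ∩ predF p i)) - phi P (S k ∩ predF p i)) = 0 := by
  classical
  set g : Fin n → ℝ := fun i => phi P (insert i (predF p i)) - phi P (predF p i) with hg
  set h : ι → Fin n → ℝ :=
    fun k i => phi P (insert i (S k ∩ predF p i)) - phi P (S k ∩ predF p i) with hh
  have hnn : ∀ (k' : ι), ∀ i' ∈ S k', 0 ≤ g i' - h k' i' := by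
    intro k' i' _
    have hs := (submod hP0 hP1 (not_mem_predF p i')
      (Finset.inter_subset_right (s₁ := S k'))).1
    simp only [hg, hh]
    linarith [hs]
  have ch1 : phi P Finset.univ = ∑ i' : Fin n, g i' := by
    have := chain_rule hP1 p Finset.univ
    simpa [Finset.univ_inter, hg] using this
  have ch2 : ∀ k' : ι, phi P (S k') = ∑ i' ∈ S k', h k' i' := by
    intro k'
    exact chain_rule hP1 p (S k')
  have hzero : ∑ k' : ι, γ k' * (∑ i' ∈ S k', (g i' - h k' i')) = 0 := by
    have e1 : ∀ k' : ι, γ k' * (∑ i' ∈ S k', (g i' - h k' i'))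
        = γ k' * ∑ i' ∈ S k', g i' - γ k' * phi P (S k') := by
      intro k'
      rw [ch2 k', Finset.sum_sub_distrib]
      ring
    rw [Finset.sum_congr rfl (fun k' _ => e1 k'), Finset.sum_sub_distrib,
      swap_frac S γ hfrac g, heqφ, ← ch1, sub_self]
  have hz1 : ∀ k' : ι, γ k' * (∑ i' ∈ S k', (g i' - h k' i')) = 0 := by
    intro k'
    have := (Finset.sum_eq_zero_iff_of_nonneg (fun k' _ =>
      mul_nonneg (hpos k').le (Finset.sum_nonneg (fun i' hi' => hnn k' i' hi')))).1 hzero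
    exact this k' (Finset.mem_univ k')
  have hz2 : ∑ i' ∈ S k, (g i' - h k i') = 0 := by
    have := hz1 k
    rcases mul_eq_zero.1 this with h' | h'
    · exact absurd h' (ne_of_gt (hpos k))
    · exact h'
  have := (Finset.sum_eq_zero_iff_of_nonneg (fun i' hi' => hnn k i' hi')).1 hz2
  have hfin := this i hik
  simp only [hg, hh] at hfin
  linarith [hfin]

end Stmt11


open Stmt11 in
theorem stmt_11 (n : ℕ) (hn : 2 ≤ n)
    (𝒳 : Type) [Fintype 𝒳] [Nonempty 𝒳]
    (P Q : (Fin n → 𝒳) → ℝ)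
    (hP0 : ∀ x, 0 ≤ P x) (hP1 : ∑ x : Fin n → 𝒳, P x = 1)
    (Qi : Fin n → 𝒳 → ℝ)
    (hQipos : ∀ i a, 0 < Qi i a) (hQi1 : ∀ i, ∑ a : 𝒳, Qi i a = 1)
    (hQ : ∀ x : Fin n → 𝒳, Q x = ∏ i : Fin n, Qi i (x i))
    (ι : Type) [Fintype ι] (S : ι → Finset (Fin n)) (γ : ι → ℝ)
    (hproper : ∀ k, S k ≠ Finset.univ)
    (hpos : ∀ k, 0 < γ k)
    (hsep : ∀ i j : Fin n, i ≠ j → ¬ (∀ k, i ∈ S k ↔ j ∈ S k))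
    (hfrac : ∀ i : Fin n, ∑ k ∈ Finset.univ.filter (fun k => i ∈ S k), γ k = 1) :
    (∑ k : ι, γ k * (-(relEntF P Q (S k)))) = -(relEntF P Q Finset.univ) ↔
      ∀ x : Fin n → 𝒳,
        P x = ∏ i : Fin n,
          ∑ ω ∈ Finset.univ.filter (fun ω : Fin n → 𝒳 => ω i = x i), P ω := by
  classical
  have hmm_single : ∀ (i : Fin n) (x : Fin n → 𝒳),
      mm P {i} x = ∑ ω ∈ Finset.univ.filter (fun ω : Fin n → 𝒳 => ω i = x i), P ω := by
    intro i x
    rw [mm]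
    congr 1
    apply Finset.filter_congr
    intro z _
    simp
  have hQfun : Q = fun z => ∏ i, Qi i (z i) := funext hQ
  have hQpos : ∀ x, 0 < Q x := by
    intro x
    rw [hQ]
    exact Finset.prod_pos (fun i _ => hQipos i (x i))
  set c : Fin n → ℝ := fun i => ∑ x : Fin n → 𝒳, P x * Real.log (Qi i (x i)) with hc
  have hψ : ∀ F : Finset (Fin n),
      ∑ x : Fin n → 𝒳, P x * Real.log (mm Q F x) = ∑ i ∈ F, c i := by
    intro F
    rw [hQfun]
    exact sum_log_mm_prod hP0 Qi hQi1 (fun x _ i => hQipos i (x i)) F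
  have hRE : ∀ F, relEntF P Q F = phi P F - ∑ i ∈ F, c i := fun F => by
    rw [relEntF_sub hP0 hQpos F, hψ F]
  have hbridge : ((∑ k : ι, γ k * (-(relEntF P Q (S k)))) = -(relEntF P Q Finset.univ))
      ↔ ∑ k : ι, γ k * phi P (S k) = phi P Finset.univ := by
    have e1 : ∑ k : ι, γ k * (-(relEntF P Q (S k)))
        = ∑ i : Fin n, c i - ∑ k : ι, γ k * phi P (S k) := by
      have h1 : ∀ k, γ k * (-(relEntF P Q (S k)))
          = γ k * ∑ i ∈ S k, c i - γ k * phi P (S k) := by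
        intro k
        rw [hRE]
        ring
      rw [Finset.sum_congr rfl (fun k _ => h1 k), Finset.sum_sub_distrib,
        swap_frac S γ hfrac c]
    have e2 : -(relEntF P Q Finset.univ) = ∑ i : Fin n, c i - phi P Finset.univ := by
      rw [hRE]
      ring
    rw [e1, e2]
    constructor <;> intro h <;> linarith
  rw [hbridge]
  constructor
  · intro heqφ
    have hcond : ∀ (A : Finset (Fin n)) (i : Fin n), i ∉ A → ∀ k, i ∈ S k → ∀ x,
        mm P (insert i A) x * mm P (A ∩ S k) x
          = mm P (insert i (A ∩ S k)) x * mm P A x := by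
      intro A i hiA k hik
      set p : Fin n → ℕ := fun j => if j ∈ A then 0 else if j = i then 1 else 2 with hp
      have hpA : predF p i = A := predF_choice A i hiA
      have hδ := eq_implies_cond hP0 hP1 hpos hfrac heqφ p k i hik
      rw [hpA] at hδ
      have hE := (submod hP0 hP1 (A := A) (B := S k ∩ A)
        (fun h => (not_mem_predF p i) (hpA ▸ h)) Finset.inter_subset_right).2 hδ
      intro x
      rw [Finset.inter_comm A (S k)]
      exact hE x
    have hkey : ∀ (i : Fin n) (A : Finset (Fin n)), i ∉ A → ∀ x,
        mm P (insert i A) x = mm P {i} x * mm P A x := by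
      intro i A hiA x
      have h := indep_drop hP0 hpos hsep hfrac i
        (fun A hiA k hik => hcond A i hiA k hik) A hiA x
      rw [mm_empty, hP1, mul_one] at h
      simpa using h
    have hprodm : ∀ (m : ℕ), m ≤ n → ∀ x : Fin n → 𝒳,
        mm P (Finset.univ.filter (fun j : Fin n => (j:ℕ) < m)) x
          = ∏ j ∈ Finset.univ.filter (fun j : Fin n => (j:ℕ) < m), mm P {j} x := by
      intro m
      induction m with
      | zero =>
        intro _ x
        rw [show Finset.univ.filter (fun j : Fin n => (j:ℕ) < 0) = (∅ : Finset (Fin n))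
          by ext j; simp]
        rw [mm_empty, hP1, Finset.prod_empty]
      | succ m ih =>
        intro hm x
        have hmn : m < n := hm
        set i : Fin n := ⟨m, hmn⟩ with hi
        have hT : Finset.univ.filter (fun j : Fin n => (j:ℕ) < m+1)
            = insert i (Finset.univ.filter (fun j : Fin n => (j:ℕ) < m)) := by
          ext j
          simp only [Finset.mem_filter, Finset.mem_univ, true_and, Finset.mem_insert,
            Fin.ext_iff, hi]
          omega
        have hiT : i ∉ Finset.univ.filter (fun j : Fin n => (j:ℕ) < m) := by
          simp [hi]
        rw [hT, Finset.prod_insert hiT, hkey i _ hiT x, ih (le_of_lt hmn) x]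
    intro x
    have hTn : Finset.univ.filter (fun j : Fin n => (j:ℕ) < n) = Finset.univ := by
      ext j
      simp [j.isLt]
    have h := hprodm n (le_refl n) x
    rw [hTn, mm_univ] at h
    rw [h]
    exact Finset.prod_congr rfl (fun i _ => hmm_single i x)
  · intro hPf
    set f : Fin n → 𝒳 → ℝ :=
      fun i a => ∑ ω ∈ Finset.univ.filter (fun ω : Fin n → 𝒳 => ω i = a), P ω with hf
    have hPfun : P = fun z => ∏ i, f i (z i) := funext (fun x => hPf x)
    have hf1 : ∀ i, ∑ a : 𝒳, f i a = 1 := by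
      intro i
      rw [hf]
      simp only
      rw [Finset.sum_fiberwise Finset.univ (fun ω : Fin n → 𝒳 => ω i) P]
      exact hP1
    have hfpos : ∀ x : Fin n → 𝒳, 0 < P x → ∀ i, 0 < f i (x i) := by
      intro x hx i
      have h : f i (x i) = mm P {i} x := (hmm_single i x).symm
      rw [h]
      exact lt_of_lt_of_le hx (le_mm hP0 {i} x)
    have hphiF : ∀ F : Finset (Fin n),
        phi P F = ∑ i ∈ F, ∑ x : Fin n → 𝒳, P x * Real.log (f i (x i)) := by
      intro F
      have h := sum_log_mm_prod hP0 f hf1 hfpos F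
      rw [← hPfun] at h
      rw [phi]
      exact h
    rw [hphiF Finset.univ]
    have h2 : ∀ k : ι, γ k * phi P (S k)
        = γ k * ∑ i ∈ S k, ∑ x : Fin n → 𝒳, P x * Real.log (f i (x i)) := by
      intro k
      rw [hphiF (S k)]
    rw [Finset.sum_congr rfl (fun k _ => h2 k)]
    exact swap_frac S γ hfrac _
end

section
/- Let M = (ℰ, 𝓘) be a matroid on a finite ground set ℰ with |ℰ| ≥ 2, with rank function r : 2^{ℰ} → ℤ_{≥0} given by r(S) = max{|I| : I ∈ 𝓘, I ⊆ S}. Let γ be a fractional partition with respect to a family 𝓕 of subsets of ℰ satisfying the standing assumptions. Then ∑_{F ∈ 𝓕} γ(F) r(F) = r(ℰ) if and only if there exists A ⊆ ℰ such that 𝓘 = 2^A (the independent sets are exactly all subsets of A). -/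
/-!
Counting a base `B` through the fractional partition gives `∑ γ(F) |F ∩ B| = |B| = r(ℰ)`,
and `|F ∩ B| ≤ r(F)` termwise, so the weighted rank sum equals `r(ℰ)` exactly when every base meets
every `F` in `r(F)` elements. A basis exchange `B' = B - x + y` changes `|F ∩ B|` for any `F`
separating `x` from `y`, so in that case the base is unique, and a matroid with a unique base `A`
has independent sets `2^A`. Conversely, for `𝓘 = 2^A` the rank is `r(S) = |S ∩ A|` and the
counting identity applied to `A` gives the equality.
-/

open Finset
open scoped Classical BigOperators

/-- `B' - y = B - x` is the shape of a basis exchange; it is symmetric in `(B, x)`, `(B', y)`. -/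
theorem Finset.card_inter_lt_of_erase_eq {E : Type*} [DecidableEq E] {F B B' : Finset E}
    {x y : E} (h : B.erase x = B'.erase y) (hxF : x ∈ F) (hyF : y ∉ F) (hxB : x ∈ B) :
    #(F ∩ B') < #(F ∩ B) :=
  calc #(F ∩ B') = #(F ∩ B'.erase y) := by
        rw [inter_erase, erase_eq_of_notMem fun hy => hyF (mem_inter.1 hy).1]
    _ = #((F ∩ B).erase x) := by rw [← h, inter_erase]
    _ < #(F ∩ B) := card_erase_lt_of_mem (mem_inter.2 ⟨hxF, hxB⟩)

namespace FinsetMatroid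

variable {E : Type*} {𝓘 : Set (Finset E)}

noncomputable def rank (𝓘 : Set (Finset E)) (S : Finset E) : ℕ :=
  (S.powerset.filter (fun I => I ∈ 𝓘)).sup card

theorem card_le_rank {I S : Finset E} (hI : I ∈ 𝓘) (hIS : I ⊆ S) : #I ≤ rank 𝓘 S :=
  le_sup (by simp [hI, hIS])

theorem exists_card_eq_rank (hempty : ∅ ∈ 𝓘) (S : Finset E) :
    ∃ J ∈ 𝓘, J ⊆ S ∧ #J = rank 𝓘 S := by
  obtain ⟨J, hJ, hJsup⟩ := exists_mem_eq_sup (S.powerset.filter (fun I => I ∈ 𝓘))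
    ⟨∅, by simp [hempty]⟩ card
  rw [mem_filter, mem_powerset] at hJ
  exact ⟨J, hJ.2, hJ.1, hJsup.symm⟩

theorem rank_eq_card_inter [DecidableEq E] {A : Finset E} (hA : ∀ I, I ∈ 𝓘 ↔ I ⊆ A)
    (S : Finset E) : rank 𝓘 S = #(S ∩ A) :=
  le_antisymm
    (Finset.sup_le fun I hI => by
      rw [mem_filter, mem_powerset] at hI
      exact card_le_card (subset_inter hI.1 ((hA I).1 hI.2)))
    (card_le_rank ((hA _).2 inter_subset_right) inter_subset_left)

variable [Fintype E]

def IsBase (𝓘 : Set (Finset E)) (B : Finset E) : Prop :=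
  B ∈ 𝓘 ∧ #B = rank 𝓘 univ

variable [DecidableEq E]

theorem exists_isBase_superset (hempty : ∅ ∈ 𝓘)
    (hexch : ∀ I₁ I₂ : Finset E, I₁ ∈ 𝓘 → I₂ ∈ 𝓘 → I₁.card < I₂.card →
      ∃ e ∈ I₂ \ I₁, insert e I₁ ∈ 𝓘)
    {I : Finset E} (hI : I ∈ 𝓘) : ∃ B, IsBase 𝓘 B ∧ I ⊆ B := by
  obtain ⟨J, hJ, hJmax⟩ :=
    exists_max_image (univ.filter fun J => J ∈ 𝓘 ∧ I ⊆ J) card ⟨I, by simp [hI]⟩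
  simp only [mem_filter, mem_univ, true_and] at hJ hJmax
  refine ⟨J, ⟨hJ.1, le_antisymm (card_le_rank hJ.1 (subset_univ J)) ?_⟩, hJ.2⟩
  by_contra! hlt
  obtain ⟨B₀, hB₀, -, hB₀card⟩ := exists_card_eq_rank hempty univ
  obtain ⟨e, he, hins⟩ := hexch J B₀ hJ.1 hB₀ (hB₀card ▸ hlt)
  have hle := hJmax (insert e J) ⟨hins, hJ.2.trans (subset_insert e J)⟩
  rw [card_insert_of_notMem (mem_sdiff.1 he).2] at hle
  omega

theorem IsBase.exchange (hdown : ∀ I₁ I₂ : Finset E, I₂ ∈ 𝓘 → I₁ ⊆ I₂ → I₁ ∈ 𝓘)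
    (hexch : ∀ I₁ I₂ : Finset E, I₁ ∈ 𝓘 → I₂ ∈ 𝓘 → I₁.card < I₂.card →
      ∃ e ∈ I₂ \ I₁, insert e I₁ ∈ 𝓘)
    {B₁ B₂ : Finset E} (hB₁ : IsBase 𝓘 B₁) (hB₂ : IsBase 𝓘 B₂) {x : E} (hx₁ : x ∈ B₁)
    (hx₂ : x ∉ B₂) : ∃ y ∉ B₁, IsBase 𝓘 (insert y (B₁.erase x)) := by
  have hcard : #(B₁.erase x) + 1 = #B₁ := card_erase_add_one hx₁
  obtain ⟨y, hy, hins⟩ := hexch (B₁.erase x) B₂ (hdown _ _ hB₁.1 (erase_subset x B₁)) hB₂.1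
    (by rw [hB₂.2, ← hB₁.2]; omega)
  obtain ⟨hyB₂, hyx⟩ := mem_sdiff.1 hy
  have hyB₁ : y ∉ B₁ := fun h => hyx (mem_erase.2 ⟨ne_of_mem_of_not_mem hyB₂ hx₂, h⟩)
  refine ⟨y, hyB₁, hins, ?_⟩
  rw [card_insert_of_notMem hyx, ← hB₁.2]
  omega

theorem isBase_unique_of_card_inter_eq {ι : Type*} {F : ι → Finset E}
    (hdown : ∀ I₁ I₂ : Finset E, I₂ ∈ 𝓘 → I₁ ⊆ I₂ → I₁ ∈ 𝓘)
    (hexch : ∀ I₁ I₂ : Finset E, I₁ ∈ 𝓘 → I₂ ∈ 𝓘 → I₁.card < I₂.card →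
      ∃ e ∈ I₂ \ I₁, insert e I₁ ∈ 𝓘)
    (hsep : ∀ e e' : E, e ≠ e' → ¬ (∀ k, e ∈ F k ↔ e' ∈ F k)) {c : ι → ℕ}
    (htrace : ∀ B, IsBase 𝓘 B → ∀ k, #(F k ∩ B) = c k)
    {B₁ B₂ : Finset E} (hB₁ : IsBase 𝓘 B₁) (hB₂ : IsBase 𝓘 B₂) : B₁ = B₂ := by
  by_contra hne
  obtain ⟨x, hx₁, hx₂⟩ : ∃ x ∈ B₁, x ∉ B₂ := by
    by_contra! hsub
    exact hne (eq_of_subset_of_card_le hsub (by rw [hB₁.2, hB₂.2]))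
  obtain ⟨y, hy₁, hB'⟩ := hB₁.exchange hdown hexch hB₂ hx₁ hx₂
  set B' := insert y (B₁.erase x)
  have hswap : B₁.erase x = B'.erase y :=
    (erase_insert fun hy => hy₁ (mem_of_mem_erase hy)).symm
  obtain ⟨k, hk⟩ := not_forall.1 (hsep x y (ne_of_mem_of_not_mem hx₁ hy₁))
  have heq : #(F k ∩ B') = #(F k ∩ B₁) := by rw [htrace B' hB' k, htrace B₁ hB₁ k]
  by_cases hxk : x ∈ F k
  · have hyk : y ∉ F k := fun hyk => hk (iff_of_true hxk hyk)
    exact (card_inter_lt_of_erase_eq hswap hxk hyk hx₁).ne heq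
  · have hyk : y ∈ F k := by_contra fun hyk => hk (iff_of_false hxk hyk)
    exact (card_inter_lt_of_erase_eq hswap.symm hyk hxk (mem_insert_self y _)).ne heq.symm

theorem mem_iff_subset_of_isBase_unique (hempty : ∅ ∈ 𝓘)
    (hdown : ∀ I₁ I₂ : Finset E, I₂ ∈ 𝓘 → I₁ ⊆ I₂ → I₁ ∈ 𝓘)
    (hexch : ∀ I₁ I₂ : Finset E, I₁ ∈ 𝓘 → I₂ ∈ 𝓘 → I₁.card < I₂.card →
      ∃ e ∈ I₂ \ I₁, insert e I₁ ∈ 𝓘)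
    {B : Finset E} (hB : IsBase 𝓘 B) (hunique : ∀ B', IsBase 𝓘 B' → B' = B) (I : Finset E) :
    I ∈ 𝓘 ↔ I ⊆ B := by
  refine ⟨fun hI => ?_, hdown I B hB.1⟩
  obtain ⟨B', hB', hIB'⟩ := exists_isBase_superset hempty hexch hI
  exact hunique B' hB' ▸ hIB'

end FinsetMatroid

section FractionalPartition

variable {E ι : Type*} [Fintype ι] {F : ι → Finset E} {γ : ι → ℝ}

theorem sum_mul_card_inter_eq_card [DecidableEq E]
    (hfrac : ∀ e : E, ∑ k ∈ univ.filter (fun k => e ∈ F k), γ k = 1) (T : Finset E) :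
    ∑ k, γ k * #(F k ∩ T) = #T :=
  calc ∑ k, γ k * #(F k ∩ T) = ∑ k, ∑ e ∈ T, if e ∈ F k then γ k else 0 := by
        refine sum_congr rfl fun k _ => ?_
        rw [sum_ite_mem, sum_const, nsmul_eq_mul, inter_comm, mul_comm]
    _ = ∑ e ∈ T, ∑ k ∈ univ.filter (fun k => e ∈ F k), γ k := by
        rw [sum_comm]
        exact sum_congr rfl fun e _ => (sum_filter _ _).symm
    _ = #T := by simp [hfrac]

theorem card_inter_eq_of_sum_mul_eq [DecidableEq E] (hpos : ∀ k, 0 < γ k)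
    (hfrac : ∀ e : E, ∑ k ∈ univ.filter (fun k => e ∈ F k), γ k = 1) {T : Finset E}
    {ρ : ι → ℝ} (hle : ∀ k, #(F k ∩ T) ≤ ρ k) (hsum : ∑ k, γ k * ρ k = #T) (k : ι) :
    #(F k ∩ T) = ρ k := by
  have hterm := (sum_eq_sum_iff_of_le fun k _ => mul_le_mul_of_nonneg_left (hle k) (hpos k).le).1
    (by rw [sum_mul_card_inter_eq_card hfrac, hsum]) k (mem_univ k)
  exact mul_left_cancel₀ (hpos k).ne' hterm

end FractionalPartition

open FinsetMatroid in
theorem stmt_13_general (E : Type) [Fintype E] [DecidableEq E]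
    (𝓘 : Set (Finset E))
    (hempty : ∅ ∈ 𝓘)
    (hdown : ∀ I₁ I₂ : Finset E, I₂ ∈ 𝓘 → I₁ ⊆ I₂ → I₁ ∈ 𝓘)
    (hexch : ∀ I₁ I₂ : Finset E, I₁ ∈ 𝓘 → I₂ ∈ 𝓘 → I₁.card < I₂.card →
      ∃ e ∈ I₂ \ I₁, insert e I₁ ∈ 𝓘)
    (r : Finset E → ℕ)
    (hr : ∀ A : Finset E, r A = (A.powerset.filter (fun I => I ∈ 𝓘)).sup Finset.card)
    (ι : Type) [Fintype ι] (F : ι → Finset E) (γ : ι → ℝ)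
    (hpos : ∀ k, 0 < γ k)
    (hsep : ∀ e e' : E, e ≠ e' → ¬ (∀ k, e ∈ F k ↔ e' ∈ F k))
    (hfrac : ∀ e : E, ∑ k ∈ Finset.univ.filter (fun k => e ∈ F k), γ k = 1) :
    (∑ k : ι, γ k * (r (F k) : ℝ)) = (r Finset.univ : ℝ) ↔
      ∃ A : Finset E, ∀ I : Finset E, I ∈ 𝓘 ↔ I ⊆ A := by
  obtain rfl : r = rank 𝓘 := funext hr
  constructor
  · intro hsum
    have htrace : ∀ B, IsBase 𝓘 B → ∀ k, #(F k ∩ B) = rank 𝓘 (F k) := by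
      intro B hB k
      have hle (k : ι) : #(F k ∩ B) ≤ rank 𝓘 (F k) :=
        card_le_rank (hdown _ B hB.1 inter_subset_right) inter_subset_left
      exact_mod_cast card_inter_eq_of_sum_mul_eq hpos hfrac (ρ := fun k => (rank 𝓘 (F k) : ℝ))
        (fun k => Nat.cast_le.2 (hle k)) (by rw [hsum, hB.2]) k
    obtain ⟨B, hB, -⟩ := exists_isBase_superset hempty hexch hempty
    exact ⟨B, mem_iff_subset_of_isBase_unique hempty hdown hexch hB fun B' hB' =>
      isBase_unique_of_card_inter_eq hdown hexch hsep htrace hB' hB⟩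
  · rintro ⟨A, hA⟩
    simp only [rank_eq_card_inter hA, univ_inter]
    exact sum_mul_card_inter_eq_card hfrac A

theorem stmt_13 (E : Type) [Fintype E] [DecidableEq E] (hE : 2 ≤ Fintype.card E)
    (𝓘 : Set (Finset E))
    (hempty : ∅ ∈ 𝓘)
    (hdown : ∀ I₁ I₂ : Finset E, I₂ ∈ 𝓘 → I₁ ⊆ I₂ → I₁ ∈ 𝓘)
    (hexch : ∀ I₁ I₂ : Finset E, I₁ ∈ 𝓘 → I₂ ∈ 𝓘 → I₁.card < I₂.card →
      ∃ e ∈ I₂ \ I₁, insert e I₁ ∈ 𝓘)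
    (r : Finset E → ℕ)
    (hr : ∀ A : Finset E, r A = (A.powerset.filter (fun I => I ∈ 𝓘)).sup Finset.card)
    (ι : Type) [Fintype ι] (F : ι → Finset E) (γ : ι → ℝ)
    (hproper : ∀ k, F k ≠ Finset.univ)
    (hpos : ∀ k, 0 < γ k)
    (hsep : ∀ e e' : E, e ≠ e' → ¬ (∀ k, e ∈ F k ↔ e' ∈ F k))
    (hfrac : ∀ e : E, ∑ k ∈ Finset.univ.filter (fun k => e ∈ F k), γ k = 1) :
    (∑ k : ι, γ k * (r (F k) : ℝ)) = (r Finset.univ : ℝ) ↔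
      ∃ A : Finset E, ∀ I : Finset E, I ∈ 𝓘 ↔ I ⊆ A :=
  stmt_13_general E 𝓘 hempty hdown hexch r hr ι F γ hpos hsep hfrac
end

section
/- Let X_1, …, X_n (n ≥ 2) be jointly distributed random variables on finite alphabets, and let 𝓑 be the family consisting of all subsets of [n] other than ∅ and [n], each appearing once. Then the infimum over all fractional partitions γ of 𝓑 of ( ∑_{F ∈ 𝓑} γ(F) H(X_F) − H(X_{[n]}) ) / (w(γ) − 1), where w(γ) = ∑_{F ∈ 𝓑} γ(F), equals H(X_{[n]})minus the supremum over all fractional partitions γ of 𝓑 of ∑_{F ∈ 𝓑} γ(F) H(X_F | X_{[n] ∖ F}); that is, it equals the shared information SI(X_1; …; X_n). -/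
open Finset
open scoped Classical BigOperators

lemma Hent_nonneg {n : ℕ} {𝒳 : Fin n → Type} [∀ i, Fintype (𝒳 i)]
    (p : (∀ i, 𝒳 i) → ℝ) (hp0 : ∀ x, 0 ≤ p x)
    (hp1 : ∑ x : ∀ i, 𝒳 i, p x = 1) (F : Finset (Fin n)) : 0 ≤ Hent p F := by
  apply Finset.sum_nonneg
  intro y _
  apply Real.negMulLog_nonneg
  · exact Finset.sum_nonneg fun x _ => hp0 x
  · rw [← hp1]
    exact Finset.sum_le_sum_of_subset_of_nonneg (Finset.filter_subset _ _)
      (fun x _ _ => hp0 x)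

lemma fracpart_key {n : ℕ} (hn : 2 ≤ n) {𝒳 : Fin n → Type} [∀ i, Fintype (𝒳 i)]
    (p : (∀ i, 𝒳 i) → ℝ)
    (𝓑 : Finset (Finset (Fin n)))
    (h𝓑 : 𝓑 = Finset.univ.filter fun F : Finset (Fin n) => F ≠ ∅ ∧ F ≠ Finset.univ)
    (γ : Finset (Fin n) → ℝ)
    (hγ0 : ∀ F ∈ 𝓑, 0 ≤ γ F)
    (hγ1 : ∀ i : Fin n, ∑ F ∈ 𝓑.filter (fun F => i ∈ F), γ F = 1) :
    1 < ∑ F ∈ 𝓑, γ F ∧ (∑ F ∈ 𝓑, γ F) ≤ (n : ℝ) ∧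
    ∃ γ' : Finset (Fin n) → ℝ,
      (∀ F ∈ 𝓑, 0 ≤ γ' F) ∧
      (∀ i : Fin n, ∑ F ∈ 𝓑.filter (fun F => i ∈ F), γ' F = 1) ∧
      ((∑ F ∈ 𝓑, γ' F * Hent p F) - Hent p Finset.univ) / ((∑ F ∈ 𝓑, γ' F) - 1)
        = Hent p Finset.univ
          - ∑ F ∈ 𝓑, γ F * (Hent p Finset.univ - Hent p (Finset.univ \ F)) ∧
      ∑ F ∈ 𝓑, γ' F * (Hent p Finset.univ - Hent p (Finset.univ \ F))
        = Hent p Finset.univ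
          - ((∑ F ∈ 𝓑, γ F * Hent p F) - Hent p Finset.univ) / ((∑ F ∈ 𝓑, γ F) - 1) := by
  have hmem : ∀ F : Finset (Fin n), F ∈ 𝓑 ↔ F ≠ ∅ ∧ F ≠ Finset.univ := by
    subst h𝓑; intro F; simp
  have hsd : ∀ F : Finset (Fin n), Finset.univ \ F = Fᶜ := fun F =>
    (Finset.compl_eq_univ_sdiff F).symm
  have hcmem : ∀ F : Finset (Fin n), F ∈ 𝓑 → Fᶜ ∈ 𝓑 := by
    intro F hF
    rw [hmem] at hF ⊢
    exact ⟨fun h => hF.2 ((Finset.compl_eq_empty_iff F).1 h),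
      fun h => hF.1 ((Finset.compl_eq_univ_iff F).1 h)⟩
  -- reindexing along complement
  have hre : ∀ g : Finset (Fin n) → ℝ, ∑ F ∈ 𝓑, g F = ∑ F ∈ 𝓑, g Fᶜ := by
    intro g
    refine Finset.sum_bij' (fun F _ => Fᶜ) (fun F _ => Fᶜ) (fun F hF => hcmem F hF)
      (fun F hF => hcmem F hF) (fun F _ => compl_compl F) (fun F _ => compl_compl F)
      (fun F _ => by rw [compl_compl])
  set w : ℝ := ∑ F ∈ 𝓑, γ F with hw
  have hcard : (n : ℝ) = ∑ F ∈ 𝓑, γ F * F.card := by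
    have h1 : ∀ i : Fin n, (1 : ℝ) = ∑ F ∈ 𝓑, if i ∈ F then γ F else 0 := by
      intro i
      rw [← hγ1 i, Finset.sum_filter]
    calc (n : ℝ) = ∑ _i : Fin n, (1 : ℝ) := by simp
      _ = ∑ i : Fin n, ∑ F ∈ 𝓑, if i ∈ F then γ F else 0 :=
          Finset.sum_congr rfl (fun i _ => h1 i)
      _ = ∑ F ∈ 𝓑, ∑ i : Fin n, if i ∈ F then γ F else 0 := Finset.sum_comm
      _ = ∑ F ∈ 𝓑, γ F * F.card := by
          refine Finset.sum_congr rfl (fun F _ => ?_)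
          rw [Finset.sum_ite_mem, Finset.univ_inter, Finset.sum_const, nsmul_eq_mul, mul_comm]
  have hn' : (2 : ℝ) ≤ n := by exact_mod_cast hn
  have hub : (n : ℝ) ≤ ((n : ℝ) - 1) * w := by
    rw [hcard, hw, Finset.mul_sum]
    refine Finset.sum_le_sum (fun F hF => ?_)
    have hFu : F ≠ Finset.univ := ((hmem F).1 hF).2
    have hclt : F.card < n := by
      have := Finset.card_lt_card (Finset.ssubset_univ_iff.mpr hFu)
      simpa using this
    have hcle : (F.card : ℝ) ≤ (n : ℝ) - 1 := by
      have h1 : F.card + 1 ≤ n := hclt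
      have h2 := (Nat.cast_le (α := ℝ)).mpr h1
      push_cast at h2
      linarith
    have h0 := hγ0 F hF
    nlinarith
  have hw1 : 1 < w := by nlinarith
  have hwn : w ≤ (n : ℝ) := by
    rw [hw, hcard]
    refine Finset.sum_le_sum (fun F hF => ?_)
    have hFe : F ≠ ∅ := ((hmem F).1 hF).1
    have h1 : 1 ≤ F.card := Finset.card_pos.mpr (Finset.nonempty_iff_ne_empty.mpr hFe)
    have h1' : (1 : ℝ) ≤ F.card := by exact_mod_cast h1
    nlinarith [hγ0 F hF]
  have hwne : w - 1 ≠ 0 := by linarith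
  -- the complementary partition and its sums
  have hW : ∑ F ∈ 𝓑, γ Fᶜ / (w - 1) = w / (w - 1) := by
    rw [← Finset.sum_div]
    congr 1
    rw [hw, ← hre (fun F => γ F)]
  have hA : ∑ F ∈ 𝓑, γ Fᶜ / (w - 1) * Hent p F
      = (∑ F ∈ 𝓑, γ F * Hent p Fᶜ) / (w - 1) := by
    have h := hre (fun F => γ F / (w - 1) * Hent p Fᶜ)
    simp only [compl_compl] at h
    rw [← h, Finset.sum_div]
    exact Finset.sum_congr rfl (fun F _ => by ring)
  have hC : ∑ F ∈ 𝓑, γ Fᶜ / (w - 1) * (Hent p Finset.univ - Hent p Fᶜ)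
      = (∑ F ∈ 𝓑, γ F * (Hent p Finset.univ - Hent p F)) / (w - 1) := by
    rw [← hre (fun F => γ F / (w - 1) * (Hent p Finset.univ - Hent p F)), Finset.sum_div]
    exact Finset.sum_congr rfl (fun F _ => by ring)
  have hs : ∑ F ∈ 𝓑, γ F * (Hent p Finset.univ - Hent p Fᶜ)
      = w * Hent p Finset.univ - ∑ F ∈ 𝓑, γ F * Hent p Fᶜ := by
    simp only [mul_sub]
    rw [Finset.sum_sub_distrib, ← Finset.sum_mul, ← hw, mul_comm]
  have hs2 : ∑ F ∈ 𝓑, γ F * (Hent p Finset.univ - Hent p F)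
      = w * Hent p Finset.univ - ∑ F ∈ 𝓑, γ F * Hent p F := by
    simp only [mul_sub]
    rw [Finset.sum_sub_distrib, ← Finset.sum_mul, ← hw, mul_comm]
  refine ⟨hw1, hwn, fun F => γ Fᶜ / (w - 1), ?_, ?_, ?_, ?_⟩
  · intro F hF
    exact div_nonneg (hγ0 _ (hcmem F hF)) (by linarith)
  · intro i
    have hsplit := Finset.sum_filter_add_sum_filter_not 𝓑 (fun F => i ∈ F) γ
    have hni : ∑ F ∈ 𝓑.filter (fun F => ¬ i ∈ F), γ F = w - 1 := by
      rw [hγ1 i] at hsplit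
      rw [hw, ← hsplit]
      ring
    have hbij : ∑ F ∈ 𝓑.filter (fun F => i ∈ F), γ Fᶜ
        = ∑ F ∈ 𝓑.filter (fun F => ¬ i ∈ F), γ F := by
      refine Finset.sum_bij' (fun F _ => Fᶜ) (fun F _ => Fᶜ) ?_ ?_
        (fun F _ => compl_compl F) (fun F _ => compl_compl F) (fun F _ => rfl)
      · intro F hF
        rw [Finset.mem_filter] at hF ⊢
        exact ⟨hcmem F hF.1, by simp [hF.2]⟩
      · intro F hF
        rw [Finset.mem_filter] at hF ⊢
        refine ⟨hcmem F hF.1, by simp [hF.2]⟩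
    rw [← Finset.sum_div, hbij, hni, div_self hwne]
  · simp only [hsd]
    rw [hA, hW, hs]
    have hq : w / (w - 1) - 1 = 1 / (w - 1) := by field_simp; ring
    rw [hq]
    field_simp
    ring
  · simp only [hsd]
    rw [hC, hs2]
    field_simp
    ring

theorem stmt_14 (n : ℕ) (hn : 2 ≤ n)
    (𝒳 : Fin n → Type) [∀ i, Fintype (𝒳 i)] [∀ i, Nonempty (𝒳 i)]
    (p : (∀ i, 𝒳 i) → ℝ)
    (hp0 : ∀ x, 0 ≤ p x) (hp1 : ∑ x : ∀ i, 𝒳 i, p x = 1)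
    (𝓑 : Finset (Finset (Fin n)))
    (h𝓑 : 𝓑 = Finset.univ.filter (fun F : Finset (Fin n) => F ≠ ∅ ∧ F ≠ Finset.univ)) :
    sInf {r : ℝ | ∃ γ : Finset (Fin n) → ℝ,
        (∀ F ∈ 𝓑, 0 ≤ γ F) ∧
        (∀ i : Fin n, ∑ F ∈ 𝓑.filter (fun F => i ∈ F), γ F = 1) ∧
        r = ((∑ F ∈ 𝓑, γ F * Hent p F) - Hent p Finset.univ) /
            ((∑ F ∈ 𝓑, γ F) - 1)} =
      Hent p Finset.univ -
        sSup {r : ℝ | ∃ γ : Finset (Fin n) → ℝ,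
          (∀ F ∈ 𝓑, 0 ≤ γ F) ∧
          (∀ i : Fin n, ∑ F ∈ 𝓑.filter (fun F => i ∈ F), γ F = 1) ∧
          r = ∑ F ∈ 𝓑, γ F * (Hent p Finset.univ - Hent p (Finset.univ \ F))} := by
  have hmem : ∀ F : Finset (Fin n), F ∈ 𝓑 ↔ F ≠ ∅ ∧ F ≠ Finset.univ := by
    subst h𝓑; intro F; simp
  set H : ℝ := Hent p Finset.univ with hH
  set S : Set ℝ := {r : ℝ | ∃ γ : Finset (Fin n) → ℝ,
      (∀ F ∈ 𝓑, 0 ≤ γ F) ∧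
      (∀ i : Fin n, ∑ F ∈ 𝓑.filter (fun F => i ∈ F), γ F = 1) ∧
      r = ∑ F ∈ 𝓑, γ F * (H - Hent p (Finset.univ \ F))} with hSdef
  set T : Set ℝ := {r : ℝ | ∃ γ : Finset (Fin n) → ℝ,
      (∀ F ∈ 𝓑, 0 ≤ γ F) ∧
      (∀ i : Fin n, ∑ F ∈ 𝓑.filter (fun F => i ∈ F), γ F = 1) ∧
      r = ((∑ F ∈ 𝓑, γ F * Hent p F) - H) / ((∑ F ∈ 𝓑, γ F) - 1)} with hTdef
  -- S is nonempty (take the singleton partition)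
  have hSne : S.Nonempty := by
    refine ⟨_, fun F => if F.card = 1 then (1 : ℝ) else 0, ?_, ?_, rfl⟩
    · intro F _
      dsimp only
      split <;> norm_num
    · intro i
      have hfe : (𝓑.filter (fun F => i ∈ F)).filter (fun F => F.card = 1) = {{i}} := by
        ext G
        constructor
        · intro hG
          rw [Finset.mem_filter] at hG
          obtain ⟨hG1, hc⟩ := hG
          rw [Finset.mem_filter] at hG1
          obtain ⟨a, rfl⟩ := Finset.card_eq_one.1 hc
          rw [Finset.mem_singleton]
          have ha := Finset.mem_singleton.1 hG1.2
          rw [ha]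
        · intro hG
          rw [Finset.mem_singleton] at hG
          subst hG
          rw [Finset.mem_filter, Finset.mem_filter, hmem]
          refine ⟨⟨⟨Finset.singleton_ne_empty i, ?_⟩, Finset.mem_singleton_self i⟩,
            Finset.card_singleton i⟩
          intro h
          have hcc : ({i} : Finset (Fin n)).card = (Finset.univ : Finset (Fin n)).card := by
            rw [h]
          simp only [Finset.card_singleton, Finset.card_univ, Fintype.card_fin] at hcc
          omega
      rw [Finset.sum_boole, hfe]
      simp
  -- S is bounded above
  have hHnn : 0 ≤ H := Hent_nonneg p hp0 hp1 _
  have hSbdd : BddAbove S := by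
    refine ⟨(n : ℝ) * H, ?_⟩
    rintro r ⟨γ, h0, h1, rfl⟩
    obtain ⟨hw1, hwn, -⟩ := fracpart_key hn p 𝓑 h𝓑 γ h0 h1
    calc ∑ F ∈ 𝓑, γ F * (H - Hent p (Finset.univ \ F))
        ≤ ∑ F ∈ 𝓑, γ F * H := by
          refine Finset.sum_le_sum (fun F hF => ?_)
          have := Hent_nonneg p hp0 hp1 (Finset.univ \ F)
          exact mul_le_mul_of_nonneg_left (by linarith) (h0 F hF)
      _ = (∑ F ∈ 𝓑, γ F) * H := by rw [Finset.sum_mul]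
      _ ≤ (n : ℝ) * H := mul_le_mul_of_nonneg_right hwn hHnn
  -- the two feasible sets correspond under r ↦ H - r
  have hTS : T = (fun s => H - s) '' S := by
    ext r
    constructor
    · rintro ⟨γ, h0, h1, rfl⟩
      obtain ⟨hw1, hwn, γ', h0', h1', hid1, hid2⟩ := fracpart_key hn p 𝓑 h𝓑 γ h0 h1
      exact ⟨∑ F ∈ 𝓑, γ' F * (H - Hent p (Finset.univ \ F)), ⟨γ', h0', h1', rfl⟩,
        by rw [hid2]; ring⟩
    · rintro ⟨s, ⟨γ, h0, h1, rfl⟩, rfl⟩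
      obtain ⟨hw1, hwn, γ', h0', h1', hid1, hid2⟩ := fracpart_key hn p 𝓑 h𝓑 γ h0 h1
      exact ⟨γ', h0', h1', hid1.symm⟩
  have hlub : IsLUB S (sSup S) := isLUB_csSup hSne hSbdd
  have hTne : T.Nonempty := by
    rw [hTS]; exact hSne.image _
  have hglb : IsGLB T (H - sSup S) := by
    rw [hTS]
    constructor
    · rintro t ⟨s, hs, rfl⟩
      have := hlub.1 hs
      simp only
      linarith
    · intro b hb
      have hub : H - b ∈ upperBounds S := by
        intro s hs
        have := hb ⟨s, hs, rfl⟩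
        simp only at this
        linarith
      have := hlub.2 hub
      linarith
  exact hglb.csInf_eq hTne
end
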